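/- arXiv:2503.20879 — 10 statements merged into one kernel-verified Lean document; each statement's English description precedes it below -/
import Mathlib

section
/- There exists an absolute constant c > 0 such that for every real v > 3/2 there is a d₀ ∈ ℕ with the following property: for every integer d ≥ d₀ and every R_w > 0, there exists a finite subset S̃ of the set S_w^{(v)} := {w ∈ ℝ^d : ‖w‖₂ = R_w and w_j ≥ R_w/d^v for all j ∈ [d]} whose cardinality exceeds e^{c d} and such that any two distinct elements w, w' of S̃ satisfy ⟨w, w'⟩ ≤ R_w² · cos(0.51). -/
open Finset

-- (r+1)^r ≤ 3 r^r for r ≥ 1 (and trivially for r = 0 it's 1 ≤ 3)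
lemma aux_succ_pow (r : ℕ) (hr : 1 ≤ r) : (r+1)^r ≤ 3 * r^r := by
  have hrR : (0:ℝ) < r := by exact_mod_cast hr
  have h1 : ((r:ℝ)+1)^r ≤ 3 * (r:ℝ)^r := by
    have h2 : (r:ℝ) + 1 = r * (1 + 1/r) := by field_simp
    have h3 : (1 + 1/(r:ℝ)) ^ r ≤ 3 := by
      have := Real.add_one_le_exp (1/(r:ℝ))
      have h4 : (1 + 1/(r:ℝ))^r ≤ (Real.exp (1/r))^r := by
        apply pow_le_pow_left₀ (by positivity) (by linarith)
      have h5 : (Real.exp (1/(r:ℝ)))^r = Real.exp 1 := by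
        rw [← Real.exp_nat_mul]
        congr 1
        field_simp
      have h6 : Real.exp 1 ≤ 3 := by
        have := Real.exp_one_lt_d9
        linarith
      calc (1 + 1/(r:ℝ))^r ≤ (Real.exp (1/r))^r := h4
        _ = Real.exp 1 := h5
        _ ≤ 3 := h6
    calc ((r:ℝ)+1)^r = (r:ℝ)^r * (1+1/r)^r := by rw [h2, mul_pow]
      _ ≤ (r:ℝ)^r * 3 := by
          apply mul_le_mul_of_nonneg_left h3 (by positivity)
      _ = 3 * (r:ℝ)^r := by ring
  exact_mod_cast h1

lemma aux_pow_le_fact : ∀ r : ℕ, r ^ r ≤ 3 ^ r * r.factorial := by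
  intro r
  induction r with
  | zero => simp
  | succ n ih =>
    rcases Nat.eq_zero_or_pos n with h | h
    · subst h; simp
    calc (n+1)^(n+1) = (n+1)^n * (n+1) := by ring
      _ ≤ (3 * n^n) * (n+1) := Nat.mul_le_mul_right _ (aux_succ_pow n h)
      _ ≤ (3 * (3^n * n.factorial)) * (n+1) := by
          exact Nat.mul_le_mul_right _ (Nat.mul_le_mul_left _ ih)
      _ = 3^(n+1) * (n+1).factorial := by
          rw [Nat.factorial_succ]; ring

lemma aux_choose_le_20pow {k r : ℕ} (hr : 1 ≤ r) (h : 3*k ≤ 20*r) :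
    k.choose r ≤ 20 ^ r := by
  have hrr : 0 < r ^ r := Nat.pow_pos (by omega)
  have key : k.choose r * r ^ r ≤ 20 ^ r * r ^ r := by
    calc k.choose r * r ^ r ≤ k.choose r * (3^r * r.factorial) :=
          Nat.mul_le_mul_left _ (aux_pow_le_fact r)
      _ = 3^r * (r.factorial * k.choose r) := by ring
      _ = 3^r * k.descFactorial r := by rw [← Nat.descFactorial_eq_factorial_mul_choose]
      _ ≤ 3^r * k^r := Nat.mul_le_mul_left _ (Nat.descFactorial_le_pow k r)
      _ = (3*k)^r := by rw [mul_pow]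
      _ ≤ (20*r)^r := Nat.pow_le_pow_left h r
      _ = 20^r * r^r := by rw [mul_pow]
  exact Nat.le_of_mul_le_mul_right key hrr

lemma aux_desc (d k : ℕ) (h : 2*k ≤ d) : ∀ m, 2^m * k.descFactorial m ≤ d.descFactorial m := by
  intro m
  induction m with
  | zero => simp
  | succ n ih =>
    rw [Nat.descFactorial_succ, Nat.descFactorial_succ]
    calc 2^(n+1) * ((k-n) * k.descFactorial n)
        = (2*(k-n)) * (2^n * k.descFactorial n) := by ring
      _ ≤ (d-n) * (2^n * k.descFactorial n) := by
          apply Nat.mul_le_mul_right; omega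
      _ ≤ (d-n) * d.descFactorial n := Nat.mul_le_mul_left _ ih

lemma aux_two_pow_choose {d k m : ℕ} (h : 2*k ≤ d) : 2^m * k.choose m ≤ d.choose m := by
  rw [Nat.choose_eq_descFactorial_div_factorial, Nat.choose_eq_descFactorial_div_factorial,
    ← Nat.mul_div_assoc _ (Nat.factorial_dvd_descFactorial k m)]
  exact Nat.div_le_div_right (aux_desc d k h m)

lemma aux_packing (d k m : ℕ) (hm : 1 ≤ m) (hmk : m ≤ k) :
    ∃ F : Finset (Finset (Fin d)), (∀ A ∈ F, A.card = k) ∧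
      (∀ A ∈ F, ∀ B ∈ F, A ≠ B → (A ∩ B).card < m) ∧
      d.choose k ≤ F.card * (k.choose m * (d-m).choose (k-m)) := by
  classical
  set P : Finset (Finset (Fin d)) → Prop := fun F =>
    (∀ A ∈ F, A.card = k) ∧ (∀ A ∈ F, ∀ B ∈ F, A ≠ B → (A ∩ B).card < m) with hP
  have hne : (univ.filter P : Finset (Finset (Finset (Fin d)))).Nonempty := by
    refine ⟨∅, ?_⟩
    simp [hP]
  obtain ⟨F, hFmem, hFmax⟩ := Finset.exists_max_image _ Finset.card hne
  rw [mem_filter] at hFmem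
  obtain ⟨-, hcard, hpair⟩ := hFmem
  refine ⟨F, hcard, hpair, ?_⟩
  -- covering claim
  have hcover : ∀ B ∈ powersetCard k (univ : Finset (Fin d)),
      ∃ A ∈ F, m ≤ (A ∩ B).card := by
    intro B hB
    rw [mem_powersetCard] at hB
    by_cases hBF : B ∈ F
    · exact ⟨B, hBF, by simpa using hmk.trans_eq (hcard B hBF).symm⟩
    by_contra hcon
    push_neg at hcon
    have hins : P (insert B F) := by
      constructor
      · intro A hA
        rcases mem_insert.mp hA with rfl | hA
        · exact hB.2
        · exact hcard A hA
      · intro A hA A' hA' hne'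
        rcases mem_insert.mp hA with h1 | h1 <;> rcases mem_insert.mp hA' with h2 | h2
        · exact absurd (h1.trans h2.symm) hne'
        · subst h1; rw [Finset.inter_comm]; exact hcon A' h2
        · subst h2; exact hcon A h1
        · exact hpair A h1 A' h2 hne'
    have := hFmax (insert B F) (mem_filter.mpr ⟨mem_univ _, hins⟩)
    rw [card_insert_of_notMem hBF] at this
    omega
  -- counting
  have hsub : powersetCard k (univ : Finset (Fin d)) ⊆
      F.biUnion (fun A => (powersetCard m A).biUnion
        (fun X => (powersetCard (k-m) (univ \ X)).image (fun Y => X ∪ Y))) := by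
    intro B hB
    obtain ⟨A, hA, hAB⟩ := hcover B hB
    rw [mem_powersetCard] at hB
    obtain ⟨X, hXsub, hXcard⟩ := Finset.exists_subset_card_eq hAB
    have hXB : X ⊆ B := hXsub.trans (inter_subset_right)
    rw [mem_biUnion]
    refine ⟨A, hA, ?_⟩
    rw [mem_biUnion]
    refine ⟨X, ?_, ?_⟩
    · rw [mem_powersetCard]; exact ⟨hXsub.trans inter_subset_left, hXcard⟩
    rw [mem_image]
    refine ⟨B \ X, ?_, Finset.union_sdiff_of_subset hXB⟩
    rw [mem_powersetCard]
    constructor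
    · intro y hy; rw [mem_sdiff] at hy ⊢; exact ⟨mem_univ _, hy.2⟩
    · rw [card_sdiff_of_subset hXB, hB.2, hXcard]
  have hcount := card_le_card hsub
  rw [card_powersetCard, card_univ, Fintype.card_fin] at hcount
  refine hcount.trans ?_
  refine (card_biUnion_le).trans ?_
  have hterm : ∀ A ∈ F, ((powersetCard m A).biUnion
      (fun X => (powersetCard (k-m) (univ \ X)).image (fun Y => X ∪ Y))).card
      ≤ k.choose m * (d-m).choose (k-m) := by
    intro A hA
    refine (card_biUnion_le).trans ?_
    have hX : ∀ X ∈ powersetCard m A,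
        ((powersetCard (k-m) ((univ : Finset (Fin d)) \ X)).image (fun Y => X ∪ Y)).card
        ≤ (d-m).choose (k-m) := by
      intro X hX
      rw [mem_powersetCard] at hX
      refine (card_image_le).trans ?_
      rw [card_powersetCard, card_sdiff_of_subset (subset_univ X), card_univ, Fintype.card_fin, hX.2]
    calc ∑ X ∈ powersetCard m A, ((powersetCard (k-m) (univ \ X)).image (fun Y => X ∪ Y)).card
        ≤ ∑ X ∈ powersetCard m A, (d-m).choose (k-m) := Finset.sum_le_sum hX
      _ = (powersetCard m A).card * ((d-m).choose (k-m)) := by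
          rw [Finset.sum_const, smul_eq_mul]
      _ = k.choose m * (d-m).choose (k-m) := by
          rw [card_powersetCard, hcard A hA]
  calc ∑ A ∈ F, ((powersetCard m A).biUnion
        (fun X => (powersetCard (k-m) (univ \ X)).image (fun Y => X ∪ Y))).card
      ≤ ∑ A ∈ F, k.choose m * (d-m).choose (k-m) := Finset.sum_le_sum hterm
    _ = F.card * (k.choose m * (d-m).choose (k-m)) := by
        rw [Finset.sum_const, smul_eq_mul]

lemma aux_family (d : ℕ) (hd : 100000 ≤ d) :
    ∃ F : Finset (Finset (Fin d)),
      (∀ A ∈ F, A.card = d/2) ∧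
      (∀ A ∈ F, ∀ B ∈ F, A ≠ B → 20 * (A ∩ B).card ≤ 17 * (d/2)) ∧
      2 ^ (d/2 - (3*(d/2)/20 + 1)) ≤ F.card * 20 ^ (3*(d/2)/20 + 1) := by
  set k := d/2 with hk
  set r := 3*k/20 + 1 with hr
  set m := k - r with hm
  have e1 : 3*k = 20*(3*k/20) + (3*k)%20 := (Nat.div_add_mod _ _).symm
  have e2 : (3*k)%20 < 20 := Nat.mod_lt _ (by norm_num)
  have e3 : d = 2*(d/2) + d%2 := (Nat.div_add_mod _ _).symm
  have e4 : d%2 < 2 := Nat.mod_lt _ (by norm_num)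
  have hk2 : 2*k ≤ d := by omega
  have hkd : k ≤ d := by omega
  have hrk : r ≤ k := by omega
  have h3k20r : 3*k ≤ 20*r := by omega
  have hm1 : 1 ≤ m := by omega
  have hmk : m ≤ k := by omega
  obtain ⟨F, hFc, hFp, hFcount⟩ := aux_packing d k m hm1 hmk
  refine ⟨F, hFc, ?_, ?_⟩
  · intro A hA B hB hne
    have := hFp A hA B hB hne
    omega
  -- numeric chain
  have hchoose_id : d.choose k * k.choose m = d.choose m * (d-m).choose (k-m) :=
    Nat.choose_mul (n := d) hmk
  have h1 : d.choose m * (d-m).choose (k-m) ≤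
      (F.card * (k.choose m * k.choose m)) * (d-m).choose (k-m) := by
    calc d.choose m * (d-m).choose (k-m) = d.choose k * k.choose m := hchoose_id.symm
      _ ≤ (F.card * (k.choose m * (d-m).choose (k-m))) * k.choose m :=
          Nat.mul_le_mul_right _ hFcount
      _ = (F.card * (k.choose m * k.choose m)) * (d-m).choose (k-m) := by ring
  have hpos1 : 0 < (d-m).choose (k-m) := Nat.choose_pos (by omega)
  have h2 : d.choose m ≤ F.card * (k.choose m * k.choose m) :=
    Nat.le_of_mul_le_mul_right h1 hpos1
  have h3 : 2^m * k.choose m ≤ (F.card * k.choose m) * k.choose m := by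
    calc 2^m * k.choose m ≤ d.choose m := aux_two_pow_choose hk2
      _ ≤ F.card * (k.choose m * k.choose m) := h2
      _ = (F.card * k.choose m) * k.choose m := by ring
  have hpos2 : 0 < k.choose m := Nat.choose_pos hmk
  have h4 : 2^m ≤ F.card * k.choose m := Nat.le_of_mul_le_mul_right h3 hpos2
  have h5 : k.choose m = k.choose r := by
    have : k - m = r := by omega
    rw [← this, Nat.choose_symm hmk]
  have h6 : k.choose r ≤ 20^r := aux_choose_le_20pow (by omega) h3k20r
  calc 2^m ≤ F.card * k.choose m := h4
    _ = F.card * k.choose r := by rw [h5]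
    _ ≤ F.card * 20^r := Nat.mul_le_mul_left _ h6

lemma aux_exp (d : ℕ) (hd : 100000 ≤ d) :
    Real.exp (1/100 * d) * 20 ^ (3*(d/2)/20+1) < 2 ^ (d/2 - (3*(d/2)/20+1)) := by
  set k := d/2 with hk
  set r := 3*k/20 + 1 with hr
  set m := k - r with hm
  have e1 : 3*k = 20*(3*k/20) + (3*k)%20 := (Nat.div_add_mod _ _).symm
  have e2 : (3*k)%20 < 20 := Nat.mod_lt _ (by norm_num)
  have e3 : d = 2*(d/2) + d%2 := (Nat.div_add_mod _ _).symm
  have e4 : d%2 < 2 := Nat.mod_lt _ (by norm_num)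
  have hrk : r ≤ k := by omega
  -- real casts
  have hkR : ((d:ℝ) - 1)/2 ≤ (k:ℝ) := by
    have : (2*k:ℕ) = ((2:ℝ)*k) := by push_cast; ring
    have h2k : (d:ℝ) ≤ 2*(k:ℝ) + 1 := by exact_mod_cast (by omega : d ≤ 2*k+1)
    linarith
  have hdR : (100000:ℝ) ≤ (d:ℝ) := by exact_mod_cast hd
  have hrR : (r:ℝ) ≤ 3*(k:ℝ)/20 + 1 := by
    have h20r : (20:ℝ)*(r:ℝ) ≤ 3*(k:ℝ)+20 := by
      exact_mod_cast (show 20*r ≤ 3*k+20 by omega)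
    linarith
  have hmR : (m:ℝ) = (k:ℝ) - (r:ℝ) := by
    rw [hm, Nat.cast_sub hrk]
  have hdk : (d:ℝ) ≤ 2*(k:ℝ) + 1 := by exact_mod_cast (by omega : d ≤ 2*k+1)
  -- exp facts
  have h20 : (20:ℝ) ≤ Real.exp 3 := by
    have h := Real.exp_one_gt_d9
    have h3 : Real.exp 3 = (Real.exp 1)^3 := by
      rw [← Real.exp_nat_mul]; norm_num
    have hc : (2.7182818283:ℝ)^3 ≤ (Real.exp 1)^3 :=
      pow_le_pow_left₀ (by norm_num) h.le 3
    rw [h3]; nlinarith [hc]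
  have h2exp : Real.exp 0.6931 ≤ 2 := by
    have := Real.log_two_gt_d9
    have h := Real.exp_lt_exp.mpr (show (0.6931:ℝ) < Real.log 2 by linarith [Real.log_two_gt_d9])
    rw [Real.exp_log (by norm_num)] at h
    linarith
  have hb1 : (20:ℝ)^r ≤ Real.exp (3*r) := by
    calc (20:ℝ)^r ≤ (Real.exp 3)^r := pow_le_pow_left₀ (by norm_num) h20 r
      _ = Real.exp (3*r) := by rw [← Real.exp_nat_mul]; ring_nf
  have hb2 : Real.exp (0.6931*m) ≤ 2^m := by
    calc Real.exp (0.6931*m) = (Real.exp 0.6931)^m := by rw [← Real.exp_nat_mul]; ring_nf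
      _ ≤ 2^m := pow_le_pow_left₀ (Real.exp_nonneg _) h2exp m
  have hkey : 1/100 * (d:ℝ) + 3*r < 0.6931 * m := by
    rw [hmR]
    nlinarith
  calc Real.exp (1/100 * d) * 20 ^ r ≤ Real.exp (1/100*d) * Real.exp (3*r) := by
        apply mul_le_mul_of_nonneg_left hb1 (Real.exp_nonneg _)
    _ = Real.exp (1/100*d + 3*r) := by rw [← Real.exp_add]
    _ < Real.exp (0.6931*m) := Real.exp_lt_exp.mpr hkey
    _ ≤ 2^m := hb2

lemma sum_ite_mem_card {d : ℕ} (A : Finset (Fin d)) (a b : ℝ) :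
    ∑ j : Fin d, (if j ∈ A then a else b) = A.card * a + ((d - A.card : ℕ) : ℝ) * b := by
  classical
  rw [← Finset.sum_add_sum_compl A]
  rw [Finset.sum_congr rfl (fun j hj => if_pos hj),
    Finset.sum_congr rfl (fun j (hj : j ∈ Aᶜ) => if_neg (Finset.mem_compl.mp hj))]
  simp [Finset.card_compl]

set_option maxHeartbeats 2000000 in
/-- There exists an absolute constant `c > 0` such that for every real `v > 3/2`
there is `d₀ ∈ ℕ` with: for every `d ≥ d₀` and every `R_w > 0`, there is a finite
subset of `{w : ‖w‖ = R_w, w j ≥ R_w / d^v}` of cardinality exceeding `exp (c d)`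
whose distinct elements `w, w'` satisfy `⟪w, w'⟫ ≤ R_w² cos 0.51`. -/
theorem stmt0 :
    ∃ c : ℝ, 0 < c ∧
      ∀ v : ℝ, 3 / 2 < v →
        ∃ d₀ : ℕ, ∀ d : ℕ, d₀ ≤ d →
          ∀ R_w : ℝ, 0 < R_w →
            ∃ S : Finset (EuclideanSpace ℝ (Fin d)),
              (∀ w ∈ S, ‖w‖ = R_w ∧ ∀ j : Fin d, R_w / (d : ℝ) ^ v ≤ w j) ∧
              Real.exp (c * d) < (S.card : ℝ) ∧
              ∀ w ∈ S, ∀ w' ∈ S, w ≠ w' →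
                (inner ℝ w w' : ℝ) ≤ R_w ^ 2 * Real.cos 0.51 := by
  classical
  refine ⟨1/100, by norm_num, ?_⟩
  intro v hv
  refine ⟨100000, ?_⟩
  intro d hd R hR
  obtain ⟨F, hFc, hFp, hFcount⟩ := aux_family d hd
  set k := d/2 with hk
  -- basic real facts
  have hdR : (100000:ℝ) ≤ (d:ℝ) := by exact_mod_cast hd
  have hdpos : (0:ℝ) < d := by linarith
  have hkd : k ≤ d := Nat.div_le_self d 2
  have hkpos : 0 < k := by omega
  have hkR : (1:ℝ) ≤ (k:ℝ) := by exact_mod_cast hkpos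
  have hkdR : (k:ℝ) ≤ (d:ℝ) := by exact_mod_cast hkd
  set q : ℝ := (d:ℝ) ^ v with hq
  have hqpos : 0 < q := Real.rpow_pos_of_pos hdpos v
  -- q ≥ 100 d
  have hq100 : 100 * (d:ℝ) ≤ q := by
    have h32 : (d:ℝ) ^ ((3:ℝ)/2) ≤ q :=
      Real.rpow_le_rpow_of_exponent_le (by linarith) hv.le
    have hsplit : (d:ℝ) ^ ((3:ℝ)/2) = (d:ℝ) * (d:ℝ) ^ ((1:ℝ)/2) := by
      rw [show (3:ℝ)/2 = 1 + 1/2 by norm_num, Real.rpow_add hdpos, Real.rpow_one]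
    have hsq : (100:ℝ) ≤ (d:ℝ) ^ ((1:ℝ)/2) := by
      rw [← Real.sqrt_eq_rpow]
      rw [show (100:ℝ) = Real.sqrt (100^2) by rw [Real.sqrt_sq]; norm_num]
      exact Real.sqrt_le_sqrt (by nlinarith)
    calc 100 * (d:ℝ) ≤ (d:ℝ) ^ ((1:ℝ)/2) * (d:ℝ) := by nlinarith
      _ = (d:ℝ) * (d:ℝ) ^ ((1:ℝ)/2) := by ring
      _ = (d:ℝ) ^ ((3:ℝ)/2) := hsplit.symm
      _ ≤ q := h32
  set ε : ℝ := R / q with hε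
  have hεpos : 0 < ε := div_pos hR hqpos
  have hεD : ε * (d:ℝ) ≤ R / 100 := by
    rw [hε, div_mul_eq_mul_div, div_le_div_iff₀ hqpos (by norm_num)]
    nlinarith
  have hε2d : ε^2 * (d:ℝ) < R^2 := by
    have h1 : ε * (d:ℝ) ≤ R/100 := hεD
    have h2 : ε ≤ R/100 := by nlinarith
    nlinarith
  -- the two levels
  set t2 : ℝ := (R^2 - ((d:ℝ) - k) * ε^2) / k with ht2
  have ht2gt : ε^2 < t2 := by
    rw [ht2, lt_div_iff₀ (by linarith)]
    nlinarith
  have ht2pos : 0 < t2 := lt_trans (by positivity) ht2gt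
  set t : ℝ := Real.sqrt t2 with ht
  have htsq : t^2 = t2 := Real.sq_sqrt ht2pos.le
  have htpos : 0 < t := Real.sqrt_pos.mpr ht2pos
  have htε : ε < t := by
    have h := Real.sqrt_lt_sqrt (sq_nonneg ε) ht2gt
    rwa [Real.sqrt_sq hεpos.le] at h
  have htk : t^2 * k = R^2 - ((d:ℝ) - k) * ε^2 := by
    rw [htsq, ht2]; field_simp
  have htR2 : t^2 * k ≤ R^2 := by
    rw [htk]; nlinarith [sq_nonneg ε]
  have htR : t ≤ R := by nlinarith
  -- the map
  set w : Finset (Fin d) → EuclideanSpace ℝ (Fin d) :=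
    fun A => WithLp.toLp 2 (fun j => if j ∈ A then t else ε) with hw
  have hwinj : Set.InjOn w F := by
    intro A _ B _ hAB
    by_contra hne
    have : ∃ j, (j ∈ A ∧ j ∉ B) ∨ (j ∈ B ∧ j ∉ A) := by
      by_contra hcon
      push_neg at hcon
      apply hne
      ext j
      have := hcon j
      tauto
    obtain ⟨j, hj | hj⟩ := this
    · have := congrArg (fun x => x j) hAB
      simp only [hw, PiLp.toLp_apply, if_pos hj.1, if_neg hj.2] at this
      exact absurd this (ne_of_lt htε).symm
    · have := congrArg (fun x => x j) hAB
      simp only [hw, PiLp.toLp_apply, if_neg hj.2, if_pos hj.1] at this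
      exact absurd this (ne_of_lt htε)
  refine ⟨F.image w, ?_, ?_, ?_⟩
  · -- membership properties
    intro x hx
    obtain ⟨A, hA, rfl⟩ := Finset.mem_image.mp hx
    constructor
    · -- norm
      rw [EuclideanSpace.norm_eq]
      have hsum : ∑ j : Fin d, ‖w A j‖^2 = k * t^2 + ((d:ℝ) - k) * ε^2 := by
        have : ∀ j : Fin d, ‖w A j‖^2 = (if j ∈ A then t^2 else ε^2) := by
          intro j
          simp only [hw, PiLp.toLp_apply]
          split <;> simp [Real.norm_eq_abs, sq_abs]
        rw [Finset.sum_congr rfl (fun j _ => this j), sum_ite_mem_card, hFc A hA]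
        rw [Nat.cast_sub hkd]
      rw [hsum]
      have : (k:ℝ) * t^2 + ((d:ℝ) - k) * ε^2 = R^2 := by nlinarith [htk]
      rw [this, Real.sqrt_sq hR.le]
    · -- coordinates
      intro j
      simp only [hw, PiLp.toLp_apply]
      split
      · linarith
      · exact le_refl _
  · -- cardinality
    rw [Finset.card_image_of_injOn hwinj]
    have h1 : (2:ℝ) ^ (k - (3*k/20 + 1)) ≤ (F.card : ℝ) * 20 ^ (3*k/20 + 1) := by
      exact_mod_cast hFcount
    have h2 := aux_exp d hd
    have h20pos : (0:ℝ) < 20 ^ (3*k/20+1) := by positivity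
    have h3 : Real.exp (1/100 * d) * 20 ^ (3*k/20+1) < (F.card:ℝ) * 20 ^ (3*k/20+1) :=
      lt_of_lt_of_le h2 h1
    exact lt_of_mul_lt_mul_right h3 h20pos.le
  · -- inner products
    intro x hx y hy hxy
    obtain ⟨A, hA, rfl⟩ := Finset.mem_image.mp hx
    obtain ⟨B, hB, rfl⟩ := Finset.mem_image.mp hy
    have hABne : A ≠ B := fun h => hxy (by rw [h])
    have hint := hFp A hA B hB hABne
    have hinner : (inner ℝ (w A) (w B) : ℝ) = ∑ j : Fin d, (w A j) * (w B j) := by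
      simp [PiLp.inner_apply, RCLike.inner_apply, conj_trivial, mul_comm]
    rw [hinner]
    have hbound : ∀ j : Fin d, (w A j) * (w B j) ≤ (if j ∈ A ∩ B then t^2 else t*ε) := by
      intro j
      simp only [hw, PiLp.toLp_apply, Finset.mem_inter]
      by_cases hjA : j ∈ A <;> by_cases hjB : j ∈ B <;>
        simp [hjA, hjB] <;> nlinarith
    have hsum2 : ∑ j : Fin d, (if j ∈ A ∩ B then t^2 else t*ε)
        = ((A ∩ B).card : ℝ) * t^2 + ((d - (A ∩ B).card : ℕ):ℝ) * (t*ε) := by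
      exact sum_ite_mem_card (A ∩ B) (t^2) (t*ε)
    have hintR : ((A ∩ B).card : ℝ) * 20 ≤ 17 * (k:ℝ) := by
      exact_mod_cast (by omega : (A∩B).card * 20 ≤ 17 * k)
    have hcard_le_d : ((d - (A ∩ B).card : ℕ):ℝ) ≤ (d:ℝ) := by
      exact_mod_cast Nat.sub_le d _
    calc ∑ j : Fin d, (w A j) * (w B j)
        ≤ ∑ j : Fin d, (if j ∈ A ∩ B then t^2 else t*ε) := Finset.sum_le_sum (fun j _ => hbound j)
      _ = ((A ∩ B).card : ℝ) * t^2 + ((d - (A ∩ B).card : ℕ):ℝ) * (t*ε) := hsum2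
      _ ≤ (17/20) * (k:ℝ) * t^2 + (d:ℝ) * (t*ε) := by
          have h1 : ((A ∩ B).card : ℝ) * t^2 ≤ (17/20) * (k:ℝ) * t^2 := by nlinarith [sq_nonneg t]
          have h2 : ((d - (A ∩ B).card : ℕ):ℝ) * (t*ε) ≤ (d:ℝ) * (t*ε) := by
            apply mul_le_mul_of_nonneg_right hcard_le_d (by positivity)
          linarith
      _ ≤ (17/20) * R^2 + (1/100) * R^2 := by
          have h1 : (17/20) * ((k:ℝ) * t^2) ≤ (17/20) * R^2 := by nlinarith
          have h2 : (d:ℝ) * (t*ε) ≤ (1/100) * R^2 := by nlinarith [hεD, htR, hεpos, htpos]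
          linarith
      _ ≤ R^2 * Real.cos 0.51 := by
          have hcos : (1:ℝ) - 0.51^2/2 ≤ Real.cos 0.51 := Real.one_sub_sq_div_two_le_cos
          nlinarith [sq_nonneg R]
end

section
/- For every real v > 3/2 there is a d₀ ∈ ℕ such that for every integer d ≥ d₀ and every R_w > 0, the (d−1)-dimensional spherical (surface) measure of the set S_w^{(v)} := {w ∈ ℝ^d : ‖w‖₂ = R_w and w_j ≥ R_w/d^v for all j ∈ [d]} is at least 2^{−(d+1)} times the spherical measure of the full sphere {w ∈ ℝ^d : ‖w‖₂ = R_w}. -/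
open MeasureTheory Set
open scoped ENNReal NNReal RealInnerProductSpace

private lemma aux_normalize {E : Type*} [NormedAddCommGroup E] [InnerProductSpace ℝ E]
    {m : ℝ} (hm : 0 < m) {u v : E} (hu : m ≤ ‖u‖) (hv : m ≤ ‖v‖) :
    ‖‖u‖⁻¹ • u - ‖v‖⁻¹ • v‖ ≤ m⁻¹ * ‖u - v‖ := by
  have ha : 0 < ‖u‖ := hm.trans_le hu
  have hb : 0 < ‖v‖ := hm.trans_le hv
  have hc : ⟪u, v⟫ ≤ ‖u‖ * ‖v‖ := real_inner_le_norm u v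
  have h1 : ‖‖u‖⁻¹ • u - ‖v‖⁻¹ • v‖ ^ 2 = 2 - 2 * (⟪u, v⟫ / (‖u‖ * ‖v‖)) := by
    rw [norm_sub_sq_real, norm_smul, norm_smul, real_inner_smul_left, real_inner_smul_right]
    rw [Real.norm_eq_abs, Real.norm_eq_abs, abs_of_pos (inv_pos.2 ha), abs_of_pos (inv_pos.2 hb)]
    field_simp
    ring
  have h2 : (m⁻¹ * ‖u - v‖) ^ 2 = m⁻¹ ^ 2 * (‖u‖ ^ 2 - 2 * ⟪u, v⟫ + ‖v‖ ^ 2) := by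
    rw [mul_pow, norm_sub_sq_real]
  have hsq : ‖‖u‖⁻¹ • u - ‖v‖⁻¹ • v‖ ^ 2 ≤ (m⁻¹ * ‖u - v‖) ^ 2 := by
    rw [h1, h2]
    have hmab : (0:ℝ) < m ^ 2 * (‖u‖ * ‖v‖) := by positivity
    rw [← mul_le_mul_iff_of_pos_right hmab]
    have hab2 : m ^ 2 ≤ ‖u‖ * ‖v‖ := by nlinarith
    have e1 : (2 - 2 * (⟪u, v⟫ / (‖u‖ * ‖v‖))) * (m ^ 2 * (‖u‖ * ‖v‖))
        = 2 * m ^ 2 * (‖u‖ * ‖v‖) - 2 * m ^ 2 * ⟪u, v⟫ := by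
      field_simp
    have e2 : m⁻¹ ^ 2 * (‖u‖ ^ 2 - 2 * ⟪u, v⟫ + ‖v‖ ^ 2) * (m ^ 2 * (‖u‖ * ‖v‖))
        = (‖u‖ ^ 2 - 2 * ⟪u, v⟫ + ‖v‖ ^ 2) * (‖u‖ * ‖v‖) := by
      field_simp
    rw [e1, e2]
    nlinarith [mul_nonneg (mul_pos ha hb).le (sq_nonneg (‖u‖ - ‖v‖)),
      mul_nonneg (sub_nonneg.2 hc) (sub_nonneg.2 hab2)]
  have h3 : (0:ℝ) ≤ m⁻¹ * ‖u - v‖ := by positivity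
  nlinarith [norm_nonneg (‖u‖⁻¹ • u - ‖v‖⁻¹ • v)]

private lemma aux_sphere_le_orthant (d : ℕ) (R : ℝ) :
    μH[(d : ℝ) - 1] {w : EuclideanSpace ℝ (Fin d) | ‖w‖ = R} ≤
      (2 : ℝ≥0∞) ^ d *
        μH[(d : ℝ) - 1] {w : EuclideanSpace ℝ (Fin d) | ‖w‖ = R ∧ ∀ j, 0 ≤ w j} := by
  set Sp := {w : EuclideanSpace ℝ (Fin d) | ‖w‖ = R ∧ ∀ j, 0 ≤ w j} with hSp
  let F : (Fin d → Bool) → (EuclideanSpace ℝ (Fin d) ≃ₗᵢ[ℝ] EuclideanSpace ℝ (Fin d)) :=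
    fun ε => .piLpCongrRight 2 (fun i => if ε i then .refl ℝ ℝ else .neg ℝ)
  have hFapp : ∀ ε w i, F ε w i = if ε i then w i else -(w i) := by
    intro ε w i
    simp only [F, LinearIsometryEquiv.piLpCongrRight_apply, PiLp.toLp_apply]
    by_cases h : ε i <;> simp [h]
  have hsub : {w : EuclideanSpace ℝ (Fin d) | ‖w‖ = R} ⊆ ⋃ ε : Fin d → Bool, F ε '' Sp := by
    intro w hw
    set ε : Fin d → Bool := fun i => decide (0 ≤ w i) with hε
    refine Set.mem_iUnion.2 ⟨ε, F ε w, ⟨?_, ?_⟩, ?_⟩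
    · simpa using hw
    · intro j
      rw [hFapp]
      by_cases h : (0:ℝ) ≤ w j <;> simp [ε, h] <;> linarith [not_le.1 h]
    · apply PiLp.ext
      intro i
      rw [hFapp, hFapp]
      by_cases h : ε i <;> simp [h]
  calc μH[(d : ℝ) - 1] {w : EuclideanSpace ℝ (Fin d) | ‖w‖ = R}
      ≤ μH[(d : ℝ) - 1] (⋃ ε : Fin d → Bool, F ε '' Sp) := measure_mono hsub
    _ ≤ ∑' ε : Fin d → Bool, μH[(d : ℝ) - 1] (F ε '' Sp) := measure_iUnion_le _
    _ = ∑' _ : Fin d → Bool, μH[(d : ℝ) - 1] Sp := by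
        congr 1; funext ε
        exact (F ε).isometry.hausdorffMeasure_image (Or.inr (F ε).surjective) Sp
    _ = (2 : ℝ≥0∞) ^ d * μH[(d : ℝ) - 1] Sp := by
        rw [tsum_fintype, Finset.sum_const, Finset.card_univ]
        simp [Fintype.card_fun, nsmul_eq_mul, pow_mul]

set_option maxHeartbeats 1600000 in
/-- For every `v > 3/2` there is `d₀` such that for all `d ≥ d₀` and `R_w > 0`, the
`(d-1)`-dimensional spherical (Hausdorff) measure of
`{w : ‖w‖ = R_w, w j ≥ R_w / d^v for all j}` is at least `2^{-(d+1)}` times the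
spherical measure of the full sphere of radius `R_w`. -/
theorem stmt1 (v : ℝ) (hv : 3 / 2 < v) :
    ∃ d₀ : ℕ, ∀ d : ℕ, d₀ ≤ d → ∀ R_w : ℝ, 0 < R_w →
      ((2 : ℝ≥0∞) ^ (d + 1))⁻¹ *
          μH[(d : ℝ) - 1] {w : EuclideanSpace ℝ (Fin d) | ‖w‖ = R_w} ≤
        μH[(d : ℝ) - 1]
          {w : EuclideanSpace ℝ (Fin d) |
            ‖w‖ = R_w ∧ ∀ j : Fin d, R_w / (d : ℝ) ^ v ≤ w j} := by
  have hvpos : 0 < v - 3/2 := by linarith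
  have hlim : Filter.Tendsto (fun d : ℕ => (d:ℝ) ^ ((3:ℝ)/2 - v)) Filter.atTop (nhds 0) := by
    have h := tendsto_rpow_neg_atTop hvpos
    have heq : (fun x : ℝ => x ^ (-(v - 3/2))) = fun x : ℝ => x ^ ((3:ℝ)/2 - v) := by
      funext x; norm_num
    rw [heq] at h
    exact h.comp tendsto_natCast_atTop_atTop
  have hev : ∀ᶠ d : ℕ in Filter.atTop,
      (d:ℝ) ^ ((3:ℝ)/2 - v) < 1/2 ∧ 1 ≤ d :=
    (hlim.eventually (gt_mem_nhds (by norm_num))).and (Filter.eventually_ge_atTop 1)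
  obtain ⟨d₀, hd₀⟩ := Filter.eventually_atTop.1 hev
  refine ⟨d₀, fun d hd R hR => ?_⟩
  obtain ⟨hx32, hd1⟩ := hd₀ d hd
  have hdge : (1:ℝ) ≤ (d:ℝ) := by exact_mod_cast hd1
  have hd0' : (0:ℝ) < d := by linarith
  have hdvpos : (0:ℝ) < (d:ℝ) ^ v := Real.rpow_pos_of_pos hd0' v
  set t : ℝ := R / (d:ℝ) ^ v with ht
  have ht0 : 0 < t := div_pos hR hdvpos
  set x : ℝ := Real.sqrt d / (d:ℝ) ^ v with hxdef
  have hx0 : 0 ≤ x := by positivity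
  have hxid : (d:ℝ) * x = (d:ℝ) ^ ((3:ℝ)/2 - v) := by
    rw [hxdef, Real.sqrt_eq_rpow]
    rw [show (3:ℝ)/2 - v = 1 + (1/2 + -v) by ring, Real.rpow_add hd0', Real.rpow_add hd0',
      Real.rpow_one, Real.rpow_neg hd0'.le]
    ring
  have hdx : (d:ℝ) * x ≤ 1/2 := by rw [hxid]; linarith
  have hx12 : x ≤ 1/2 := by nlinarith [mul_nonneg (sub_nonneg.2 hdge) hx0]
  have h1x : (0:ℝ) < 1 - x := by linarith
  set c : EuclideanSpace ℝ (Fin d) := WithLp.toLp 2 (fun _ => t) with hc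
  have hcnorm : ‖c‖ = Real.sqrt d * t := by
    rw [EuclideanSpace.norm_eq]
    simp only [hc, PiLp.toLp_apply, Real.norm_eq_abs, sq_abs]
    rw [Finset.sum_const, Finset.card_univ, Fintype.card_fin, nsmul_eq_mul,
      Real.sqrt_mul (by positivity), Real.sqrt_sq ht0.le]
  have hcR : Real.sqrt d * t = R * x := by
    rw [ht, hxdef]; field_simp
  set m : ℝ := R - Real.sqrt d * t with hmdef
  have hm : 0 < m := by rw [hmdef, hcR]; nlinarith
  have hRm : R / m = (1 - x)⁻¹ := by
    rw [hmdef, hcR, show R - R * x = R * (1 - x) by ring]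
    field_simp
  -- the Lipschitz map
  set g : EuclideanSpace ℝ (Fin d) → EuclideanSpace ℝ (Fin d) :=
    fun y => R • (‖y - c‖⁻¹ • (y - c)) with hg
  set good := {w : EuclideanSpace ℝ (Fin d) | ‖w‖ = R ∧ ∀ j : Fin d, t ≤ w j} with hgood
  have hlip : LipschitzOnWith (Real.toNNReal (R/m)) g good := by
    apply LipschitzOnWith.of_dist_le'
    intro y hy y' hy'
    have h1 : m ≤ ‖y - c‖ := by
      have := norm_sub_norm_le y c
      rw [hy.1] at this
      rw [hmdef, ← hcnorm]
      linarith
    have h2 : m ≤ ‖y' - c‖ := by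
      have := norm_sub_norm_le y' c
      rw [hy'.1] at this
      rw [hmdef, ← hcnorm]
      linarith
    rw [dist_eq_norm, dist_eq_norm, hg]
    have : R • (‖y - c‖⁻¹ • (y - c)) - R • (‖y' - c‖⁻¹ • (y' - c))
        = R • (‖y - c‖⁻¹ • (y - c) - ‖y' - c‖⁻¹ • (y' - c)) :=
      (smul_sub R _ _).symm
    rw [this, norm_smul, Real.norm_eq_abs, abs_of_pos hR]
    have hb := aux_normalize hm h1 h2
    rw [sub_sub_sub_cancel_right] at hb
    calc R * ‖‖y - c‖⁻¹ • (y - c) - ‖y' - c‖⁻¹ • (y' - c)‖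
        ≤ R * (m⁻¹ * ‖y - y'‖) := by
          exact mul_le_mul_of_nonneg_left hb hR.le
      _ = R / m * ‖y - y'‖ := by field_simp
  -- covering: the positive orthant part of the sphere lies in g '' good
  have hcover : {w : EuclideanSpace ℝ (Fin d) | ‖w‖ = R ∧ ∀ j, 0 ≤ w j} ⊆ g '' good := by
    intro x0 hx0mem
    obtain ⟨hxn, hxnn⟩ := hx0mem
    set b : ℝ := ⟪c, x0⟫ with hbdef
    have hb0 : 0 ≤ b := by
      rw [hbdef, PiLp.inner_apply]
      apply Finset.sum_nonneg
      intro i _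
      simp only [hc, PiLp.toLp_apply, RCLike.inner_apply, conj_trivial]
      exact mul_nonneg (hxnn i) ht0.le
    have hcltR : ‖c‖ ≤ R/2 := by rw [hcnorm, hcR]; nlinarith
    have hc2 : ‖c‖^2 ≤ R^2/4 := by nlinarith [norm_nonneg c]
    have hD0 : (0:ℝ) ≤ b^2 + R^2*(R^2 - ‖c‖^2) := by nlinarith [sq_nonneg b]
    set s : ℝ := Real.sqrt (b^2 + R^2*(R^2 - ‖c‖^2)) with hsdef
    have hs2 : s^2 = b^2 + R^2*(R^2 - ‖c‖^2) := Real.sq_sqrt hD0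
    have hs0 : 0 ≤ s := Real.sqrt_nonneg _
    have hsb : b < s := by
      nlinarith [hs2, hc2, mul_pos (mul_pos hR hR) (mul_pos hR hR), mul_nonneg hb0 hs0]
    set r : ℝ := (s - b)/R^2 with hrdef
    have hr0 : 0 < r := div_pos (by linarith) (by positivity)
    set y : EuclideanSpace ℝ (Fin d) := c + r • x0 with hydef
    have hR2 : (R^2 : ℝ) ≠ 0 := by positivity
    have hyR : ‖y‖ = R := by
      have h1 : r * R^2 = s - b := by rw [hrdef]; field_simp
      have hsq : ‖y‖^2 = R^2 := by
        rw [hydef, norm_add_sq_real, real_inner_smul_right, norm_smul, Real.norm_eq_abs,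
          abs_of_pos hr0, mul_pow, hxn, ← hbdef]
        have key : (‖c‖^2 + 2*(r*b) + r^2*R^2) * R^2 = R^2 * R^2 := by
          have expand : (‖c‖^2 + 2*(r*b) + r^2*R^2) * R^2
              = ‖c‖^2*R^2 + (r*R^2)*(2*b) + (r*R^2)^2 := by ring
          rw [expand, h1]
          linear_combination hs2
        have := mul_right_cancel₀ hR2 key
        linarith [this]
      calc ‖y‖ = Real.sqrt (‖y‖^2) := (Real.sqrt_sq (norm_nonneg y)).symm
        _ = Real.sqrt (R^2) := by rw [hsq]
        _ = R := Real.sqrt_sq hR.le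
    have hygood : y ∈ good := by
      refine ⟨hyR, fun j => ?_⟩
      have hyj : y j = t + r * x0 j := by
        simp [hydef, hc, PiLp.toLp_apply, PiLp.add_apply, PiLp.smul_apply, smul_eq_mul]
      rw [hyj]
      nlinarith [mul_nonneg hr0.le (hxnn j)]
    have hgy : g y = x0 := by
      have hyc : y - c = r • x0 := by rw [hydef]; exact add_sub_cancel_left c _
      show R • (‖y - c‖⁻¹ • (y - c)) = x0
      rw [hyc, norm_smul, Real.norm_eq_abs, abs_of_pos hr0, hxn]
      have h1 : (r*R)⁻¹ • (r • x0) = R⁻¹ • x0 := by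
        rw [smul_smul]
        congr 1
        field_simp
      rw [h1, smul_smul, mul_inv_cancel₀ hR.ne', one_smul]
    exact ⟨y, hygood, hgy⟩
  -- measure estimates
  have h0d1 : (0:ℝ) ≤ (d:ℝ) - 1 := by linarith
  have himg := hlip.hausdorffMeasure_image_le h0d1
  have hmono : μH[(d:ℝ)-1] {w : EuclideanSpace ℝ (Fin d) | ‖w‖ = R ∧ ∀ j, 0 ≤ w j}
      ≤ μH[(d:ℝ)-1] (g '' good) := measure_mono hcover
  have hKpow : ((Real.toNNReal (R/m) : ℝ≥0∞)) ^ ((d:ℝ)-1) ≤ 2 := by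
    have hnat : ((d:ℝ) - 1) = ((d - 1 : ℕ) : ℝ) := by
      rw [Nat.cast_sub hd1, Nat.cast_one]
    rw [hnat, ENNReal.rpow_natCast, ← ENNReal.coe_pow]
    have hreal : ((Real.toNNReal (R/m)) ^ (d-1) : ℝ≥0) ≤ (2 : ℝ≥0) := by
      rw [← NNReal.coe_le_coe, NNReal.coe_pow, Real.coe_toNNReal _ (by positivity)]
      rw [hRm]
      have hber : 1 - (d:ℝ)*x ≤ (1-x)^(d-1 : ℕ) := by
        have h1 : 1 + (d:ℝ) * (-x) ≤ (1 + -x)^(d:ℕ) := one_add_mul_le_pow (by linarith) d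
        have h2 : (1 + -x)^(d:ℕ) ≤ (1 + -x)^(d-1:ℕ) :=
          pow_le_pow_of_le_one (by linarith) (by linarith) (Nat.sub_le d 1)
        calc 1 - (d:ℝ)*x = 1 + (d:ℝ)*(-x) := by ring
          _ ≤ (1 + -x)^(d:ℕ) := h1
          _ ≤ (1 + -x)^(d-1:ℕ) := h2
          _ = (1-x)^(d-1:ℕ) := by ring_nf
      have hhalf : (1/2:ℝ) ≤ (1-x)^(d-1:ℕ) := by linarith
      rw [inv_pow]
      calc ((1-x)^(d-1:ℕ))⁻¹ ≤ ((1:ℝ)/2)⁻¹ := inv_anti₀ (by norm_num) hhalf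
        _ = 2 := by norm_num
    exact_mod_cast hreal
  have hmain : μH[(d:ℝ)-1] {w : EuclideanSpace ℝ (Fin d) | ‖w‖ = R}
      ≤ (2:ℝ≥0∞)^(d+1) * μH[(d:ℝ)-1] good := by
    calc μH[(d:ℝ)-1] {w : EuclideanSpace ℝ (Fin d) | ‖w‖ = R}
        ≤ (2:ℝ≥0∞)^d * μH[(d:ℝ)-1] {w : EuclideanSpace ℝ (Fin d) | ‖w‖ = R ∧ ∀ j, 0 ≤ w j} :=
          aux_sphere_le_orthant d R
      _ ≤ (2:ℝ≥0∞)^d * (((Real.toNNReal (R/m)) : ℝ≥0∞) ^ ((d:ℝ)-1) * μH[(d:ℝ)-1] good) :=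
          mul_le_mul_right (hmono.trans himg) _
      _ ≤ (2:ℝ≥0∞)^d * (2 * μH[(d:ℝ)-1] good) :=
          mul_le_mul_right (mul_le_mul_left hKpow _) _
      _ = (2:ℝ≥0∞)^(d+1) * μH[(d:ℝ)-1] good := by ring
  calc ((2:ℝ≥0∞)^(d+1))⁻¹ * μH[(d:ℝ)-1] {w : EuclideanSpace ℝ (Fin d) | ‖w‖ = R}
      ≤ ((2:ℝ≥0∞)^(d+1))⁻¹ * ((2:ℝ≥0∞)^(d+1) * μH[(d:ℝ)-1] good) := mul_le_mul_right hmain _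
    _ = μH[(d:ℝ)-1] good := by
        rw [← mul_assoc, ENNReal.inv_mul_cancel (pow_ne_zero _ two_ne_zero)
          (ENNReal.pow_ne_top ENNReal.ofNat_ne_top), one_mul]
end

section
/- Let d ≥ 1 and R_w > 0, and let w, w' ∈ ℝ^d be distinct vectors with ‖w‖₂ = ‖w'‖₂ = R_w, with all coordinates of w and w' strictly positive, and with ⟨w, w'⟩ ≤ R_w² · cos(0.51). For u ∈ ℝ^d define A_{u} := {x ∈ ℝ^d : ∃ z ∈ ℤ \ {0} with ‖x − z·u‖₂ < R_w/4}. Then A_{w} and A_{w'} are disjoint: there is no x ∈ ℝ^d and nonzero integers z, z' with ‖x − z·w‖₂ < R_w/4 and ‖x − z'·w'‖₂ < R_w/4. -/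
/-- For distinct `w, w'` on the sphere of radius `R_w` with strictly positive
coordinates and `⟪w, w'⟫ ≤ R_w² cos 0.51`, the sets
`A_u = {x : ∃ z ∈ ℤ \ {0}, ‖x - z u‖ < R_w/4}` for `u = w, w'` are disjoint. -/
theorem stmt2 (d : ℕ) (hd : 1 ≤ d) (R_w : ℝ) (hRw : 0 < R_w)
    (w w' : EuclideanSpace ℝ (Fin d)) (hne : w ≠ w')
    (hw : ‖w‖ = R_w) (hw' : ‖w'‖ = R_w)
    (hpos : ∀ j : Fin d, 0 < w j) (hpos' : ∀ j : Fin d, 0 < w' j)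
    (hangle : (inner ℝ w w' : ℝ) ≤ R_w ^ 2 * Real.cos 0.51) :
    ¬ ∃ (x : EuclideanSpace ℝ (Fin d)) (z z' : ℤ), z ≠ 0 ∧ z' ≠ 0 ∧
        ‖x - (z : ℝ) • w‖ < R_w / 4 ∧ ‖x - (z' : ℝ) • w'‖ < R_w / 4 := by
  rintro ⟨x, z, z', hz, hz', h1, h2⟩
  -- cos 0.51 ≤ 7/8
  have hc : Real.cos 0.51 ≤ 7/8 := by
    have habs : |(0.51:ℝ)| = 0.51 := by rw [abs_of_nonneg]; norm_num
    have hb := Real.cos_bound (x := (0.51 : ℝ)) (by rw [habs]; norm_num)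
    have hb2 := (abs_le.1 hb).2
    rw [habs] at hb2
    nlinarith [hb2]
  -- inner w w' > 0
  have hne' : Nonempty (Fin d) := ⟨⟨0, hd⟩⟩
  have hI : (0:ℝ) < inner ℝ w w' := by
    rw [PiLp.inner_apply]
    apply Finset.sum_pos
    · intro i _
      simpa using mul_pos (hpos' i) (hpos i)
    · exact Finset.univ_nonempty
  set I : ℝ := inner ℝ w w' with hIdef
  -- triangle inequality
  have key : ‖(z:ℝ) • w - (z':ℝ) • w'‖ < R_w / 2 := by
    have h3 := norm_sub_le (x - (z':ℝ) • w') (x - (z:ℝ) • w)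
    have h4 : x - (z':ℝ) • w' - (x - (z:ℝ) • w) = (z:ℝ) • w - (z':ℝ) • w' := by abel
    rw [h4] at h3
    have := norm_nonneg (x - (z':ℝ) • w')
    linarith
  have hsq : ‖(z:ℝ) • w - (z':ℝ) • w'‖^2
      = (z:ℝ)^2 * R_w^2 + (z':ℝ)^2 * R_w^2 - 2*((z:ℝ)*(z':ℝ))*I := by
    rw [norm_sub_sq_real, real_inner_smul_left, real_inner_smul_right,
        norm_smul, norm_smul, hw, hw']
    simp only [Real.norm_eq_abs, mul_pow, sq_abs]
    push_cast
    ring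
  have hlt : ‖(z:ℝ) • w - (z':ℝ) • w'‖^2 < R_w^2 / 4 := by
    nlinarith [norm_nonneg ((z:ℝ) • w - (z':ℝ) • w')]
  rw [hsq] at hlt
  set a := (z:ℝ)
  set b := (z':ℝ)
  have ha : 1 ≤ a^2 := by
    have : (1:ℤ) ≤ z^2 := by rcases lt_or_gt_of_ne hz with h|h <;> nlinarith
    calc (1:ℝ) ≤ ((z^2 : ℤ) : ℝ) := by exact_mod_cast this
    _ = a^2 := by push_cast; ring
  have hb : 1 ≤ b^2 := by
    have : (1:ℤ) ≤ z'^2 := by rcases lt_or_gt_of_ne hz' with h|h <;> nlinarith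
    calc (1:ℝ) ≤ ((z'^2 : ℤ) : ℝ) := by exact_mod_cast this
    _ = b^2 := by push_cast; ring
  have hcase : a * b ≤ 0 ∨ 1 ≤ a * b := by
    have hzz : z * z' ≠ 0 := mul_ne_zero hz hz'
    rcases le_or_gt (z * z') 0 with h | h
    · left
      have : ((z * z' : ℤ) : ℝ) ≤ 0 := by exact_mod_cast h
      push_cast at this; linarith
    · right
      have : (1:ℤ) ≤ z * z' := h
      have : (1:ℝ) ≤ ((z * z' : ℤ) : ℝ) := by exact_mod_cast this
      push_cast at this; linarith
  rcases hcase with h | h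
  · have e : 2*(a*b)*I ≤ 0 := mul_nonpos_of_nonpos_of_nonneg (by linarith) (le_of_lt hI)
    have e5 : R_w^2 ≤ a^2*R_w^2 := le_mul_of_one_le_left (sq_nonneg R_w) ha
    have e6 : R_w^2 ≤ b^2*R_w^2 := le_mul_of_one_le_left (sq_nonneg R_w) hb
    have hR2 : (0:ℝ) < R_w^2 := by positivity
    linarith
  · have e1 : 2*(a*b)*I ≤ 2*(a*b)*(R_w^2 * Real.cos 0.51) :=
      mul_le_mul_of_nonneg_left hangle (by linarith)
    have h0 : (0:ℝ) ≤ 2*(a*b)*R_w^2 := mul_nonneg (by linarith) (sq_nonneg R_w)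
    have e2 : 2*(a*b)*(R_w^2 * Real.cos 0.51) ≤ 2*(a*b)*(R_w^2 * (7/8)) := by
      have := mul_le_mul_of_nonneg_left hc h0
      calc 2*(a*b)*(R_w^2 * Real.cos 0.51) = 2*(a*b)*R_w^2 * Real.cos 0.51 := by ring
        _ ≤ 2*(a*b)*R_w^2 * (7/8) := this
        _ = 2*(a*b)*(R_w^2 * (7/8)) := by ring
    have e3 : (0:ℝ) ≤ (a-b)^2 * R_w^2 := mul_nonneg (sq_nonneg _) (sq_nonneg _)
    have e4 : R_w^2 ≤ a*b*R_w^2 := le_mul_of_one_le_left (sq_nonneg R_w) h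
    have hR2 : (0:ℝ) < R_w^2 := by positivity
    linarith [e1, e2, e3, e4]
end

section
/- Let d, D ≥ 1 be integers and R_w > 0. Let β ∈ ℝ^D with Σ_{j=1}^D |β_j| = 1 and define g̃(y) := Σ_{j=1}^D β_j cos(2πjy). Let w* be a real number with 0 < w* ≤ R_w and set g(x) := g̃(x·w*). Let M₁ be an integer with M₁ ≥ 70π d D³ R_w, and let M₂ = c·M₁ be a positive integer where c is a constant with 0 < c < 1/(8π D R_w). Define h : ℤ → ℝ by h(k) := ⌊ g(k/M₁) ⌋_{M₂}. Then h is (33/35)-pseudoperiodic with period M₁/w*: for at least a 33/35 fraction of the integers k with 0 ≤ k ≤ ⌊M₁/w*⌋, it holds that for every ℓ ∈ ℤ, h(k + ⌊ℓ·M₁/w*⌋) = h(k) or h(k + ⌈ℓ·M₁/w*⌉) = h(k). -/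
open Real Finset
open scoped BigOperators

set_option maxHeartbeats 1000000

/-- Rounding down to the nearest integer multiple of `1/M`. -/
noncomputable def floorMul (M : ℕ) (t : ℝ) : ℝ := (⌊t * M⌋ : ℤ) / (M : ℝ)

noncomputable def trigPoly (D : ℕ) (b : Fin D → ℝ) (y : ℝ) : ℝ :=
  ∑ j : Fin D, b j * Real.sin (2 * π * ((j : ℕ) + 1) * y)

noncomputable def gfun (D : ℕ) (β : Fin D → ℝ) (y : ℝ) : ℝ :=
  ∑ j : Fin D, β j * Real.cos (2 * π * ((j : ℕ) + 1) * y)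



lemma trig_zeros (D : ℕ) (b : Fin D → ℝ) (hb : ∃ j, b j ≠ 0) (a : ℝ) :
    {y : ℝ | y ∈ Set.Ico a (a + 1) ∧ trigPoly D b y = 0}.Finite ∧
    {y : ℝ | y ∈ Set.Ico a (a + 1) ∧ trigPoly D b y = 0}.ncard ≤ 2 * D := by
  classical
  set P : Polynomial ℂ :=
    ∑ j : Fin D, Polynomial.C (b j : ℂ) *
      (Polynomial.X ^ (D + (j : ℕ) + 1) - Polynomial.X ^ (D - ((j : ℕ) + 1))) with hPdef
  obtain ⟨j₀, hj₀⟩ := hb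
  have hcoeff : P.coeff (D + (j₀ : ℕ) + 1) = (b j₀ : ℂ) := by
    rw [hPdef, Polynomial.finset_sum_coeff]
    rw [Finset.sum_eq_single j₀]
    · have h1 : D + (j₀ : ℕ) + 1 ≠ D - ((j₀ : ℕ) + 1) := by omega
      simp [Polynomial.coeff_X_pow, h1]
    · intro j _ hj
      have h1 : D + (j : ℕ) + 1 ≠ D + (j₀ : ℕ) + 1 := by
        intro h; apply hj; apply Fin.ext; omega
      have h1' : (j₀ : ℕ) ≠ (j : ℕ) := fun h => hj (Fin.ext h.symm)
      have h2 : D + (j₀ : ℕ) + 1 ≠ D - ((j : ℕ) + 1) := by omega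
      simp [Polynomial.coeff_X_pow, h1', h2]
    · intro h; exact absurd (Finset.mem_univ j₀) h
  have hP0 : P ≠ 0 := by
    intro h
    rw [h, Polynomial.coeff_zero] at hcoeff
    exact hj₀ (by exact_mod_cast hcoeff.symm)
  have hdeg : P.natDegree ≤ 2 * D := by
    apply Polynomial.natDegree_sum_le_of_forall_le
    intro j _
    refine (Polynomial.natDegree_mul_le).trans ?_
    have h1 : (Polynomial.X ^ (D + (j : ℕ) + 1) - Polynomial.X ^ (D - ((j : ℕ) + 1)) :
        Polynomial ℂ).natDegree ≤ 2 * D := by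
      refine (Polynomial.natDegree_sub_le _ _).trans ?_
      simp only [Polynomial.natDegree_X_pow]
      have := j.isLt
      omega
    simp only [Polynomial.natDegree_C]
    omega
  set e : ℝ → ℂ := fun y => Complex.exp (2 * π * y * Complex.I) with he
  have hroot : ∀ y : ℝ, trigPoly D b y = 0 → P.eval (e y) = 0 := by
    intro y hy
    have hz : ∀ n : ℕ, (e y) ^ n = Complex.exp ((n : ℂ) * (2 * π * y * Complex.I)) := by
      intro n; rw [he]; rw [← Complex.exp_nat_mul]
    rw [hPdef, Polynomial.eval_finset_sum]
    have hterm : ∀ j : Fin D,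
        Polynomial.eval (e y) (Polynomial.C (b j : ℂ) *
          (Polynomial.X ^ (D + (j : ℕ) + 1) - Polynomial.X ^ (D - ((j : ℕ) + 1)))) =
        Complex.exp ((D : ℂ) * (2 * π * y * Complex.I)) * (2 * Complex.I) *
          ((b j * Real.sin (2 * π * ((j : ℕ) + 1) * y) : ℝ) : ℂ) := by
      intro j
      have hle : ((j : ℕ) + 1) ≤ D := j.isLt
      simp only [Polynomial.eval_mul, Polynomial.eval_C, Polynomial.eval_sub,
        Polynomial.eval_pow, Polynomial.eval_X]
      rw [hz, hz]
      have c1 : ((D + (j : ℕ) + 1 : ℕ) : ℂ) = (D : ℂ) + ((j : ℕ) + 1 : ℂ) := by push_cast; ring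
      have c2 : ((D - ((j : ℕ) + 1) : ℕ) : ℂ) = (D : ℂ) - ((j : ℕ) + 1 : ℂ) := by
        rw [Nat.cast_sub hle]; push_cast; ring
      rw [c1, c2, add_mul, sub_mul, Complex.exp_add, Complex.exp_sub, div_eq_mul_inv]
      have hsin : Complex.exp ((((j : ℕ) : ℂ) + 1) * (2 * π * y * Complex.I)) -
          (Complex.exp ((((j : ℕ) : ℂ) + 1) * (2 * π * y * Complex.I)))⁻¹ =
          2 * Complex.I * ((Real.sin (2 * π * ((j : ℕ) + 1) * y) : ℝ) : ℂ) := by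
        rw [← Complex.exp_neg]
        have harg : ((((j : ℕ) : ℂ) + 1)) * (2 * π * y * Complex.I) =
            ((2 * π * ((j : ℕ) + 1) * y : ℝ) : ℂ) * Complex.I := by push_cast; ring
        rw [harg, Complex.ofReal_sin, Complex.sin]
        ring_nf
        rw [Complex.I_sq]
        ring
      push_cast
      push_cast at hsin
      linear_combination ((b j : ℂ) *
        Complex.exp ((D : ℂ) * (2 * π * y * Complex.I))) * hsin
    rw [Finset.sum_congr rfl (fun j _ => hterm j)]
    rw [← Finset.mul_sum]
    have : (∑ j : Fin D, ((b j * Real.sin (2 * π * ((j : ℕ) + 1) * y) : ℝ) : ℂ)) = 0 := by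
      rw [← Complex.ofReal_sum]
      rw [show (∑ j : Fin D, b j * Real.sin (2 * π * ((j : ℕ) + 1) * y)) = trigPoly D b y from rfl]
      rw [hy, Complex.ofReal_zero]
    rw [this, mul_zero]
  -- injectivity of e on [a, a+1)
  have hinj : Set.InjOn e (Set.Ico a (a + 1)) := by
    intro y₁ h₁ y₂ h₂ hey
    rw [he] at hey
    simp only at hey
    rw [Complex.exp_eq_exp_iff_exists_int] at hey
    obtain ⟨n, hn⟩ := hey
    have : (2 * π * y₁ : ℂ) * Complex.I = (2 * π * (y₂ + n) : ℂ) * Complex.I := by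
      rw [hn]; push_cast; ring
    have h2 : (2 * π * y₁ : ℂ) = (2 * π * (y₂ + n) : ℂ) :=
      mul_right_cancel₀ Complex.I_ne_zero this
    have h3 : 2 * π * y₁ = 2 * π * (y₂ + n) := by exact_mod_cast h2
    have h4 : y₁ = y₂ + n := by
      have hne : (2 * π : ℝ) ≠ 0 := by positivity
      exact mul_left_cancel₀ hne h3
    have hn0 : (n : ℝ) = 0 := by
      simp only [Set.mem_Ico] at h₁ h₂
      have : |(n : ℝ)| < 1 := by rw [abs_lt]; constructor <;> nlinarith [h₁.1, h₁.2, h₂.1, h₂.2]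
      have : |n| < 1 := by exact_mod_cast this
      have h5 := abs_lt.mp this
      have : n = 0 := by omega
      simp [this]
    rw [h4, hn0, add_zero]
  -- conclude
  set Z := {y : ℝ | y ∈ Set.Ico a (a + 1) ∧ trigPoly D b y = 0} with hZ
  have himg : e '' Z ⊆ (P.roots.toFinset : Set ℂ) := by
    rintro _ ⟨y, ⟨hy1, hy2⟩, rfl⟩
    simp only [Finset.coe_sort_coe, Multiset.mem_toFinset, Finset.mem_coe]
    rw [Polynomial.mem_roots hP0]
    exact hroot y hy2
  have hinjZ : Set.InjOn e Z := hinj.mono (fun y hy => hy.1)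
  have hfin : Z.Finite :=
    Set.Finite.of_finite_image ((P.roots.toFinset.finite_toSet).subset himg) hinjZ
  refine ⟨hfin, ?_⟩
  calc Z.ncard = (e '' Z).ncard := (Set.ncard_image_of_injOn hinjZ).symm
    _ ≤ ((P.roots.toFinset : Set ℂ)).ncard :=
        Set.ncard_le_ncard himg (P.roots.toFinset.finite_toSet)
    _ = P.roots.toFinset.card := by rw [Set.ncard_coe_finset]
    _ ≤ Multiset.card P.roots := Multiset.toFinset_card_le _
    _ ≤ P.natDegree := Polynomial.card_roots' P
    _ ≤ 2 * D := hdeg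



lemma cos_diff_le (A B : ℝ) : |Real.cos A - Real.cos B| ≤ |A - B| := by
  rw [Real.cos_sub_cos]
  rw [abs_mul, abs_mul, abs_neg]
  have h1 : |Real.sin ((A + B) / 2)| ≤ 1 := Real.abs_sin_le_one _
  have h2 : |Real.sin ((A - B) / 2)| ≤ |(A - B) / 2| := Real.abs_sin_le_abs
  have h3 : |(A - B) / 2| = |A - B| / 2 := by rw [abs_div]; norm_num
  calc |(2 : ℝ)| * |Real.sin ((A + B) / 2)| * |Real.sin ((A - B) / 2)|
      ≤ 2 * 1 * (|A - B| / 2) := by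
        rw [abs_two]
        gcongr
        rw [← h3]; exact h2
    _ = |A - B| := by ring

lemma gfun_lip (D : ℕ) (β : Fin D → ℝ) (hβ : ∑ j, |β j| = 1) (u v : ℝ) :
    |gfun D β u - gfun D β v| ≤ 2 * π * D * |u - v| := by
  have hpi := Real.pi_pos
  rw [gfun, gfun, ← Finset.sum_sub_distrib]
  refine (Finset.abs_sum_le_sum_abs _ _).trans ?_
  have hterm : ∀ j : Fin D,
      |β j * Real.cos (2 * π * ((j : ℕ) + 1) * u) - β j * Real.cos (2 * π * ((j : ℕ) + 1) * v)|
        ≤ |β j| * (2 * π * D * |u - v|) := by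
    intro j
    rw [← mul_sub, abs_mul]
    have h1 := cos_diff_le (2 * π * ((j : ℕ) + 1) * u) (2 * π * ((j : ℕ) + 1) * v)
    have h2 : |2 * π * ((j : ℕ) + 1) * u - 2 * π * ((j : ℕ) + 1) * v|
        = 2 * π * ((j : ℕ) + 1) * |u - v| := by
      rw [← mul_sub, abs_mul]
      congr 1
      rw [abs_of_pos]; positivity
    have h3 : ((j : ℕ) + 1 : ℝ) ≤ D := by
      have := j.isLt; exact_mod_cast Nat.succ_le_of_lt this
    have h4 : |Real.cos (2 * π * ((j : ℕ) + 1) * u) - Real.cos (2 * π * ((j : ℕ) + 1) * v)|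
        ≤ 2 * π * D * |u - v| := by
      refine h1.trans ?_
      rw [h2]
      gcongr
    gcongr
  refine (Finset.sum_le_sum fun j _ => hterm j).trans ?_
  rw [← Finset.sum_mul, hβ, one_mul]

lemma gfun_hasDerivAt (D : ℕ) (β : Fin D → ℝ) (y : ℝ) :
    HasDerivAt (gfun D β) (-(2 * π) * trigPoly D (fun j => ((j : ℕ) + 1) * β j) y) y := by
  have H : ∀ j : Fin D, HasDerivAt (fun y => β j * Real.cos (2 * π * ((j : ℕ) + 1) * y))
      (β j * (-Real.sin (2 * π * ((j : ℕ) + 1) * y) * (2 * π * ((j : ℕ) + 1)))) y := by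
    intro j
    have h0 : HasDerivAt (fun y : ℝ => 2 * π * ((j : ℕ) + 1) * y) (2 * π * ((j : ℕ) + 1)) y := by
      simpa using (hasDerivAt_id y).const_mul (2 * π * ((j : ℕ) + 1))
    exact (h0.cos).const_mul (β j)
  have hsum : HasDerivAt (gfun D β)
      (∑ j : Fin D, β j * (-Real.sin (2 * π * ((j : ℕ) + 1) * y) * (2 * π * ((j : ℕ) + 1)))) y :=
    HasDerivAt.fun_sum (fun j (_ : j ∈ Finset.univ) => H j)
  convert hsum using 1
  rw [trigPoly, Finset.mul_sum]
  apply Finset.sum_congr rfl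
  intro j _
  ring


lemma floor_sep {x z : ℝ} (h : ⌊x⌋ ≠ ⌊z⌋) :
    ∃ n : ℤ, (x < n ∧ (n : ℝ) ≤ z) ∨ (z < n ∧ (n : ℝ) ≤ x) := by
  rcases h.lt_or_gt with hlt | hlt
  · refine ⟨⌊z⌋, Or.inl ⟨?_, Int.floor_le z⟩⟩
    have h1 := Int.lt_floor_add_one x
    have h2 : (⌊x⌋ : ℝ) + 1 ≤ (⌊z⌋ : ℝ) := by exact_mod_cast hlt
    linarith
  · refine ⟨⌊x⌋, Or.inr ⟨?_, Int.floor_le x⟩⟩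
    have h1 := Int.lt_floor_add_one z
    have h2 : (⌊z⌋ : ℝ) + 1 ≤ (⌊x⌋ : ℝ) := by exact_mod_cast hlt
    linarith

lemma bad_imp_crit (D : ℕ) (β : Fin D → ℝ) (hβ : ∑ j, |β j| = 1)
    (M₂ : ℕ) (hM₂pos : 1 ≤ M₂) (ε : ℝ) (hε : 0 < ε)
    (hsmall : 2 * π * D * ε * (M₂ : ℝ) < 1 / 4)
    (y δ δ' : ℝ) (hδ0 : 0 < δ) (hδε : δ < ε) (hδ'0 : 0 < δ') (hδ'ε : δ' < ε)
    (h1 : ⌊gfun D β (y - δ) * M₂⌋ ≠ ⌊gfun D β y * M₂⌋)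
    (h2 : ⌊gfun D β (y + δ') * M₂⌋ ≠ ⌊gfun D β y * M₂⌋) :
    ∃ yc ∈ Set.Ioo (y - ε) (y + ε),
      trigPoly D (fun j => ((j : ℕ) + 1) * β j) yc = 0 := by
  have hpi := Real.pi_pos
  have hM₂R : (0 : ℝ) < M₂ := by exact_mod_cast hM₂pos
  set a := gfun D β (y - δ) * M₂ with ha_def
  set bb := gfun D β y * M₂ with hbb_def
  set a' := gfun D β (y + δ') * M₂ with ha'_def
  have hDnn : (0:ℝ) ≤ 2 * π * D := by positivity
  have hab : |a - bb| < 1 / 4 := by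
    rw [ha_def, hbb_def, ← sub_mul, abs_mul, abs_of_pos hM₂R]
    have := gfun_lip D β hβ (y - δ) y
    have habs : |y - δ - y| = δ := by rw [show y - δ - y = -δ by ring, abs_neg, abs_of_pos hδ0]
    rw [habs] at this
    calc |gfun D β (y - δ) - gfun D β y| * M₂ ≤ (2 * π * D * δ) * M₂ := by gcongr
      _ ≤ (2 * π * D * ε) * M₂ := by gcongr
      _ < 1 / 4 := by linarith [hsmall]
  have ha'b : |a' - bb| < 1 / 4 := by
    rw [ha'_def, hbb_def, ← sub_mul, abs_mul, abs_of_pos hM₂R]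
    have := gfun_lip D β hβ (y + δ') y
    have habs : |y + δ' - y| = δ' := by rw [show y + δ' - y = δ' by ring, abs_of_pos hδ'0]
    rw [habs] at this
    calc |gfun D β (y + δ') - gfun D β y| * M₂ ≤ (2 * π * D * δ') * M₂ := by gcongr
      _ ≤ (2 * π * D * ε) * M₂ := by gcongr
      _ < 1 / 4 := by linarith [hsmall]
  obtain ⟨n, hn⟩ := floor_sep h1
  obtain ⟨n', hn'⟩ := floor_sep h2
  have hnb : |(n : ℝ) - bb| ≤ 1 / 4 := by
    rcases hn with ⟨hx, hz⟩ | ⟨hx, hz⟩ <;> rw [abs_le] <;> rw [abs_lt] at hab <;>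
      constructor <;> linarith
  have hn'b : |(n' : ℝ) - bb| ≤ 1 / 4 := by
    rcases hn' with ⟨hx, hz⟩ | ⟨hx, hz⟩ <;> rw [abs_le] <;> rw [abs_lt] at ha'b <;>
      constructor <;> linarith
  have hnn' : n = n' := by
    have : |(n : ℝ) - (n' : ℝ)| < 1 := by
      rw [abs_le] at hnb hn'b
      rw [abs_lt]; constructor <;> linarith
    have : |n - n'| < 1 := by exact_mod_cast (by push_cast; exact this : |((n - n' : ℤ) : ℝ)| < 1)
    have h5 := abs_lt.mp this
    omega
  subst hnn'
  have hdiff : Differentiable ℝ (gfun D β) := fun y => (gfun_hasDerivAt D β y).differentiableAt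
  have hcont : Continuous (gfun D β) := hdiff.continuous
  have hIcc : (Set.Icc (y - δ) (y + δ')).Nonempty := ⟨y, by constructor <;> linarith⟩
  rcases le_or_gt (n : ℝ) bb with hcase | hcase
  · -- interior maximum
    have haltb : a < bb := by
      rcases hn with ⟨hx, hz⟩ | ⟨hx, hz⟩
      · linarith
      · linarith
    have ha'ltb : a' < bb := by
      rcases hn' with ⟨hx, hz⟩ | ⟨hx, hz⟩
      · linarith
      · linarith
    have hga : gfun D β (y - δ) < gfun D β y := by
      rw [ha_def, hbb_def] at haltb
      exact lt_of_mul_lt_mul_right haltb hM₂R.le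
    have hga' : gfun D β (y + δ') < gfun D β y := by
      rw [ha'_def, hbb_def] at ha'ltb
      exact lt_of_mul_lt_mul_right ha'ltb hM₂R.le
    obtain ⟨yc, hycmem, hmax⟩ := isCompact_Icc.exists_isMaxOn hIcc hcont.continuousOn
    have hyval : gfun D β y ≤ gfun D β yc := hmax ⟨by linarith, by linarith⟩
    have hyc1 : y - δ < yc := by
      rcases lt_or_eq_of_le hycmem.1 with h | h
      · exact h
      · exfalso; rw [← h] at hyval; linarith
    have hyc2 : yc < y + δ' := by
      rcases lt_or_eq_of_le hycmem.2 with h | h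
      · exact h
      · exfalso; rw [h] at hyval; linarith
    have hloc : IsLocalMax (gfun D β) yc := hmax.isLocalMax (Icc_mem_nhds hyc1 hyc2)
    have hderiv0 : deriv (gfun D β) yc = 0 := hloc.deriv_eq_zero
    have hderiv := (gfun_hasDerivAt D β yc).deriv
    rw [hderiv0] at hderiv
    have htp : trigPoly D (fun j => ((j : ℕ) + 1) * β j) yc = 0 := by
      rcases mul_eq_zero.mp hderiv.symm with h | h
      · exfalso; have : (2 * π : ℝ) ≠ 0 := by positivity
        exact this (by linarith [neg_eq_zero.mp h])
      · exact h
    exact ⟨yc, ⟨by linarith, by linarith⟩, htp⟩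
  · -- interior minimum
    have haltb : bb < a := by
      rcases hn with ⟨hx, hz⟩ | ⟨hx, hz⟩
      · linarith
      · linarith
    have ha'ltb : bb < a' := by
      rcases hn' with ⟨hx, hz⟩ | ⟨hx, hz⟩
      · linarith
      · linarith
    have hga : gfun D β y < gfun D β (y - δ) := by
      rw [ha_def, hbb_def] at haltb
      exact lt_of_mul_lt_mul_right haltb hM₂R.le
    have hga' : gfun D β y < gfun D β (y + δ') := by
      rw [ha'_def, hbb_def] at ha'ltb
      exact lt_of_mul_lt_mul_right ha'ltb hM₂R.le
    obtain ⟨yc, hycmem, hmin⟩ := isCompact_Icc.exists_isMinOn hIcc hcont.continuousOn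
    have hyval : gfun D β yc ≤ gfun D β y := hmin ⟨by linarith, by linarith⟩
    have hyc1 : y - δ < yc := by
      rcases lt_or_eq_of_le hycmem.1 with h | h
      · exact h
      · exfalso; rw [← h] at hyval; linarith
    have hyc2 : yc < y + δ' := by
      rcases lt_or_eq_of_le hycmem.2 with h | h
      · exact h
      · exfalso; rw [h] at hyval; linarith
    have hloc : IsLocalMin (gfun D β) yc := hmin.isLocalMin (Icc_mem_nhds hyc1 hyc2)
    have hderiv0 : deriv (gfun D β) yc = 0 := hloc.deriv_eq_zero
    have hderiv := (gfun_hasDerivAt D β yc).deriv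
    rw [hderiv0] at hderiv
    have htp : trigPoly D (fun j => ((j : ℕ) + 1) * β j) yc = 0 := by
      rcases mul_eq_zero.mp hderiv.symm with h | h
      · exfalso; have : (2 * π : ℝ) ≠ 0 := by positivity
        exact this (by linarith [neg_eq_zero.mp h])
      · exact h
    exact ⟨yc, ⟨by linarith, by linarith⟩, htp⟩




lemma gfun_period (D : ℕ) (β : Fin D → ℝ) (x : ℝ) (ℓ : ℤ) :
    gfun D β (x + ℓ) = gfun D β x := by
  unfold gfun
  refine Finset.sum_congr rfl fun j _ => ?_
  congr 1
  have h : 2 * π * ((j : ℕ) + 1) * (x + ℓ) =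
      2 * π * ((j : ℕ) + 1) * x + ((((j : ℕ) + 1 : ℤ) * ℓ : ℤ) : ℝ) * (2 * π) := by
    push_cast; ring
  rw [h, Real.cos_add_int_mul_two_pi]

open Classical in
/-- Discretization in the general case: with `g̃(y) = Σ_{j=1}^D β_j cos(2πjy)`,
`Σ|β_j| = 1`, `0 < w* ≤ R_w`, `M₁ ≥ 70π d D³ R_w` and `M₂ = c M₁` an integer with
`0 < c < 1/(8π D R_w)`, the function `h(k) = ⌊g(k/M₁)⌋_{M₂}` (where
`g(x) = g̃(x w*)`) is `(33/35)`-pseudoperiodic with period `M₁/w*`. -/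
theorem stmt7 (d D : ℕ) (hd : 1 ≤ d) (hD : 1 ≤ D) (R_w : ℝ) (hRw : 0 < R_w)
    (β : Fin D → ℝ) (hβ : ∑ j, |β j| = 1)
    (wst : ℝ) (hwst : 0 < wst) (hwstR : wst ≤ R_w)
    (M₁ : ℕ) (hM₁ : 70 * π * d * D ^ 3 * R_w ≤ (M₁ : ℝ))
    (c : ℝ) (hc0 : 0 < c) (hc : c < 1 / (8 * π * D * R_w))
    (M₂ : ℕ) (hM₂pos : 1 ≤ M₂) (hM₂ : (M₂ : ℝ) = c * M₁) :
    (33 / 35 : ℝ) * ((Finset.Icc (0 : ℤ) ⌊(M₁ : ℝ) / wst⌋).card : ℝ) ≤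
      (((Finset.Icc (0 : ℤ) ⌊(M₁ : ℝ) / wst⌋).filter fun k =>
          ∀ ℓ : ℤ,
            floorMul M₂ (∑ j : Fin D, β j *
                Real.cos (2 * π * ((j : ℕ) + 1) * (((k + ⌊ℓ * ((M₁ : ℝ) / wst)⌋ : ℤ) : ℝ) / M₁ * wst)))
              = floorMul M₂ (∑ j : Fin D, β j *
                  Real.cos (2 * π * ((j : ℕ) + 1) * (((k : ℤ) : ℝ) / M₁ * wst))) ∨
            floorMul M₂ (∑ j : Fin D, β j *
                Real.cos (2 * π * ((j : ℕ) + 1) * (((k + ⌈ℓ * ((M₁ : ℝ) / wst)⌉ : ℤ) : ℝ) / M₁ * wst)))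
              = floorMul M₂ (∑ j : Fin D, β j *
                  Real.cos (2 * π * ((j : ℕ) + 1) * (((k : ℤ) : ℝ) / M₁ * wst)))).card : ℝ) := by
  classical
  have hpi := Real.pi_pos
  have hpi3 : (3 : ℝ) < π := Real.pi_gt_three
  have hd1 : (1 : ℝ) ≤ d := by exact_mod_cast hd
  have hD1 : (1 : ℝ) ≤ D := by exact_mod_cast hD
  have hD0 : (0 : ℝ) ≤ D := by linarith
  have hD2 : (1 : ℝ) ≤ (D : ℝ) ^ 2 := by nlinarith
  have hD3 : (D : ℝ) ≤ (D : ℝ) ^ 3 := by nlinarith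
  have hM₁pos : (0 : ℝ) < M₁ := by
    have hd0 : (0 : ℝ) < d := by linarith
    have hD30 : (0 : ℝ) < (D : ℝ) ^ 3 := by nlinarith
    have : (0 : ℝ) < 70 * π * (d : ℝ) * (D : ℝ) ^ 3 * R_w :=
      mul_pos (mul_pos (mul_pos (mul_pos (by norm_num) hpi) hd0) hD30) hRw
    linarith
  have hM₁ne : (M₁ : ℝ) ≠ 0 := ne_of_gt hM₁pos
  have hM₂R : (0 : ℝ) < M₂ := by exact_mod_cast hM₂pos
  set S : ℝ := (M₁ : ℝ) / wst with hSdef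
  set ε : ℝ := wst / M₁ with hεdef
  have hεpos : 0 < ε := by rw [hεdef]; positivity
  have hSε : S * ε = 1 := by rw [hSdef, hεdef]; field_simp
  have hSpos : 0 < S := by rw [hSdef]; positivity
  have hSge : 70 * π * (d : ℝ) * (D : ℝ) ^ 3 ≤ S := by
    rw [hSdef, le_div_iff₀ hwst]
    calc 70 * π * (d : ℝ) * (D : ℝ) ^ 3 * wst
        ≤ 70 * π * (d : ℝ) * (D : ℝ) ^ 3 * R_w := by
          refine mul_le_mul_of_nonneg_left hwstR ?_
          positivity
      _ ≤ (M₁ : ℝ) := hM₁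
  have h140 : 140 * (D : ℝ) ≤ S := by
    have a0 : (1 : ℝ) * (D : ℝ) ≤ (d : ℝ) * (D : ℝ) ^ 3 := mul_le_mul hd1 hD3 hD0 (by linarith)
    have a1 : 70 * π * ((1 : ℝ) * (D : ℝ)) ≤ 70 * π * ((d : ℝ) * (D : ℝ) ^ 3) := by
      refine mul_le_mul_of_nonneg_left a0 ?_; positivity
    have a2 : 140 * (D : ℝ) ≤ 70 * π * ((1 : ℝ) * (D : ℝ)) := by
      have : (0 : ℝ) ≤ (70 * π - 140) * (D : ℝ) := mul_nonneg (by linarith) hD0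
      nlinarith
    calc 140 * (D : ℝ) ≤ 70 * π * ((d : ℝ) * (D : ℝ) ^ 3) := by linarith
      _ = 70 * π * (d : ℝ) * (D : ℝ) ^ 3 := by ring
      _ ≤ S := hSge
  have h2S : (2 : ℝ) ≤ S := by linarith
  have hεle : ε ≤ 1 / 2 := by
    have h := mul_le_mul_of_nonneg_right h2S hεpos.le
    rw [hSε] at h
    linarith
  have hsmall : 2 * π * D * ε * (M₂ : ℝ) < 1 / 4 := by
    have hεM₂ : ε * M₂ = wst * c := by rw [hεdef, hM₂]; field_simp
    have h8 : (0 : ℝ) < 8 * π * D * R_w := by positivity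
    have hc8 : c * (8 * π * D * R_w) < 1 := by
      rw [lt_div_iff₀ h8] at hc; linarith
    have hre : 2 * π * D * ε * (M₂ : ℝ) = 2 * π * (D : ℝ) * (wst * c) := by
      rw [mul_assoc (2 * π * (D : ℝ)) ε ((M₂ : ℝ)), hεM₂]
    rw [hre]
    have b1 : 2 * π * (D : ℝ) * (wst * c) ≤ 2 * π * (D : ℝ) * (R_w * c) := by
      refine mul_le_mul_of_nonneg_left ?_ (by positivity)
      exact mul_le_mul_of_nonneg_right hwstR hc0.le
    have b2 : 2 * π * (D : ℝ) * (R_w * c) = c * (8 * π * D * R_w) / 4 := by ring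
    linarith
  -- the zero sets
  set bfun : Fin D → ℝ := fun j => ((j : ℕ) + 1) * β j with hbfun
  have hbne : ∃ j, bfun j ≠ 0 := by
    by_contra h
    push_neg at h
    have hβ0 : ∀ j, β j = 0 := by
      intro j
      have hj := h j
      rw [hbfun] at hj
      simp only at hj
      rcases mul_eq_zero.mp hj with h' | h'
      · exfalso
        have : (0:ℝ) < ((j : ℕ) : ℝ) + 1 := by positivity
        linarith
      · exact h'
    rw [Finset.sum_congr rfl (fun j _ => by rw [hβ0 j, abs_zero])] at hβ
    simp at hβ
  obtain ⟨hfin1, hcard1⟩ := trig_zeros D bfun hbne (-ε)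
  obtain ⟨hfin2, hcard2⟩ := trig_zeros D bfun hbne (1 - ε)
  set ZF : Finset ℝ := hfin1.toFinset ∪ hfin2.toFinset with hZF
  have hZFcard : ZF.card ≤ 4 * D := by
    refine (Finset.card_union_le _ _).trans ?_
    rw [← Set.ncard_eq_toFinset_card _ hfin1, ← Set.ncard_eq_toFinset_card _ hfin2]
    omega
  -- membership in ZF from critical points
  have hZFmem : ∀ y : ℝ, -ε ≤ y → y < 2 - ε → trigPoly D bfun y = 0 → y ∈ ZF := by
    intro y hy1 hy2 hy0
    rw [hZF, Finset.mem_union]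
    rcases lt_or_ge y (1 - ε) with h | h
    · left
      rw [Set.Finite.mem_toFinset]
      exact ⟨⟨hy1, by linarith⟩, hy0⟩
    · right
      rw [Set.Finite.mem_toFinset]
      exact ⟨⟨h, by linarith⟩, hy0⟩
  -- the key: bad k gives a nearby zero of trigPoly
  have keyk : ∀ k : ℤ, k ∈ Finset.Icc (0 : ℤ) ⌊S⌋ →
      ¬ (∀ ℓ : ℤ,
          floorMul M₂ (gfun D β (((k + ⌊(ℓ : ℝ) * S⌋ : ℤ) : ℝ) / M₁ * wst))
            = floorMul M₂ (gfun D β (((k : ℤ) : ℝ) / M₁ * wst)) ∨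
          floorMul M₂ (gfun D β (((k + ⌈(ℓ : ℝ) * S⌉ : ℤ) : ℝ) / M₁ * wst))
            = floorMul M₂ (gfun D β (((k : ℤ) : ℝ) / M₁ * wst))) →
      ∃ y, y ∈ ZF ∧ |y - k * ε| < ε := by
    intro k hk hbad
    push_neg at hbad
    obtain ⟨ℓ, hne1, hne2⟩ := hbad
    rw [Finset.mem_Icc] at hk
    have hk0 : (0 : ℝ) ≤ (k : ℝ) := by exact_mod_cast hk.1
    have hkS : (k : ℝ) ≤ S := le_trans (by exact_mod_cast hk.2) (Int.floor_le S)
    have hkε1 : (k : ℝ) * ε ≤ 1 := by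
      have := mul_le_mul_of_nonneg_right hkS hεpos.le
      linarith [hSε]
    have hkε0 : (0 : ℝ) ≤ (k : ℝ) * ε := mul_nonneg hk0 hεpos.le
    have harg0 : ((k : ℤ) : ℝ) / M₁ * wst = (k : ℝ) * ε := by
      rw [hεdef]; push_cast; ring
    set θ : ℝ := Int.fract ((ℓ : ℝ) * S) with hθdef
    have hθ0 : 0 ≤ θ := Int.fract_nonneg _
    have hθ1 : θ < 1 := Int.fract_lt_one _
    have hfloor : (⌊(ℓ : ℝ) * S⌋ : ℝ) = (ℓ : ℝ) * S - θ := by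
      rw [hθdef, Int.fract]; ring
    have harg1 : ((k + ⌊(ℓ : ℝ) * S⌋ : ℤ) : ℝ) / M₁ * wst = ((k : ℝ) * ε - θ * ε) + ℓ := by
      have e1 : ((k + ⌊(ℓ : ℝ) * S⌋ : ℤ) : ℝ) / M₁ * wst = ((k : ℝ) + (⌊(ℓ : ℝ) * S⌋ : ℝ)) * ε := by
        rw [hεdef]; push_cast; ring
      rw [e1, hfloor]
      linear_combination (ℓ : ℝ) * hSε
    by_cases hθz : θ = 0
    · exfalso
      apply hne1
      have : ((k + ⌊(ℓ : ℝ) * S⌋ : ℤ) : ℝ) / M₁ * wst = (k : ℝ) * ε + ℓ := by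
        rw [harg1, hθz]; ring
      rw [this, gfun_period, harg0]
    · have hθpos : 0 < θ := lt_of_le_of_ne hθ0 (Ne.symm hθz)
      have hceil : (⌈(ℓ : ℝ) * S⌉ : ℤ) = ⌊(ℓ : ℝ) * S⌋ + 1 := by
        have hle := Int.ceil_le_floor_add_one ((ℓ : ℝ) * S)
        have hlt : ⌊(ℓ : ℝ) * S⌋ < ⌈(ℓ : ℝ) * S⌉ := by
          by_contra hcon
          push_neg at hcon
          have h1 : ((ℓ : ℝ) * S) ≤ (⌈(ℓ : ℝ) * S⌉ : ℝ) := Int.le_ceil _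
          have h2 : ((⌈(ℓ : ℝ) * S⌉ : ℤ) : ℝ) ≤ ((⌊(ℓ : ℝ) * S⌋ : ℤ) : ℝ) := by exact_mod_cast hcon
          have h3 : ((⌊(ℓ : ℝ) * S⌋ : ℤ) : ℝ) ≤ (ℓ : ℝ) * S := Int.floor_le _
          apply hθz
          rw [hθdef, Int.fract]
          linarith
        omega
      have harg2 : ((k + ⌈(ℓ : ℝ) * S⌉ : ℤ) : ℝ) / M₁ * wst = ((k : ℝ) * ε + (1 - θ) * ε) + ℓ := by
        have e1 : ((k + ⌈(ℓ : ℝ) * S⌉ : ℤ) : ℝ) / M₁ * wst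
            = ((k : ℝ) + ((⌊(ℓ : ℝ) * S⌋ : ℝ) + 1)) * ε := by
          rw [hceil]; rw [hεdef]; push_cast; ring
        rw [e1, hfloor]
        linear_combination (ℓ : ℝ) * hSε
      rw [harg1, gfun_period, harg0] at hne1
      rw [harg2, gfun_period, harg0] at hne2
      have hf1 : ⌊gfun D β ((k : ℝ) * ε - θ * ε) * M₂⌋ ≠ ⌊gfun D β ((k : ℝ) * ε) * M₂⌋ := by
        intro h
        apply hne1
        unfold floorMul
        rw [h]
      have hf2 : ⌊gfun D β ((k : ℝ) * ε + (1 - θ) * ε) * M₂⌋ ≠ ⌊gfun D β ((k : ℝ) * ε) * M₂⌋ := by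
        intro h
        apply hne2
        unfold floorMul
        rw [h]
      obtain ⟨yc, hycmem, hyc0⟩ := bad_imp_crit D β hβ M₂ hM₂pos ε hεpos hsmall
        ((k : ℝ) * ε) (θ * ε) ((1 - θ) * ε)
        (mul_pos hθpos hεpos)
        (by nlinarith)
        (mul_pos (by linarith) hεpos)
        (by nlinarith)
        hf1 hf2
      refine ⟨yc, hZFmem yc ?_ ?_ hyc0, ?_⟩
      · have := hycmem.1; linarith
      · have := hycmem.2; linarith
      · rw [abs_lt]; exact ⟨by linarith [hycmem.1], by linarith [hycmem.2]⟩
  -- counting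
  set P : ℤ → Prop := fun k =>
    ∀ ℓ : ℤ,
      floorMul M₂ (gfun D β (((k + ⌊(ℓ : ℝ) * S⌋ : ℤ) : ℝ) / M₁ * wst))
        = floorMul M₂ (gfun D β (((k : ℤ) : ℝ) / M₁ * wst)) ∨
      floorMul M₂ (gfun D β (((k + ⌈(ℓ : ℝ) * S⌉ : ℤ) : ℝ) / M₁ * wst))
        = floorMul M₂ (gfun D β (((k : ℤ) : ℝ) / M₁ * wst)) with hPdef
  set B : Finset ℤ := (Finset.Icc (0 : ℤ) ⌊S⌋).filter (fun k => ¬ P k) with hBdef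
  set f : ℤ → ℝ := fun k =>
    if h : ∃ y, y ∈ ZF ∧ |y - (k : ℝ) * ε| < ε then h.choose else 0 with hfdef
  have hmaps : ∀ k ∈ B, f k ∈ ZF := by
    intro k hkB
    rw [hBdef, Finset.mem_filter] at hkB
    obtain ⟨y0, hy0⟩ := keyk k hkB.1 hkB.2
    have hex : ∃ y, y ∈ ZF ∧ |y - (k : ℝ) * ε| < ε := ⟨y0, hy0⟩
    have : f k = hex.choose := by rw [hfdef]; exact dif_pos hex
    rw [this]
    exact hex.choose_spec.1
  have hfib : ∀ b ∈ ZF, (B.filter fun k => f k = b).card ≤ 2 := by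
    intro b hb
    have hsub : (B.filter fun k => f k = b) ⊆ Finset.Icc ⌊b / ε⌋ (⌊b / ε⌋ + 1) := by
      intro k hkf
      rw [Finset.mem_filter] at hkf
      obtain ⟨hkB, hfk⟩ := hkf
      have hkB' := hkB
      rw [hBdef, Finset.mem_filter] at hkB'
      obtain ⟨y0, hy0⟩ := keyk k hkB'.1 hkB'.2
      have hex : ∃ y, y ∈ ZF ∧ |y - (k : ℝ) * ε| < ε := ⟨y0, hy0⟩
      have hfk' : f k = hex.choose := by rw [hfdef]; exact dif_pos hex
      have hspec := hex.choose_spec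
      rw [hfk] at hfk'
      have hdist : |b - (k : ℝ) * ε| < ε := by rw [hfk']; exact hspec.2
      rw [abs_lt] at hdist
      rw [Finset.mem_Icc]
      constructor
      · by_contra hcon
        push_neg at hcon
        have h1 : ((k : ℝ)) + 1 ≤ (⌊b / ε⌋ : ℝ) := by
          have : k + 1 ≤ ⌊b / ε⌋ := hcon
          exact_mod_cast this
        have h2 : (⌊b / ε⌋ : ℝ) ≤ b / ε := Int.floor_le _
        have h3 : b / ε < (k : ℝ) + 1 := by
          rw [div_lt_iff₀ hεpos]
          nlinarith [hdist.2]
        linarith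
      · by_contra hcon
        push_neg at hcon
        have h1 : ((⌊b / ε⌋ : ℝ)) + 2 ≤ (k : ℝ) := by
          have : ⌊b / ε⌋ + 2 ≤ k := by omega
          exact_mod_cast this
        have h2 : b / ε < (⌊b / ε⌋ : ℝ) + 1 := Int.lt_floor_add_one _
        have h3 : (k : ℝ) - 1 < b / ε := by
          rw [lt_div_iff₀ hεpos]
          nlinarith [hdist.1]
        linarith
    refine (Finset.card_le_card hsub).trans ?_
    rw [Int.card_Icc]
    omega
  have hBcard : B.card ≤ 2 * ZF.card :=
    Finset.card_le_mul_card_image_of_maps_to hmaps 2 hfib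
  have hB8 : B.card ≤ 8 * D := by omega
  have hfloorS0 : 0 ≤ ⌊S⌋ := Int.floor_nonneg.mpr hSpos.le
  have hNcard : ((Finset.Icc (0 : ℤ) ⌊S⌋).card : ℝ) = (⌊S⌋ : ℝ) + 1 := by
    rw [Int.card_Icc]
    have h1 : (⌊S⌋ + 1 - 0).toNat = (⌊S⌋ + 1).toNat := by omega
    rw [h1]
    have h2 : ((⌊S⌋ + 1).toNat : ℤ) = ⌊S⌋ + 1 := Int.toNat_of_nonneg (by omega)
    have h3 : (((⌊S⌋ + 1).toNat : ℤ) : ℝ) = ((⌊S⌋ : ℝ) + 1) := by rw [h2]; push_cast; ring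
    exact_mod_cast h3
  have hNR : S ≤ ((Finset.Icc (0 : ℤ) ⌊S⌋).card : ℝ) := by
    rw [hNcard]
    linarith [Int.lt_floor_add_one S]
  have hsplit : ((Finset.Icc (0 : ℤ) ⌊S⌋).filter P).card + B.card
      = (Finset.Icc (0 : ℤ) ⌊S⌋).card := by
    rw [hBdef]
    exact Finset.card_filter_add_card_filter_not P
  have hfinal : (33 / 35 : ℝ) * ((Finset.Icc (0 : ℤ) ⌊S⌋).card : ℝ)
      ≤ (((Finset.Icc (0 : ℤ) ⌊S⌋).filter P).card : ℝ) := by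
    have hBR : (B.card : ℝ) ≤ 8 * D := by exact_mod_cast hB8
    have hsumR : (((Finset.Icc (0 : ℤ) ⌊S⌋).filter P).card : ℝ) + (B.card : ℝ)
        = ((Finset.Icc (0 : ℤ) ⌊S⌋).card : ℝ) := by exact_mod_cast hsplit
    have hcard_ge : 140 * (D : ℝ) ≤ ((Finset.Icc (0 : ℤ) ⌊S⌋).card : ℝ) := le_trans h140 hNR
    linarith
  exact hfinal
end

section
/- Let d, D ≥ 1 be integers, R_w > 0, R ≥ 1 an integer, and ε₁ > 0 with √d·ε₁ < R_w. Let w* ∈ ℝ^d with ‖w*‖₂ = R_w and let ŵ ∈ ℝ^d with ‖ŵ − w*‖_∞ ≤ ε₁. Let j, j' be integers with 1 ≤ j, j' ≤ D and j ≠ j'. Then | (2R)^{−d} ∫_{[−R,R]^d} exp( 2πi ⟨x, ŵ⟩ (j − j') ) dx | ≤ (1/(2πR)) · √d / (R_w − √d·ε₁). -/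
open MeasureTheory Real
open scoped BigOperators

set_option maxHeartbeats 2000000 in
/-- Complex-exponential integral bound: the average of `exp(2πi⟨x,ŵ⟩(j−j'))` over
the cube `[-R,R]^d` has modulus at most `(1/(2πR)) √d / (R_w − √d ε₁)`. -/
theorem stmt10 (d D : ℕ) (hd : 1 ≤ d) (hD : 1 ≤ D) (R_w : ℝ) (hRw : 0 < R_w)
    (R : ℕ) (hR : 1 ≤ R) (ε₁ : ℝ) (hε₁ : 0 < ε₁)
    (hεR : Real.sqrt d * ε₁ < R_w)
    (wst wh : Fin d → ℝ)
    (hw : Real.sqrt (∑ i, wst i ^ 2) = R_w)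
    (hclose : ∀ i, |wh i - wst i| ≤ ε₁)
    (j j' : ℕ) (hj1 : 1 ≤ j) (hjD : j ≤ D) (hj'1 : 1 ≤ j') (hj'D : j' ≤ D)
    (hne : j ≠ j') :
    ‖((1 / (2 * (R : ℝ)) ^ d : ℝ) : ℂ) *
        ∫ x in Set.univ.pi fun _ : Fin d => Set.Icc (-(R : ℝ)) (R : ℝ),
          Complex.exp (2 * (π : ℂ) * Complex.I *
            (((∑ i, x i * wh i) * ((j : ℝ) - (j' : ℝ)) : ℝ) : ℂ))‖
      ≤ (1 / (2 * π * R)) * Real.sqrt d / (R_w - Real.sqrt d * ε₁) := by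
  have hπ : (0 : ℝ) < π := Real.pi_pos
  have hR' : (0 : ℝ) < R := by exact_mod_cast hR
  have hd' : (0 : ℝ) < d := by exact_mod_cast hd
  have hsd : (0 : ℝ) < Real.sqrt d := Real.sqrt_pos.mpr hd'
  have hA0 : (0 : ℝ) < R_w - Real.sqrt d * ε₁ := sub_pos.mpr hεR
  set k : ℝ := (j : ℝ) - (j' : ℝ) with hkdef
  have hk : k ≠ 0 := sub_ne_zero.mpr (by exact_mod_cast hne)
  have hk1 : 1 ≤ |k| := by
    have h : (j : ℤ) ≠ (j' : ℤ) := by exact_mod_cast hne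
    have h1 : 1 ≤ |(j : ℤ) - (j' : ℤ)| := Int.one_le_abs (sub_ne_zero.mpr h)
    have : ((1 : ℤ) : ℝ) ≤ ((|(j : ℤ) - (j' : ℤ)| : ℤ) : ℝ) := by exact_mod_cast h1
    simpa [hkdef] using this
  -- choose a coordinate of maximal absolute value
  obtain ⟨i0, -, hi0⟩ := Finset.exists_max_image Finset.univ (fun i => |wh i|)
    (Finset.univ_nonempty_iff.mpr ⟨⟨0, hd⟩⟩)
  -- lower bound on `‖wh‖₂`
  have hnorm : R_w - Real.sqrt d * ε₁ ≤ Real.sqrt (∑ i, wh i ^ 2) := by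
    set u : EuclideanSpace ℝ (Fin d) := (WithLp.equiv 2 _).symm wh
    set v : EuclideanSpace ℝ (Fin d) := (WithLp.equiv 2 _).symm wst
    have hu : ‖u‖ = Real.sqrt (∑ i, wh i ^ 2) := by
      rw [EuclideanSpace.norm_eq]
      simp [u, Real.norm_eq_abs, sq_abs]
    have hv : ‖v‖ = R_w := by
      rw [EuclideanSpace.norm_eq, ← hw]
      simp [v, Real.norm_eq_abs, sq_abs]
    have huv : ‖u - v‖ ≤ Real.sqrt d * ε₁ := by
      rw [EuclideanSpace.norm_eq]
      have : (∑ i, ‖(u - v) i‖ ^ 2) ≤ ∑ _i : Fin d, ε₁ ^ 2 := by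
        apply Finset.sum_le_sum
        intro i _
        have : ‖(u - v) i‖ = |wh i - wst i| := by
          simp [u, v, Real.norm_eq_abs]
        rw [this]
        exact pow_le_pow_left₀ (abs_nonneg _) (hclose i) 2
      calc Real.sqrt (∑ i, ‖(u - v) i‖ ^ 2) ≤ Real.sqrt (∑ _i : Fin d, ε₁ ^ 2) :=
            Real.sqrt_le_sqrt this
        _ = Real.sqrt d * ε₁ := by
            rw [Finset.sum_const, Finset.card_univ, Fintype.card_fin, nsmul_eq_mul,
              Real.sqrt_mul (by positivity), Real.sqrt_sq hε₁.le]
    have h3 := norm_sub_norm_le v u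
    rw [norm_sub_rev, hv, hu] at h3
    linarith
  -- lower bound on the maximal coordinate
  have hmax : (R_w - Real.sqrt d * ε₁) / Real.sqrt d ≤ |wh i0| := by
    have hsum : (∑ i, wh i ^ 2) ≤ (d : ℝ) * wh i0 ^ 2 := by
      calc (∑ i, wh i ^ 2) ≤ ∑ _i : Fin d, wh i0 ^ 2 := by
            apply Finset.sum_le_sum
            intro i _
            have := hi0 i (Finset.mem_univ i)
            calc wh i ^ 2 = |wh i| ^ 2 := (sq_abs _).symm
              _ ≤ |wh i0| ^ 2 := pow_le_pow_left₀ (abs_nonneg _) this 2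
              _ = wh i0 ^ 2 := sq_abs _
        _ = (d : ℝ) * wh i0 ^ 2 := by
            rw [Finset.sum_const, Finset.card_univ, Fintype.card_fin, nsmul_eq_mul]
    have h2 : Real.sqrt (∑ i, wh i ^ 2) ≤ Real.sqrt d * |wh i0| := by
      calc Real.sqrt (∑ i, wh i ^ 2) ≤ Real.sqrt ((d : ℝ) * wh i0 ^ 2) :=
            Real.sqrt_le_sqrt hsum
        _ = Real.sqrt d * |wh i0| := by
            rw [Real.sqrt_mul (by positivity), Real.sqrt_sq_eq_abs]
    rw [div_le_iff₀ hsd]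
    nlinarith [hnorm, h2]
  have hwi0 : (0 : ℝ) < |wh i0| := lt_of_lt_of_le (by positivity) hmax
  -- the per-coordinate functions
  set g : Fin d → ℝ → ℂ := fun i t =>
    Complex.exp (2 * (π : ℂ) * Complex.I * ((t * (wh i * k) : ℝ) : ℂ)) with hg
  have hgnorm : ∀ i t, ‖g i t‖ = 1 := by
    intro i t
    have : (2 * (π : ℂ) * Complex.I * ((t * (wh i * k) : ℝ) : ℂ))
        = ((2 * π * (t * (wh i * k)) : ℝ) : ℂ) * Complex.I := by
      push_cast; ring
    rw [hg]
    simp only [this, Complex.norm_exp_ofReal_mul_I]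
  -- the integrand factors
  have hfact : ∀ x : Fin d → ℝ, Complex.exp (2 * (π : ℂ) * Complex.I *
      (((∑ i, x i * wh i) * k : ℝ) : ℂ)) = ∏ i, g i (x i) := by
    intro x
    rw [hg]
    simp only
    rw [← Complex.exp_sum]
    congr 1
    have h1 : ((∑ i, x i * wh i) * k : ℝ) = ∑ i, x i * (wh i * k) := by
      rw [Finset.sum_mul]
      exact Finset.sum_congr rfl fun i _ => by ring
    rw [h1, Complex.ofReal_sum, Finset.mul_sum]
  set S : Set (Fin d → ℝ) := Set.univ.pi fun _ : Fin d => Set.Icc (-(R : ℝ)) (R : ℝ) with hS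
  have hSm : MeasurableSet S := MeasurableSet.univ_pi fun _ => measurableSet_Icc
  -- rewrite set integral as a product of 1D integrals
  have hsplit : (∫ x in S, Complex.exp (2 * (π : ℂ) * Complex.I *
        (((∑ i, x i * wh i) * k : ℝ) : ℂ)))
      = ∏ i, ∫ t in Set.Icc (-(R : ℝ)) (R : ℝ), g i t := by
    rw [← integral_indicator hSm]
    have hind : (S.indicator fun x => Complex.exp (2 * (π : ℂ) * Complex.I *
        (((∑ i, x i * wh i) * k : ℝ) : ℂ)))
        = fun x => ∏ i, (Set.Icc (-(R : ℝ)) (R : ℝ)).indicator (g i) (x i) := by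
      funext x
      by_cases hx : x ∈ S
      · rw [Set.indicator_of_mem hx, hfact]
        congr 1
        ext i
        rw [Set.indicator_of_mem (hx i (Set.mem_univ i))]
      · rw [Set.indicator_of_notMem hx]
        rw [hS, Set.mem_pi] at hx
        push_neg at hx
        obtain ⟨i, -, hi⟩ := hx
        rw [eq_comm]
        apply Finset.prod_eq_zero (Finset.mem_univ i)
        rw [Set.indicator_of_notMem hi]
    rw [hind, volume_pi, MeasureTheory.integral_fintype_prod_eq_prod
      (fun i => (Set.Icc (-(R : ℝ)) (R : ℝ)).indicator (g i))]
    exact Finset.prod_congr rfl fun i _ => integral_indicator measurableSet_Icc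
  -- bound each factor by 2R
  have hIcc_le : ∀ i, ‖∫ t in Set.Icc (-(R : ℝ)) (R : ℝ), g i t‖ ≤ 2 * R := by
    intro i
    calc ‖∫ t in Set.Icc (-(R : ℝ)) (R : ℝ), g i t‖
        ≤ ∫ t in Set.Icc (-(R : ℝ)) (R : ℝ), ‖g i t‖ := norm_integral_le_integral_norm _
      _ = ∫ _t in Set.Icc (-(R : ℝ)) (R : ℝ), (1 : ℝ) := by
          apply integral_congr_ae
          filter_upwards with t using hgnorm i t
      _ = 2 * R := by
          simp [Real.volume_Icc]
          ring
  -- bound the i0 factor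
  have hIcc_i0 : ‖∫ t in Set.Icc (-(R : ℝ)) (R : ℝ), g i0 t‖ ≤ 1 / (π * (|wh i0| * |k|)) := by
    set c : ℂ := 2 * (π : ℂ) * Complex.I * ((wh i0 * k : ℝ) : ℂ) with hc
    have hcnorm : ‖c‖ = 2 * π * (|wh i0| * |k|) := by
      rw [hc]
      simp [map_mul, Complex.norm_real, abs_of_pos hπ, abs_mul]
    have hc0 : c ≠ 0 := by
      intro h
      have h0 : ‖c‖ = 0 := by rw [h, norm_zero]
      rw [hcnorm] at h0
      have h1 : 0 < 2 * π * (|wh i0| * |k|) := by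
        have := abs_pos.mpr hk
        positivity
      linarith
    have hgl : ∀ t : ℝ, g i0 t = Complex.exp (c * t) := by
      intro t
      simp only [hg, hc]
      congr 1
      push_cast
      ring
    have hIval : (∫ t in Set.Icc (-(R : ℝ)) (R : ℝ), g i0 t)
        = (Complex.exp (c * ((R : ℝ) : ℂ)) - Complex.exp (c * ((-(R : ℝ) : ℝ) : ℂ))) / c := by
      calc (∫ t in Set.Icc (-(R : ℝ)) (R : ℝ), g i0 t)
          = ∫ t in Set.Icc (-(R : ℝ)) (R : ℝ), Complex.exp (c * t) := by
            apply integral_congr_ae; filter_upwards with t using hgl t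
        _ = ∫ t in Set.Ioc (-(R : ℝ)) (R : ℝ), Complex.exp (c * t) :=
            integral_Icc_eq_integral_Ioc
        _ = ∫ t in (-(R : ℝ))..(R : ℝ), Complex.exp (c * t) :=
            (intervalIntegral.integral_of_le (by linarith)).symm
        _ = (Complex.exp (c * ((R : ℝ) : ℂ)) - Complex.exp (c * ((-(R : ℝ) : ℝ) : ℂ))) / c :=
            integral_exp_mul_complex hc0
    rw [hIval, norm_div, hcnorm]
    have hexp : ∀ r : ℝ, ‖Complex.exp (c * r)‖ = 1 := by
      intro r
      have : c * r = ((2 * π * (r * (wh i0 * k)) : ℝ) : ℂ) * Complex.I := by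
        rw [hc]; push_cast; ring
      rw [this, Complex.norm_exp_ofReal_mul_I]
    have h2 : ‖Complex.exp (c * ((R : ℝ) : ℂ)) - Complex.exp (c * ((-(R : ℝ) : ℝ) : ℂ))‖ ≤ 2 := by
      calc ‖Complex.exp (c * ((R : ℝ) : ℂ)) - Complex.exp (c * ((-(R : ℝ) : ℝ) : ℂ))‖
          ≤ ‖Complex.exp (c * ((R : ℝ) : ℂ))‖ + ‖Complex.exp (c * ((-(R : ℝ) : ℝ) : ℂ))‖ := norm_sub_le _ _
        _ = 2 := by rw [hexp, hexp]; norm_num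
    have hden : (0 : ℝ) < 2 * π * (|wh i0| * |k|) := by positivity
    rw [div_le_div_iff₀ hden (by positivity)]
    calc ‖Complex.exp (c * ((R : ℝ) : ℂ)) - Complex.exp (c * ((-(R : ℝ) : ℝ) : ℂ))‖ * (π * (|wh i0| * |k|))
        ≤ 2 * (π * (|wh i0| * |k|)) := by
          apply mul_le_mul_of_nonneg_right h2 (by positivity)
      _ = 1 * (2 * π * (|wh i0| * |k|)) := by ring
  -- combine
  have hprod : ∏ i, ‖∫ t in Set.Icc (-(R : ℝ)) (R : ℝ), g i t‖
      ≤ (1 / (π * (|wh i0| * |k|))) * (2 * R) ^ (d - 1) := by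
    rw [← Finset.mul_prod_erase Finset.univ _ (Finset.mem_univ i0)]
    have h1 : ∏ i ∈ Finset.univ.erase i0, ‖∫ t in Set.Icc (-(R : ℝ)) (R : ℝ), g i t‖
        ≤ (2 * R) ^ (d - 1) := by
      calc ∏ i ∈ Finset.univ.erase i0, ‖∫ t in Set.Icc (-(R : ℝ)) (R : ℝ), g i t‖
          ≤ ∏ _i ∈ Finset.univ.erase i0, (2 * (R : ℝ)) :=
            Finset.prod_le_prod (fun i _ => norm_nonneg _) (fun i _ => hIcc_le i)
        _ = (2 * R) ^ (d - 1) := by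
            rw [Finset.prod_const, Finset.card_erase_of_mem (Finset.mem_univ i0),
              Finset.card_univ, Fintype.card_fin]
    apply mul_le_mul hIcc_i0 h1 (Finset.prod_nonneg fun i _ => norm_nonneg _) (by positivity)
  calc ‖((1 / (2 * (R : ℝ)) ^ d : ℝ) : ℂ) *
        ∫ x in S, Complex.exp (2 * (π : ℂ) * Complex.I *
          (((∑ i, x i * wh i) * k : ℝ) : ℂ))‖
      = (1 / (2 * (R : ℝ)) ^ d) * ∏ i, ‖∫ t in Set.Icc (-(R : ℝ)) (R : ℝ), g i t‖ := by
        rw [norm_mul, hsplit, norm_prod]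
        congr 1
        rw [Complex.norm_real, Real.norm_eq_abs, abs_of_pos (by positivity)]
    _ ≤ (1 / (2 * (R : ℝ)) ^ d) * ((1 / (π * (|wh i0| * |k|))) * (2 * R) ^ (d - 1)) := by
        apply mul_le_mul_of_nonneg_left hprod (by positivity)
    _ = 1 / (2 * R * (π * (|wh i0| * |k|))) := by
        have hdsucc : d = (d - 1) + 1 := (Nat.succ_pred_eq_of_pos hd).symm
        rw [hdsucc, pow_succ]
        field_simp
        ring_nf
        rw [Nat.add_sub_cancel_left]
    _ ≤ (1 / (2 * π * R)) * Real.sqrt d / (R_w - Real.sqrt d * ε₁) := by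
        have hrhs : (1 / (2 * π * R)) * Real.sqrt d / (R_w - Real.sqrt d * ε₁)
            = 1 / (2 * R * (π * ((R_w - Real.sqrt d * ε₁) / Real.sqrt d))) := by
          have h1 : Real.sqrt d ≠ 0 := ne_of_gt hsd
          have h2 : R_w - Real.sqrt d * ε₁ ≠ 0 := ne_of_gt hA0
          have h3 : (R : ℝ) ≠ 0 := ne_of_gt hR'
          have h4 : π ≠ 0 := ne_of_gt hπ
          field_simp
        rw [hrhs]
        apply one_div_le_one_div_of_le (by positivity)
        have hstep : (R_w - Real.sqrt d * ε₁) / Real.sqrt d ≤ |wh i0| * |k| := by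
          calc (R_w - Real.sqrt d * ε₁) / Real.sqrt d ≤ |wh i0| := hmax
            _ = |wh i0| * 1 := (mul_one _).symm
            _ ≤ |wh i0| * |k| := mul_le_mul_of_nonneg_left hk1 (abs_nonneg _)
        apply mul_le_mul_of_nonneg_left (mul_le_mul_of_nonneg_left hstep hπ.le) (by positivity)
end

section
/- Let d, D ≥ 1 be integers, R_w > 0, R ≥ 1 an integer, and 0 < ε₁ < 1. Let w* ∈ ℝ^d with ‖w*‖₂ = R_w and let ŵ ∈ ℝ^d with ‖ŵ − w*‖_∞ ≤ ε₁. Let j be an integer with 1 ≤ j ≤ D. Then (2R)^{−d} ∫_{[−R,R]^d} cos(2πj⟨x, ŵ⟩) cos(2πj⟨x, w*⟩) dx ≥ 1/2 − √d/(8π R_w R) − 5π² D² d R² ε₁ / 3. -/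
open MeasureTheory Real
open scoped BigOperators


lemma cos_lip (x y : ℝ) : Real.cos y - |x - y| ≤ Real.cos x := by
  have h : |Real.cos x - Real.cos y| ≤ |x - y| := by
    rw [Real.cos_sub_cos, abs_mul, abs_mul]
    have h1 : |(-2 : ℝ)| = 2 := by norm_num
    have h2 := Real.abs_sin_le_one ((x + y) / 2)
    have h3 := Real.abs_sin_le_abs (x := (x - y) / 2)
    have h4 : |(x - y) / 2| = |x - y| / 2 := by rw [abs_div]; norm_num
    rw [h4] at h3
    rw [h1]
    calc 2 * |Real.sin ((x + y) / 2)| * |Real.sin ((x - y) / 2)|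
        ≤ 2 * 1 * (|x - y| / 2) := by
          apply mul_le_mul _ h3 (abs_nonneg _) (by norm_num)
          nlinarith [abs_nonneg (Real.sin ((x + y) / 2))]
      _ = |x - y| := by ring
  linarith [(abs_le.mp h).1]

lemma cube_cos_bound (d : ℕ) (Rr : ℝ) (hR : 0 < Rr) (c : Fin d → ℝ)
    (i0 : Fin d) (hc : c i0 ≠ 0) :
    |∫ x in Set.univ.pi fun _ : Fin d => Set.Icc (-Rr) Rr,
        Real.cos (∑ i, c i * x i)| ≤ (2 * Rr) ^ (d - 1) * (2 / |c i0|) := by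
  set S := Set.univ.pi fun _ : Fin d => Set.Icc (-Rr) Rr with hS
  set g : Fin d → ℝ → ℂ := fun i t => Complex.exp ((c i * t : ℝ) * Complex.I) with hg
  have key : ∀ x : Fin d → ℝ, Real.cos (∑ i, c i * x i) = (∏ i, g i (x i)).re := by
    intro x
    have : ∏ i, g i (x i) = Complex.exp ((∑ i, c i * x i : ℝ) * Complex.I) := by
      rw [← Complex.exp_sum]
      congr 1
      push_cast
      rw [Finset.sum_mul]
    rw [this, Complex.exp_ofReal_mul_I_re]
  have hcont : Continuous fun x : Fin d → ℝ => ∏ i, g i (x i) := by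
    refine continuous_finset_prod _ fun i _ => ?_
    exact Complex.continuous_exp.comp (by continuity)
  have hScompact : IsCompact S := isCompact_univ_pi fun _ => isCompact_Icc
  have hInt : IntegrableOn (fun x : Fin d → ℝ => ∏ i, g i (x i)) S volume :=
    hcont.continuousOn.integrableOn_compact hScompact
  have hre : ∫ x in S, Real.cos (∑ i, c i * x i)
      = (∫ x in S, ∏ i, g i (x i)).re := by
    have := integral_re (𝕜 := ℂ) hInt
    rw [RCLike.re_eq_complex_re] at this
    rw [← this]
    simp_rw [key]
  -- factor the integral
  have hprod : ∫ x in S, ∏ i, g i (x i)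
      = ∏ i, ∫ t in Set.Icc (-Rr) Rr, g i t := by
    have hmeas : MeasurableSet S := MeasurableSet.univ_pi fun _ => measurableSet_Icc
    rw [← integral_indicator hmeas]
    have hind : (S.indicator fun x : Fin d → ℝ => ∏ i, g i (x i))
        = fun x : Fin d → ℝ => ∏ i, (Set.Icc (-Rr) Rr).indicator (g i) (x i) := by
      funext x
      by_cases hx : x ∈ S
      · rw [Set.indicator_of_mem hx]
        exact Finset.prod_congr rfl fun i _ =>
          (Set.indicator_of_mem (hx i trivial) _).symm
      · rw [Set.indicator_of_notMem hx]
        have : ∃ i, x i ∉ Set.Icc (-Rr) Rr := by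
          by_contra hcon
          push_neg at hcon
          exact hx fun i _ => hcon i
        obtain ⟨i, hi⟩ := this
        exact (Finset.prod_eq_zero (Finset.mem_univ i)
          (Set.indicator_of_notMem hi _)).symm
    rw [hind]
    beta_reduce
    rw [MeasureTheory.volume_pi, MeasureTheory.integral_fintype_prod_eq_prod
      (fun i => (Set.Icc (-Rr) Rr).indicator (g i))]
    exact Finset.prod_congr rfl fun i _ =>
      integral_indicator measurableSet_Icc
  have hnorm1 : ∀ i : Fin d, ‖∫ t in Set.Icc (-Rr) Rr, g i t‖ ≤ 2 * Rr := by
    intro i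
    have h := norm_setIntegral_le_of_norm_le_const (μ := volume)
      (s := Set.Icc (-Rr) Rr) (f := g i) (C := 1)
      (by rw [Real.volume_Icc]; exact ENNReal.ofReal_lt_top)
      (fun t _ => by
        simp only [hg, Complex.norm_exp_ofReal_mul_I, le_refl])
    rw [Real.volume_real_Icc_of_le (by linarith)] at h
    calc ‖∫ t in Set.Icc (-Rr) Rr, g i t‖ ≤ 1 * (Rr - -Rr) := h
      _ = 2 * Rr := by ring
  have hnorm2 : ‖∫ t in Set.Icc (-Rr) Rr, g i0 t‖ ≤ 2 / |c i0| := by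
    have hIcc : ∫ t in Set.Icc (-Rr) Rr, g i0 t = ∫ t in (-Rr)..Rr, g i0 t := by
      rw [intervalIntegral.integral_of_le (by linarith),
        MeasureTheory.integral_Icc_eq_integral_Ioc]
    have hfun : ∀ t : ℝ, g i0 t = Complex.exp (((c i0 : ℂ) * Complex.I) * t) := by
      intro t; rw [hg]; push_cast; ring_nf
    have hz : (c i0 : ℂ) * Complex.I ≠ 0 := by
      simp [Complex.ofReal_eq_zero, hc, Complex.I_ne_zero]
    rw [hIcc]
    simp_rw [hfun]
    rw [integral_exp_mul_complex hz, norm_div]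
    have habs : ‖(c i0 : ℂ) * Complex.I‖ = |c i0| := by
      simp [Complex.norm_real]
    have he : ∀ r : ℝ, ‖Complex.exp ((c i0 : ℂ) * Complex.I * (r : ℂ))‖ = 1 := by
      intro r
      have : (c i0 : ℂ) * Complex.I * (r : ℂ) = ((c i0 * r : ℝ) : ℂ) * Complex.I := by
        push_cast; ring
      rw [this, Complex.norm_exp_ofReal_mul_I]
    have hnum : ‖Complex.exp ((c i0 : ℂ) * Complex.I * (Rr : ℂ))
        - Complex.exp ((c i0 : ℂ) * Complex.I * ((-Rr : ℝ) : ℂ))‖ ≤ 2 := by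
      calc ‖_ - _‖ ≤ ‖Complex.exp ((c i0 : ℂ) * Complex.I * (Rr : ℂ))‖
            + ‖Complex.exp ((c i0 : ℂ) * Complex.I * ((-Rr : ℝ) : ℂ))‖ := norm_sub_le _ _
        _ ≤ 2 := by rw [he, he]; norm_num
    rw [habs]
    exact div_le_div₀ (by norm_num) hnum (abs_pos.mpr hc) le_rfl
  rw [hre]
  have hstep : ∏ i, ‖∫ t in Set.Icc (-Rr) Rr, g i t‖
      ≤ (2 / |c i0|) * (2 * Rr) ^ (d - 1) := by
    rw [← Finset.mul_prod_erase Finset.univ _ (Finset.mem_univ i0)]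
    have h2 : ∏ i ∈ Finset.univ.erase i0, ‖∫ t in Set.Icc (-Rr) Rr, g i t‖
        ≤ (2 * Rr) ^ (d - 1) := by
      calc ∏ i ∈ Finset.univ.erase i0, ‖∫ t in Set.Icc (-Rr) Rr, g i t‖
          ≤ ∏ _i ∈ Finset.univ.erase i0, (2 * Rr) :=
            Finset.prod_le_prod (fun i _ => norm_nonneg _) (fun i _ => hnorm1 i)
        _ = (2 * Rr) ^ (d - 1) := by
            rw [Finset.prod_const, Finset.card_erase_of_mem (Finset.mem_univ i0)]
            simp
    exact mul_le_mul hnorm2 h2 (Finset.prod_nonneg fun i _ => norm_nonneg _)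
      (by positivity)
  calc |(∫ x in S, ∏ i, g i (x i)).re| ≤ ‖∫ x in S, ∏ i, g i (x i)‖ :=
        Complex.abs_re_le_norm _
    _ = ∏ i, ‖∫ t in Set.Icc (-Rr) Rr, g i t‖ := by rw [hprod, norm_prod]
    _ ≤ (2 / |c i0|) * (2 * Rr) ^ (d - 1) := hstep
    _ = (2 * Rr) ^ (d - 1) * (2 / |c i0|) := by ring

set_option maxHeartbeats 1000000 in
/-- Lower bound on the cube-average of `cos(2πj⟨x,ŵ⟩) cos(2πj⟨x,w*⟩)`. -/
theorem stmt11 (d D : ℕ) (hd : 1 ≤ d) (hD : 1 ≤ D) (R_w : ℝ) (hRw : 0 < R_w)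
    (R : ℕ) (hR : 1 ≤ R) (ε₁ : ℝ) (hε₁0 : 0 < ε₁) (hε₁1 : ε₁ < 1)
    (wst wh : Fin d → ℝ)
    (hw : Real.sqrt (∑ i, wst i ^ 2) = R_w)
    (hclose : ∀ i, |wh i - wst i| ≤ ε₁)
    (j : ℕ) (hj1 : 1 ≤ j) (hjD : j ≤ D) :
    1 / 2 - Real.sqrt d / (8 * π * R_w * R) - 5 * π ^ 2 * D ^ 2 * d * R ^ 2 * ε₁ / 3
      ≤ (1 / (2 * (R : ℝ)) ^ d) *
          ∫ x in Set.univ.pi fun _ : Fin d => Set.Icc (-(R : ℝ)) (R : ℝ),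
            Real.cos (2 * π * j * ∑ i, x i * wh i) *
              Real.cos (2 * π * j * ∑ i, x i * wst i) := by
  have hπ := Real.pi_gt_three
  have hRr1 : (1 : ℝ) ≤ (R : ℝ) := by exact_mod_cast hR
  have hRrpos : (0 : ℝ) < (R : ℝ) := by linarith
  set Rr : ℝ := (R : ℝ) with hRrdef
  set S := Set.univ.pi fun _ : Fin d => Set.Icc (-Rr) Rr with hSdef
  set e : ℝ := 2 * π * D * d * Rr * ε₁ with he
  set c : Fin d → ℝ := fun i => 4 * π * j * wst i with hcdef
  have hjpos : (1 : ℝ) ≤ (j : ℝ) := by exact_mod_cast hj1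
  have hjD' : (j : ℝ) ≤ (D : ℝ) := by exact_mod_cast hjD
  have hD1 : (1 : ℝ) ≤ (D : ℝ) := by exact_mod_cast hD
  have hd1 : (1 : ℝ) ≤ (d : ℝ) := by exact_mod_cast hd
  have hdpos : (0 : ℝ) < (d : ℝ) := by linarith
  -- maximal coordinate of wst
  obtain ⟨i0, -, hi0⟩ := Finset.exists_max_image Finset.univ (fun i => |wst i|)
    ⟨⟨0, hd⟩, Finset.mem_univ _⟩
  have hsum : ∑ i, wst i ^ 2 = R_w ^ 2 := by
    have hnn : 0 ≤ ∑ i, wst i ^ 2 := Finset.sum_nonneg fun i _ => sq_nonneg _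
    rw [← hw, Real.sq_sqrt hnn]
  have hsq : R_w ^ 2 ≤ d * |wst i0| ^ 2 := by
    calc R_w ^ 2 = ∑ i, wst i ^ 2 := hsum.symm
      _ ≤ ∑ _i : Fin d, |wst i0| ^ 2 := Finset.sum_le_sum fun i _ => by
          rw [← sq_abs (wst i)]
          exact pow_le_pow_left₀ (abs_nonneg _) (hi0 i (Finset.mem_univ i)) 2
      _ = d * |wst i0| ^ 2 := by
          rw [Finset.sum_const, Finset.card_univ, Fintype.card_fin, nsmul_eq_mul]
  have hsd : 0 < Real.sqrt d := Real.sqrt_pos.mpr hdpos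
  have hl : R_w / Real.sqrt d ≤ |wst i0| := by
    have h1 : (R_w / Real.sqrt d) ^ 2 ≤ |wst i0| ^ 2 := by
      rw [div_pow, Real.sq_sqrt hdpos.le, div_le_iff₀ hdpos]
      nlinarith
    calc R_w / Real.sqrt d = Real.sqrt ((R_w / Real.sqrt d) ^ 2) :=
          (Real.sqrt_sq (by positivity)).symm
      _ ≤ Real.sqrt (|wst i0| ^ 2) := Real.sqrt_le_sqrt h1
      _ = |wst i0| := Real.sqrt_sq (abs_nonneg _)
  have hwpos : 0 < |wst i0| := lt_of_lt_of_le (by positivity) hl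
  have hc0 : c i0 ≠ 0 := by
    simp only [hcdef]
    have : wst i0 ≠ 0 := abs_pos.mp hwpos
    positivity
  -- pointwise bound
  have hpt : ∀ x ∈ S,
      1 / 2 - e + Real.cos (∑ i, c i * x i) / 2
        ≤ Real.cos (2 * π * j * ∑ i, x i * wh i) *
            Real.cos (2 * π * j * ∑ i, x i * wst i) := by
    intro x hx
    set A := 2 * π * j * ∑ i, x i * wh i with hA
    set B := 2 * π * j * ∑ i, x i * wst i with hB
    have hxR : ∀ i, |x i| ≤ Rr := fun i => by
      have := hx i trivial
      rw [Set.mem_Icc] at this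
      exact abs_le.mpr this
    have hAB : |A - B| ≤ e := by
      have hABeq : A - B = 2 * π * j * ∑ i, x i * (wh i - wst i) := by
        rw [hA, hB, Finset.mul_sum, Finset.mul_sum, Finset.mul_sum, ← Finset.sum_sub_distrib]
        exact Finset.sum_congr rfl fun i _ => by ring
      rw [hABeq, abs_mul, abs_of_nonneg (show (0:ℝ) ≤ 2 * π * j by positivity)]
      have h1 : |∑ i, x i * (wh i - wst i)| ≤ d * (Rr * ε₁) := by
        calc |∑ i, x i * (wh i - wst i)| ≤ ∑ i, |x i * (wh i - wst i)| :=
              Finset.abs_sum_le_sum_abs _ _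
          _ ≤ ∑ _i : Fin d, Rr * ε₁ := Finset.sum_le_sum fun i _ => by
              rw [abs_mul]
              exact mul_le_mul (hxR i) (hclose i) (abs_nonneg _) (by linarith)
          _ = d * (Rr * ε₁) := by
              rw [Finset.sum_const, Finset.card_univ, Fintype.card_fin, nsmul_eq_mul]
      calc 2 * π * j * |∑ i, x i * (wh i - wst i)| ≤ 2 * π * j * (d * (Rr * ε₁)) :=
            mul_le_mul_of_nonneg_left h1 (by positivity)
        _ ≤ e := by
            rw [he]
            have hX : (j:ℝ) * (2 * π * (↑d * (Rr * ε₁))) ≤ (D:ℝ) * (2 * π * (↑d * (Rr * ε₁))) :=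
              mul_le_mul_of_nonneg_right hjD' (by positivity)
            nlinarith [hX]
    have hsum2 : ∑ i, c i * x i = 2 * B := by
      rw [hB, hcdef, Finset.mul_sum, Finset.mul_sum]
      exact Finset.sum_congr rfl fun i _ => by ring
    have key : Real.cos A * Real.cos B = (Real.cos (A + B) + Real.cos (A - B)) / 2 := by
      rw [Real.cos_add, Real.cos_sub]; ring
    have l1 : Real.cos (2 * B) - e ≤ Real.cos (A + B) := by
      have h := cos_lip (A + B) (2 * B)
      have h2 : |A + B - 2 * B| = |A - B| := by ring_nf
      rw [h2] at h
      linarith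
    have l2 : 1 - e ≤ Real.cos (A - B) := by
      have h := cos_lip (A - B) 0
      rw [Real.cos_zero, sub_zero] at h
      linarith
    rw [hsum2, key]
    linarith
  -- integrability
  have hScompact : IsCompact S := isCompact_univ_pi fun _ => isCompact_Icc
  have hmeas : MeasurableSet S := MeasurableSet.univ_pi fun _ => measurableSet_Icc
  have hint1 : IntegrableOn (fun x : Fin d → ℝ =>
      Real.cos (2 * π * j * ∑ i, x i * wh i) *
        Real.cos (2 * π * j * ∑ i, x i * wst i)) S volume := by
    have h1 : Continuous fun x : Fin d → ℝ => 2 * π * j * ∑ i, x i * wh i :=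
      continuous_const.mul (continuous_finset_sum _ fun i _ =>
        (continuous_apply i).mul continuous_const)
    have h2 : Continuous fun x : Fin d → ℝ => 2 * π * j * ∑ i, x i * wst i :=
      continuous_const.mul (continuous_finset_sum _ fun i _ =>
        (continuous_apply i).mul continuous_const)
    exact ((Real.continuous_cos.comp h1).mul
      (Real.continuous_cos.comp h2)).continuousOn.integrableOn_compact hScompact
  have hintc : IntegrableOn (fun x : Fin d → ℝ =>
      Real.cos (∑ i, c i * x i) / 2) S volume := by
    have h1 : Continuous fun x : Fin d → ℝ => ∑ i, c i * x i :=
      continuous_finset_sum _ fun i _ => continuous_const.mul (continuous_apply i)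
    exact ((Real.continuous_cos.comp h1).div_const 2).continuousOn.integrableOn_compact
      hScompact
  have hint2 : IntegrableOn (fun x : Fin d → ℝ =>
      1 / 2 - e + Real.cos (∑ i, c i * x i) / 2) S volume := by
    have h1 : Continuous fun x : Fin d → ℝ => ∑ i, c i * x i :=
      continuous_finset_sum _ fun i _ => continuous_const.mul (continuous_apply i)
    exact (continuous_const.add
      ((Real.continuous_cos.comp h1).div_const 2)).continuousOn.integrableOn_compact hScompact
  have hmono := setIntegral_mono_on hint2 hint1 hmeas hpt
  -- volume of the cube
  have hvol : (volume S).toReal = (2 * Rr) ^ d := by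
    rw [hSdef, volume_pi_pi]
    simp only [Real.volume_Icc]
    rw [Finset.prod_const, Finset.card_univ, Fintype.card_fin,
      ENNReal.toReal_pow, ENNReal.toReal_ofReal (by linarith)]
    congr 1
    ring
  have hsplit : ∫ x in S, (1 / 2 - e + Real.cos (∑ i, c i * x i) / 2)
      = (1 / 2 - e) * (2 * Rr) ^ d + (∫ x in S, Real.cos (∑ i, c i * x i)) / 2 := by
    rw [integral_add (integrableOn_const (C := (1 / 2 - e : ℝ)) hScompact.measure_lt_top.ne) hintc,
      setIntegral_const, measureReal_def, integral_div, hvol, smul_eq_mul, mul_comm]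
  have hbound := cube_cos_bound d Rr hRrpos c i0 hc0
  rw [← hSdef] at hbound
  have hVpos : (0 : ℝ) < (2 * Rr) ^ d := by positivity
  rw [div_mul_eq_mul_div, one_mul, le_div_iff₀ hVpos]
  have hcos_lb : -((2 * Rr) ^ (d - 1) * (2 / |c i0|))
      ≤ ∫ x in S, Real.cos (∑ i, c i * x i) := neg_le_of_abs_le hbound
  have hpow : (2 * Rr) ^ d = (2 * Rr) ^ (d - 1) * (2 * Rr) := by
    rw [← pow_succ]
    congr 1
    omega
  have hPpos : (0 : ℝ) < (2 * Rr) ^ (d - 1) := by positivity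
  -- |c i0| ≥ 4 π R_w / √d
  have hci0 : 4 * π * R_w / Real.sqrt d ≤ |c i0| := by
    have : |c i0| = 4 * π * j * |wst i0| := by
      rw [hcdef, abs_mul, abs_of_nonneg (show (0:ℝ) ≤ 4 * π * j by positivity)]
    rw [this, div_le_iff₀ hsd]
    have h1 : R_w ≤ |wst i0| * Real.sqrt d := (div_le_iff₀ hsd).mp hl
    have h2 : |wst i0| * Real.sqrt d ≤ (j : ℝ) * (|wst i0| * Real.sqrt d) :=
      le_mul_of_one_le_left (by positivity) hjpos
    have h3 := mul_le_mul_of_nonneg_left (h1.trans h2)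
      (show (0:ℝ) ≤ 4 * π by positivity)
    linarith [h3]
  -- key term bound
  have hterm1 : (2 * Rr) ^ (d - 1) * (2 / |c i0|) / 2
      ≤ Real.sqrt d / (8 * π * R_w * Rr) * (2 * Rr) ^ d := by
    have h2 : 1 / |c i0| ≤ Real.sqrt d / (4 * π * R_w) := by
      have h3 := one_div_le_one_div_of_le (by positivity) hci0
      rwa [one_div_div] at h3
    have hRne : Rr ≠ 0 := ne_of_gt hRrpos
    have hRwne : R_w ≠ 0 := ne_of_gt hRw
    have hπne : π ≠ 0 := Real.pi_ne_zero
    calc (2 * Rr) ^ (d - 1) * (2 / |c i0|) / 2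
        = (2 * Rr) ^ (d - 1) * (1 / |c i0|) := by ring
      _ ≤ (2 * Rr) ^ (d - 1) * (Real.sqrt d / (4 * π * R_w)) :=
          mul_le_mul_of_nonneg_left h2 hPpos.le
      _ = Real.sqrt d / (8 * π * R_w * Rr) * ((2 * Rr) ^ (d - 1) * (2 * Rr)) := by
          field_simp
          ring
      _ = Real.sqrt d / (8 * π * R_w * Rr) * (2 * Rr) ^ d := by rw [← hpow]
  have hterm2 : e ≤ 5 * π ^ 2 * D ^ 2 * d * Rr ^ 2 * ε₁ / 3 := by
    rw [he]
    have hDR : (1:ℝ) ≤ (D:ℝ) * Rr := by nlinarith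
    have hco : 2 * π ≤ 5 * π ^ 2 * ((D:ℝ) * Rr) / 3 := by
      nlinarith [hπ, hDR, Real.pi_pos, mul_le_mul_of_nonneg_left hDR
        (show (0:ℝ) ≤ 5 * π ^ 2 / 3 by positivity)]
    have hX : (0:ℝ) ≤ (D:ℝ) * d * Rr * ε₁ := by positivity
    nlinarith [mul_le_mul_of_nonneg_right hco hX]
  have hEb := mul_le_mul_of_nonneg_right hterm2 hVpos.le
  nlinarith [hmono, hsplit, hcos_lb, hterm1, hEb]
end

section
/- Let d, D ≥ 1 be integers, R_w > 0, R ≥ 1 an integer, and ε₁ > 0. Let w* ∈ ℝ^d with ‖w*‖₂ = R_w and let ŵ ∈ ℝ^d with ‖ŵ − w*‖_∞ ≤ ε₁. Let j be an integer with 1 ≤ j ≤ D. Then (2R)^{−d} ∫_{[−R,R]^d} cos(2πj⟨x, ŵ⟩) cos(2πj⟨x, w*⟩) dx ≤ 1/2 + √d/(8π R_w R) + π D d ε₁ R. -/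
open MeasureTheory Real
open scoped BigOperators


lemma stmt12_exp_norm_one (b r : ℝ) :
    ‖Complex.exp (((b : ℂ) * Complex.I) * (r : ℂ))‖ = 1 := by
  rw [show ((b : ℂ) * Complex.I) * (r : ℂ) = ((b * r : ℝ) : ℂ) * Complex.I by push_cast; ring,
    Complex.norm_exp_ofReal_mul_I]

lemma stmt12_single_osc {Rr : ℝ} (hRr : 0 < Rr) {b : ℝ} (hb : b ≠ 0) :
    ‖∫ t in Set.Icc (-Rr) Rr, Complex.exp (((b * t : ℝ) : ℂ) * Complex.I)‖ ≤ 2 / |b| := by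
  have hle : (-Rr : ℝ) ≤ Rr := by linarith
  have hc : ((b : ℂ) * Complex.I) ≠ 0 := by
    simp [Complex.ext_iff, hb, Complex.I_ne_zero]
  have heq : ∫ t in Set.Icc (-Rr) Rr, Complex.exp (((b * t : ℝ) : ℂ) * Complex.I)
      = ∫ t in (-Rr)..Rr, Complex.exp (((b : ℂ) * Complex.I) * (t : ℂ)) := by
    rw [integral_Icc_eq_integral_Ioc, ← intervalIntegral.integral_of_le hle]
    congr 1
    funext t
    congr 1
    push_cast
    ring
  rw [heq, integral_exp_mul_complex hc]
  rw [norm_div]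
  have h1 : ‖Complex.exp ((b : ℂ) * Complex.I * (Rr : ℂ)) -
      Complex.exp ((b : ℂ) * Complex.I * ((-Rr : ℝ) : ℂ))‖ ≤ 2 := by
    refine (norm_sub_le _ _).trans ?_
    rw [stmt12_exp_norm_one, stmt12_exp_norm_one]
    norm_num
  have h2 : ‖(b : ℂ) * Complex.I‖ = |b| := by
    simp
  rw [h2]
  gcongr

lemma stmt12_indicator_pi_prod {𝕜 : Type*} [RCLike 𝕜] {d : ℕ} (f : Fin d → ℝ → 𝕜) (s : Set ℝ)
    (x : Fin d → ℝ) :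
    (Set.univ.pi fun _ : Fin d => s).indicator (fun y => ∏ i, f i (y i)) x
      = ∏ i, s.indicator (f i) (x i) := by
  by_cases h : x ∈ Set.univ.pi fun _ : Fin d => s
  · rw [Set.indicator_of_mem h]
    exact Finset.prod_congr rfl fun i _ => (Set.indicator_of_mem (h i trivial) _).symm
  · rw [Set.indicator_of_notMem h]
    rw [Set.mem_univ_pi] at h
    push_neg at h
    obtain ⟨i, hi⟩ := h
    exact (Finset.prod_eq_zero (Finset.mem_univ i)
      (Set.indicator_of_notMem hi _)).symm

lemma stmt12_setIntegral_pi_prod {𝕜 : Type*} [RCLike 𝕜] {d : ℕ} (f : Fin d → ℝ → 𝕜) (s : Set ℝ)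
    (hs : MeasurableSet s) :
    ∫ x in Set.univ.pi fun _ : Fin d => s, ∏ i, f i (x i) = ∏ i, ∫ t in s, f i t := by
  rw [← integral_indicator (MeasurableSet.univ_pi fun _ => hs)]
  simp_rw [stmt12_indicator_pi_prod f s]
  rw [volume_pi, integral_fintype_prod_eq_prod (fun i => s.indicator (f i))]
  simp_rw [integral_indicator hs]

lemma stmt12_osc {d : ℕ} {Rr : ℝ} (hRr : 0 < Rr) (a : ℝ) (w : Fin d → ℝ) (i₀ : Fin d)
    (hb : a * w i₀ ≠ 0) :
    ∫ x in Set.univ.pi fun _ : Fin d => Set.Icc (-Rr) Rr, Real.cos (a * ∑ i, x i * w i)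
      ≤ (2 * Rr) ^ (d - 1) * (2 / |a * w i₀|) := by
  set S := Set.univ.pi fun _ : Fin d => Set.Icc (-Rr) Rr with hS
  set g : Fin d → ℝ → ℂ := fun i t => Complex.exp (((a * w i * t : ℝ) : ℂ) * Complex.I) with hg
  have key : ∀ x : Fin d → ℝ, Real.cos (a * ∑ i, x i * w i) = (∏ i, g i (x i)).re := by
    intro x
    have : ∏ i, g i (x i) = Complex.exp (((a * ∑ i, x i * w i : ℝ) : ℂ) * Complex.I) := by
      rw [hg, ← Complex.exp_sum]
      congr 1
      rw [← Finset.sum_mul]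
      congr 1
      push_cast
      rw [Finset.mul_sum]
      exact Finset.sum_congr rfl fun i _ => by ring
    rw [this, Complex.exp_ofReal_mul_I_re]
  have hcont : Continuous fun x : Fin d → ℝ => ∏ i, g i (x i) := by
    refine continuous_finset_prod _ fun i _ => ?_
    exact Complex.continuous_exp.comp
      (((Complex.continuous_ofReal.comp ((continuous_const.mul (continuous_apply i))))).mul
        continuous_const)
  have hSint : IntegrableOn (fun x : Fin d → ℝ => ∏ i, g i (x i)) S := by
    refine hcont.continuousOn.integrableOn_compact ?_
    exact isCompact_univ_pi fun _ => isCompact_Icc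
  have step1 : ∫ x in S, Real.cos (a * ∑ i, x i * w i)
      = (∫ x in S, ∏ i, g i (x i)).re := by
    simp_rw [key]
    exact integral_re hSint
  rw [step1, stmt12_setIntegral_pi_prod g _ measurableSet_Icc]
  refine (Complex.re_le_norm _).trans ?_
  rw [norm_prod]
  have hIcc : volume (Set.Icc (-Rr) Rr) = ENNReal.ofReal (2 * Rr) := by
    rw [Real.volume_Icc]; congr 1; ring
  have hbound : ∀ i, ‖∫ t in Set.Icc (-Rr) Rr, g i t‖ ≤ 2 * Rr := by
    intro i
    have := norm_setIntegral_le_of_norm_le_const (μ := volume) (s := Set.Icc (-Rr) Rr)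
      (f := g i) (C := 1) (by rw [hIcc]; exact ENNReal.ofReal_lt_top)
      (fun t _ => le_of_eq (by
        rw [hg]
        simpa using Complex.norm_exp_ofReal_mul_I (a * w i * t)))
    have hmeas : Continuous (g i) := by
      rw [hg]
      exact Complex.continuous_exp.comp
        ((Complex.continuous_ofReal.comp ((continuous_const.mul continuous_id))).mul
          continuous_const)
    replace this := this
    rw [measureReal_def, hIcc, ENNReal.toReal_ofReal (by positivity)] at this
    linarith
  calc ∏ i, ‖∫ t in Set.Icc (-Rr) Rr, g i t‖
      = ‖∫ t in Set.Icc (-Rr) Rr, g i₀ t‖ *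
        ∏ i ∈ Finset.univ.erase i₀, ‖∫ t in Set.Icc (-Rr) Rr, g i t‖ :=
        (Finset.mul_prod_erase Finset.univ _ (Finset.mem_univ i₀)).symm
    _ ≤ (2 / |a * w i₀|) * (2 * Rr) ^ (d - 1) := by
        refine mul_le_mul ?_ ?_ (Finset.prod_nonneg fun i _ => norm_nonneg _) (by positivity)
        · exact stmt12_single_osc hRr hb
        · have h : ∏ i ∈ Finset.univ.erase i₀, ‖∫ t in Set.Icc (-Rr) Rr, g i t‖
              ≤ ∏ _i ∈ Finset.univ.erase i₀, (2 * Rr) :=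
            Finset.prod_le_prod (fun i _ => norm_nonneg _) (fun i _ => hbound i)
          rwa [Finset.prod_const, Finset.card_erase_of_mem (Finset.mem_univ i₀),
            Finset.card_univ, Fintype.card_fin] at h
    _ = (2 * Rr) ^ (d - 1) * (2 / |a * w i₀|) := mul_comm _ _

lemma stmt12_abs_int {Rr : ℝ} (hRr : 0 < Rr) :
    ∫ t in Set.Icc (-Rr) Rr, |t| = Rr ^ 2 := by
  have hle : (-Rr : ℝ) ≤ Rr := by linarith
  rw [integral_Icc_eq_integral_Ioc, ← intervalIntegral.integral_of_le hle]
  rw [← intervalIntegral.integral_add_adjacent_intervals (a := -Rr) (b := 0) (c := Rr)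
    (continuous_abs.intervalIntegrable _ _) (continuous_abs.intervalIntegrable _ _)]
  have e1 : ∫ t in (-Rr)..(0:ℝ), |t| = ∫ t in (-Rr)..(0:ℝ), -t := by
    refine intervalIntegral.integral_congr fun t ht => ?_
    rw [Set.uIcc_of_le (by linarith : (-Rr : ℝ) ≤ 0)] at ht
    exact abs_of_nonpos ht.2
  have e2 : ∫ t in (0:ℝ)..Rr, |t| = ∫ t in (0:ℝ)..Rr, t := by
    refine intervalIntegral.integral_congr fun t ht => ?_
    rw [Set.uIcc_of_le (by linarith : (0:ℝ) ≤ Rr)] at ht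
    exact abs_of_nonneg ht.1
  rw [e1, e2, intervalIntegral.integral_neg, integral_id, integral_id]
  ring

lemma stmt12_abs_coord {d : ℕ} {Rr : ℝ} (hRr : 0 < Rr) (i₀ : Fin d) :
    ∫ x in Set.univ.pi fun _ : Fin d => Set.Icc (-Rr) Rr, |x i₀|
      = (2 * Rr) ^ (d - 1) * Rr ^ 2 := by
  have key : ∀ x : Fin d → ℝ,
      |x i₀| = ∏ k, (fun k (t : ℝ) => if k = i₀ then |t| else 1) k (x k) := by
    intro x
    rw [Finset.prod_ite_eq' Finset.univ i₀ fun k => |x k|, if_pos (Finset.mem_univ i₀)]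
  simp_rw [key]
  have h := stmt12_setIntegral_pi_prod (𝕜 := ℝ) (fun k (t : ℝ) => if k = i₀ then |t| else 1)
    (Set.Icc (-Rr) Rr) measurableSet_Icc
  beta_reduce at h
  rw [h]
  have hone : ∫ _t in Set.Icc (-Rr) Rr, (1:ℝ) = 2 * Rr := by
    rw [setIntegral_const, measureReal_def, Real.volume_Icc, smul_eq_mul, mul_one,
      ENNReal.toReal_ofReal (by linarith)]
    ring
  have hfac : ∀ k : Fin d,
      (∫ t in Set.Icc (-Rr) Rr, if k = i₀ then |t| else (1:ℝ))
        = if k = i₀ then Rr ^ 2 else 2 * Rr := by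
    intro k
    by_cases h : k = i₀ <;> simp [h, stmt12_abs_int hRr, hone]
  simp_rw [hfac]
  rw [← Finset.mul_prod_erase Finset.univ _ (Finset.mem_univ i₀), if_pos rfl]
  rw [Finset.prod_congr rfl (fun k hk => if_neg (Finset.ne_of_mem_erase hk)),
    Finset.prod_const, Finset.card_erase_of_mem (Finset.mem_univ i₀),
    Finset.card_univ, Fintype.card_fin, mul_comm]

set_option maxHeartbeats 2000000 in
/-- Upper bound on the cube-average of `cos(2πj⟨x,ŵ⟩) cos(2πj⟨x,w*⟩)`. -/
theorem stmt12 (d D : ℕ) (hd : 1 ≤ d) (hD : 1 ≤ D) (R_w : ℝ) (hRw : 0 < R_w)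
    (R : ℕ) (hR : 1 ≤ R) (ε₁ : ℝ) (hε₁ : 0 < ε₁)
    (wst wh : Fin d → ℝ)
    (hw : Real.sqrt (∑ i, wst i ^ 2) = R_w)
    (hclose : ∀ i, |wh i - wst i| ≤ ε₁)
    (j : ℕ) (hj1 : 1 ≤ j) (hjD : j ≤ D) :
    (1 / (2 * (R : ℝ)) ^ d) *
        ∫ x in Set.univ.pi fun _ : Fin d => Set.Icc (-(R : ℝ)) (R : ℝ),
          Real.cos (2 * π * j * ∑ i, x i * wh i) *
            Real.cos (2 * π * j * ∑ i, x i * wst i)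
      ≤ 1 / 2 + Real.sqrt d / (8 * π * R_w * R) + π * D * d * ε₁ * R := by
  have hπ := Real.pi_pos
  have hR1 : (1:ℝ) ≤ (R:ℝ) := by exact_mod_cast hR
  have hRpos : (0:ℝ) < (R:ℝ) := by linarith
  have hj1' : (1:ℝ) ≤ (j:ℝ) := by exact_mod_cast hj1
  have hjD' : (j:ℝ) ≤ (D:ℝ) := by exact_mod_cast hjD
  have hd0 : (0:ℝ) < (d:ℝ) := by exact_mod_cast hd
  set S := Set.univ.pi fun _ : Fin d => Set.Icc (-(R:ℝ)) (R:ℝ) with hSdef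
  have hSc : IsCompact S := isCompact_univ_pi fun _ => isCompact_Icc
  have hSm : MeasurableSet S := MeasurableSet.univ_pi fun _ => measurableSet_Icc
  -- the big coordinate
  have hsum : ∑ i, wst i ^ 2 = R_w ^ 2 := by
    rw [← hw]
    exact (Real.sq_sqrt (Finset.sum_nonneg fun i _ => sq_nonneg _)).symm
  obtain ⟨i₀, hi₀⟩ : ∃ i₀ : Fin d, R_w ^ 2 / d ≤ wst i₀ ^ 2 := by
    by_contra hcon
    push_neg at hcon
    haveI : NeZero d := ⟨Nat.one_le_iff_ne_zero.mp hd⟩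
    have h := Finset.sum_lt_sum_of_nonempty Finset.univ_nonempty fun i _ => hcon i
    rw [hsum, Finset.sum_const, Finset.card_univ, Fintype.card_fin, nsmul_eq_mul,
      mul_div_cancel₀ _ (ne_of_gt hd0)] at h
    exact lt_irrefl _ h
  have hwpos : 0 < |wst i₀| := by
    have h1 : 0 < R_w ^ 2 / d := by positivity
    have h2 : 0 < wst i₀ ^ 2 := lt_of_lt_of_le h1 hi₀
    have hne : wst i₀ ≠ 0 := fun h0 => by rw [h0] at h2; simp at h2
    exact abs_pos.mpr hne
  have hRw_le : R_w ≤ Real.sqrt d * |wst i₀| := by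
    have h2 : R_w ^ 2 ≤ (Real.sqrt d * |wst i₀|) ^ 2 := by
      rw [mul_pow, Real.sq_sqrt hd0.le, sq_abs]
      rw [div_le_iff₀ hd0] at hi₀
      nlinarith [hi₀]
    calc R_w = Real.sqrt (R_w ^ 2) := (Real.sqrt_sq hRw.le).symm
      _ ≤ Real.sqrt ((Real.sqrt d * |wst i₀|) ^ 2) := Real.sqrt_le_sqrt h2
      _ = Real.sqrt d * |wst i₀| := Real.sqrt_sq (by positivity)
  -- continuity helpers
  have hcsum : ∀ w : Fin d → ℝ, Continuous fun x : Fin d → ℝ => ∑ i, x i * w i :=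
    fun w => continuous_finset_sum _ fun i _ => (continuous_apply i).mul continuous_const
  have hcos1 : Continuous fun x : Fin d → ℝ => Real.cos (2 * π * j * ∑ i, x i * wh i) :=
    Real.continuous_cos.comp (continuous_const.mul (hcsum wh))
  have hcos2 : Continuous fun x : Fin d → ℝ => Real.cos (2 * π * j * ∑ i, x i * wst i) :=
    Real.continuous_cos.comp (continuous_const.mul (hcsum wst))
  have habscont : Continuous fun x : Fin d → ℝ => ∑ i, |x i| :=
    continuous_finset_sum _ fun i _ => continuous_abs.comp (continuous_apply i)
  have hint1 : IntegrableOn (fun x : Fin d → ℝ =>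
      Real.cos (2 * π * j * ∑ i, x i * wh i) * Real.cos (2 * π * j * ∑ i, x i * wst i)) S :=
    (hcos1.mul hcos2).continuousOn.integrableOn_compact hSc
  have hint2a : IntegrableOn
      (fun x : Fin d → ℝ => Real.cos (2 * π * j * ∑ i, x i * wst i) ^ 2) S :=
    (hcos2.pow 2).continuousOn.integrableOn_compact hSc
  have hint2b : IntegrableOn
      (fun x : Fin d → ℝ => 2 * π * j * ε₁ * ∑ i, |x i|) S :=
    (continuous_const.mul habscont).continuousOn.integrableOn_compact hSc
  have hintcos2B : IntegrableOn
      (fun x : Fin d → ℝ => Real.cos (4 * π * j * ∑ i, x i * wst i) / 2) S :=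
    ((Real.continuous_cos.comp (continuous_const.mul (hcsum wst))).div_const 2
      ).continuousOn.integrableOn_compact hSc
  have hintabs : ∀ i : Fin d, IntegrableOn (fun x : Fin d → ℝ => |x i|) S :=
    fun i => (continuous_abs.comp (continuous_apply i)).continuousOn.integrableOn_compact hSc
  -- pointwise bound
  have hptw : ∀ x ∈ S,
      Real.cos (2 * π * j * ∑ i, x i * wh i) * Real.cos (2 * π * j * ∑ i, x i * wst i)
        ≤ Real.cos (2 * π * j * ∑ i, x i * wst i) ^ 2 + 2 * π * j * ε₁ * ∑ i, |x i| := by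
    intro x _
    set A := 2 * π * (j:ℝ) * ∑ i, x i * wh i with hA
    set B := 2 * π * (j:ℝ) * ∑ i, x i * wst i with hB
    have h2 : |Real.cos A - Real.cos B| ≤ |A - B| := by
      rw [Real.cos_sub_cos]
      calc |(-2) * Real.sin ((A + B) / 2) * Real.sin ((A - B) / 2)|
          = 2 * |Real.sin ((A + B) / 2)| * |Real.sin ((A - B) / 2)| := by
            rw [abs_mul, abs_mul]; norm_num
        _ ≤ 2 * 1 * |(A - B) / 2| := by
            refine mul_le_mul (by
              have := Real.abs_sin_le_one ((A + B) / 2)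
              nlinarith) (Real.abs_sin_le_abs) (abs_nonneg _) (by norm_num)
        _ = |A - B| := by rw [abs_div, abs_two]; ring
    have h3 : |A - B| ≤ 2 * π * j * ε₁ * ∑ i, |x i| := by
      have hAB : A - B = 2 * π * (j:ℝ) * ∑ i, x i * (wh i - wst i) := by
        rw [hA, hB, ← mul_sub, ← Finset.sum_sub_distrib]
        congr 1
        exact Finset.sum_congr rfl fun i _ => by ring
      rw [hAB, abs_mul, abs_of_nonneg (by positivity : (0:ℝ) ≤ 2 * π * (j:ℝ))]
      have hs : |∑ i, x i * (wh i - wst i)| ≤ (∑ i, |x i|) * ε₁ := by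
        rw [Finset.sum_mul]
        refine (Finset.abs_sum_le_sum_abs _ _).trans (Finset.sum_le_sum fun i _ => ?_)
        rw [abs_mul]
        exact mul_le_mul_of_nonneg_left (hclose i) (abs_nonneg _)
      calc 2 * π * (j:ℝ) * |∑ i, x i * (wh i - wst i)|
          ≤ 2 * π * (j:ℝ) * ((∑ i, |x i|) * ε₁) :=
            mul_le_mul_of_nonneg_left hs (by positivity)
        _ = 2 * π * j * ε₁ * ∑ i, |x i| := by ring
    have h4 : (Real.cos A - Real.cos B) * Real.cos B ≤ |A - B| := by
      calc (Real.cos A - Real.cos B) * Real.cos B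
          ≤ |(Real.cos A - Real.cos B) * Real.cos B| := le_abs_self _
        _ = |Real.cos A - Real.cos B| * |Real.cos B| := abs_mul _ _
        _ ≤ |A - B| * 1 := mul_le_mul h2 (Real.abs_cos_le_one B) (abs_nonneg _) (abs_nonneg _)
        _ = |A - B| := mul_one _
    nlinarith [h3, h4]
  -- volume
  have hvol : (volume S).toReal = (2 * (R:ℝ)) ^ d := by
    have h : volume S = ∏ _i : Fin d, volume (Set.Icc (-(R:ℝ)) (R:ℝ)) := volume_pi_pi _
    rw [h, Real.volume_Icc, show (R:ℝ) - -(R:ℝ) = 2 * (R:ℝ) by ring, Finset.prod_const,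
      Finset.card_univ, Fintype.card_fin, ENNReal.toReal_pow,
      ENNReal.toReal_ofReal (by positivity)]
  -- step 1: monotonicity
  have step1 : (∫ x in S, Real.cos (2 * π * j * ∑ i, x i * wh i) *
        Real.cos (2 * π * j * ∑ i, x i * wst i))
      ≤ ∫ x in S, (Real.cos (2 * π * j * ∑ i, x i * wst i) ^ 2
          + 2 * π * j * ε₁ * ∑ i, |x i|) :=
    setIntegral_mono_on hint1 (hint2a.add hint2b) hSm hptw
  -- step 2: split
  have step2 : (∫ x in S, (Real.cos (2 * π * j * ∑ i, x i * wst i) ^ 2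
          + 2 * π * j * ε₁ * ∑ i, |x i|))
      = (∫ x in S, Real.cos (2 * π * j * ∑ i, x i * wst i) ^ 2)
        + ∫ x in S, 2 * π * j * ε₁ * ∑ i, |x i| :=
    integral_add hint2a hint2b
  -- step 3: cos squared
  have step3 : (∫ x in S, Real.cos (2 * π * j * ∑ i, x i * wst i) ^ 2)
      ≤ (2 * (R:ℝ)) ^ d * (1/2) + (2 * (R:ℝ)) ^ (d - 1) * (1 / (4 * π * j * |wst i₀|)) := by
    have hrw : ∀ x : Fin d → ℝ,
        Real.cos (2 * π * (j:ℝ) * ∑ i, x i * wst i) ^ 2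
          = 1/2 + Real.cos (4 * π * (j:ℝ) * ∑ i, x i * wst i) / 2 := by
      intro x
      rw [Real.cos_sq]
      congr 2
      ring
    simp_rw [hrw]
    rw [integral_add (integrableOn_const (C := (1/2:ℝ)) hSc.measure_lt_top.ne) hintcos2B]
    have hconst : (∫ _x in S, (1/2 : ℝ)) = (2 * (R:ℝ)) ^ d * (1/2) := by
      rw [setIntegral_const, measureReal_def, hvol, smul_eq_mul]
    rw [hconst]
    have hosc : (∫ x in S, Real.cos (4 * π * (j:ℝ) * ∑ i, x i * wst i))
        ≤ (2 * (R:ℝ)) ^ (d - 1) * (2 / |4 * π * (j:ℝ) * wst i₀|) :=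
      stmt12_osc hRpos (4 * π * (j:ℝ)) wst i₀
        (mul_ne_zero (by positivity) (abs_pos.mp hwpos))
    have habs : |4 * π * (j:ℝ) * wst i₀| = 4 * π * (j:ℝ) * |wst i₀| := by
      rw [abs_mul, abs_of_pos (by positivity : (0:ℝ) < 4 * π * (j:ℝ))]
    rw [habs] at hosc
    have : (∫ x in S, Real.cos (4 * π * (j:ℝ) * ∑ i, x i * wst i) / 2)
        = (∫ x in S, Real.cos (4 * π * (j:ℝ) * ∑ i, x i * wst i)) / 2 := integral_div _ _
    rw [this]
    have h2 : (2 * (R:ℝ)) ^ (d - 1) * (2 / (4 * π * (j:ℝ) * |wst i₀|)) / 2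
        = (2 * (R:ℝ)) ^ (d - 1) * (1 / (4 * π * (j:ℝ) * |wst i₀|)) := by
      field_simp
    linarith [hosc]
  -- step 4: the abs sum
  have step4 : (∫ x in S, 2 * π * j * ε₁ * ∑ i, |x i|)
      = 2 * π * j * ε₁ * ((d:ℝ) * ((2 * (R:ℝ)) ^ (d - 1) * (R:ℝ) ^ 2)) := by
    rw [integral_const_mul]
    congr 1
    rw [integral_finset_sum _ fun i _ => hintabs i]
    simp_rw [hSdef, stmt12_abs_coord hRpos]
    rw [Finset.sum_const, Finset.card_univ, Fintype.card_fin, nsmul_eq_mul]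
  -- assembly
  have hV : (0:ℝ) < (2 * (R:ℝ)) ^ d := by positivity
  rw [one_div, inv_mul_le_iff₀ hV]
  have hpow : (2 * (R:ℝ)) ^ d = (2 * (R:ℝ)) ^ (d - 1) * (2 * (R:ℝ)) := by
    conv_lhs => rw [show d = (d - 1) + 1 from (Nat.succ_pred_eq_of_pos hd).symm]
    rw [pow_succ]
  set P := (2 * (R:ℝ)) ^ (d - 1) with hP
  have hPpos : (0:ℝ) < P := by positivity
  have hT2 : P * (1 / (4 * π * j * |wst i₀|)) ≤ (2 * (R:ℝ)) ^ d * (Real.sqrt d / (8 * π * R_w * R)) := by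
    rw [hpow]
    have hkey : 1 / (4 * π * (j:ℝ) * |wst i₀|) ≤ Real.sqrt d / (4 * π * R_w) := by
      rw [div_le_div_iff₀ (by positivity) (by positivity)]
      have hsd : (0:ℝ) ≤ Real.sqrt d := Real.sqrt_nonneg _
      have hA := mul_le_mul_of_nonneg_left hRw_le (by positivity : (0:ℝ) ≤ 4 * π)
      have hB := mul_le_mul_of_nonneg_right hj1'
        (by positivity : (0:ℝ) ≤ 4 * π * (Real.sqrt d * |wst i₀|))
      linarith [hA, hB]
    calc P * (1 / (4 * π * (j:ℝ) * |wst i₀|)) ≤ P * (Real.sqrt d / (4 * π * R_w)) :=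
          mul_le_mul_of_nonneg_left hkey hPpos.le
      _ = P * (2 * (R:ℝ)) * (Real.sqrt d / (8 * π * R_w * R)) := by
          field_simp
          ring
  have hT3 : 2 * π * j * ε₁ * ((d:ℝ) * (P * (R:ℝ) ^ 2))
      ≤ (2 * (R:ℝ)) ^ d * (π * D * d * ε₁ * R) := by
    rw [hpow]
    calc 2 * π * (j:ℝ) * ε₁ * ((d:ℝ) * (P * (R:ℝ) ^ 2))
        = P * (2 * π * (j:ℝ) * ε₁ * (d:ℝ) * (R:ℝ) ^ 2) := by ring
      _ ≤ P * (2 * π * (D:ℝ) * ε₁ * (d:ℝ) * (R:ℝ) ^ 2) := by gcongr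
      _ = P * (2 * (R:ℝ)) * (π * D * d * ε₁ * R) := by ring
  calc (∫ x in S, Real.cos (2 * π * j * ∑ i, x i * wh i) *
        Real.cos (2 * π * j * ∑ i, x i * wst i))
      ≤ (2 * (R:ℝ)) ^ d * (1/2) + P * (1 / (4 * π * j * |wst i₀|))
        + 2 * π * j * ε₁ * ((d:ℝ) * (P * (R:ℝ) ^ 2)) := by
        linarith [step1, step2.le, step3, step4.le]
    _ ≤ (2 * (R:ℝ)) ^ d * (1/2 + Real.sqrt d / (8 * π * R_w * R) + π * D * d * ε₁ * R) := by
        rw [mul_add, mul_add]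
        linarith [hT2, hT3]
end

section
/- Let d, D ≥ 1 be integers, R_w > 0, R ≥ 1 an integer, and ε₁ > 0 with √d·ε₁ < R_w. Let w* ∈ ℝ^d with ‖w*‖₂ = R_w and let ŵ ∈ ℝ^d with ‖ŵ − w*‖_∞ ≤ ε₁. Let j be an integer with 1 ≤ j ≤ D. Then (2R)^{−d} ∫_{[−R,R]^d} cos²(2πj⟨x, ŵ⟩) dx ≥ 1/2 − √d/(8πR(R_w − √d·ε₁)). -/
open MeasureTheory Real
open scoped BigOperators

section Helpers
open Complex

lemma indicator_pi_prod {d : ℕ} (s : Fin d → Set ℝ) (g : Fin d → ℝ → ℂ) (x : Fin d → ℝ) :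
    (Set.univ.pi s).indicator (fun x => ∏ i, g i (x i)) x = ∏ i, (s i).indicator (g i) (x i) := by
  by_cases h : x ∈ Set.univ.pi s
  · rw [Set.indicator_of_mem h]
    exact Finset.prod_congr rfl fun i _ =>
      (Set.indicator_of_mem (h i (Set.mem_univ i)) _).symm
  · rw [Set.indicator_of_notMem h]
    rw [Set.mem_pi] at h
    push_neg at h
    obtain ⟨i, -, hi⟩ := h
    exact (Finset.prod_eq_zero (Finset.mem_univ i) (Set.indicator_of_notMem hi _)).symm

lemma integral_cube_prod {d : ℕ} (s : Fin d → Set ℝ) (hs : ∀ i, MeasurableSet (s i))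
    (g : Fin d → ℝ → ℂ) :
    ∫ x in Set.univ.pi s, ∏ i, g i (x i) = ∏ i, ∫ t in s i, g i t := by
  rw [← integral_indicator (MeasurableSet.univ_pi hs)]
  simp_rw [indicator_pi_prod]
  rw [integral_fintype_prod_volume_eq_prod (f := fun i => (s i).indicator (g i))]
  simp_rw [integral_indicator (hs _)]

lemma expIntegral_bound (c R : ℝ) (hc : c ≠ 0) (hR : 0 ≤ R) :
    ‖∫ t in Set.Icc (-R) R, Complex.exp (c * t * Complex.I)‖ ≤ 2 / |c| := by
  have h1 : ∀ t : ℝ, (c : ℂ) * t * Complex.I = ((c : ℂ) * Complex.I) * t := fun t => by ring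
  simp_rw [h1]
  rw [integral_Icc_eq_integral_Ioc, ← intervalIntegral.integral_of_le (by linarith)]
  rw [integral_exp_mul_complex (by simp [hc, Complex.I_ne_zero, Complex.ext_iff])]
  have hnorm : ∀ x : ℝ, ‖Complex.exp ((c : ℂ) * Complex.I * x)‖ = 1 := by
    intro x
    have : (c : ℂ) * Complex.I * x = ((c * x : ℝ) : ℂ) * Complex.I := by push_cast; ring
    rw [this]
    exact Complex.norm_exp_ofReal_mul_I _
  rw [norm_div]
  have h2 : ‖Complex.exp ((c:ℂ) * Complex.I * R) - Complex.exp ((c:ℂ) * Complex.I * ((-R : ℝ) : ℂ))‖ ≤ 2 := by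
    calc _ ≤ ‖Complex.exp ((c:ℂ) * Complex.I * R)‖ + ‖Complex.exp ((c:ℂ) * Complex.I * ((-R : ℝ) : ℂ))‖ :=
          norm_sub_le _ _
      _ = 2 := by rw [hnorm R, hnorm (-R)]; norm_num
  have h3 : ‖(c : ℂ) * Complex.I‖ = |c| := by
    simp
  rw [h3]
  gcongr


lemma cos_integral_bound {d : ℕ} (R : ℝ) (hR : 0 < R) (b : ℝ) (w : Fin d → ℝ) (i₀ : Fin d)
    (hc : b * w i₀ ≠ 0) :
    |∫ x in Set.univ.pi fun _ : Fin d => Set.Icc (-R) R, Real.cos (b * ∑ i, x i * w i)|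
      ≤ (2 / |b * w i₀|) * (2 * R) ^ (d - 1) := by
  set S := Set.univ.pi fun _ : Fin d => Set.Icc (-R) R with hS
  have hScompact : IsCompact S := isCompact_univ_pi fun _ => isCompact_Icc
  -- rewrite cos as real part of complex exponential
  have hcos : ∀ x : Fin d → ℝ,
      Real.cos (b * ∑ i, x i * w i)
        = (∏ i, Complex.exp (((b * (x i * w i) : ℝ) : ℂ) * Complex.I)).re := by
    intro x
    rw [← Complex.exp_sum]
    have : (∑ i, ((b * (x i * w i) : ℝ) : ℂ) * Complex.I)
        = ((b * ∑ i, x i * w i : ℝ) : ℂ) * Complex.I := by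
      push_cast
      rw [Finset.mul_sum, Finset.sum_mul]
    rw [this, Complex.exp_ofReal_mul_I_re]
  simp_rw [hcos]
  -- integrability
  have hcont : Continuous fun x : Fin d → ℝ =>
      ∏ i, Complex.exp (((b * (x i * w i) : ℝ) : ℂ) * Complex.I) := by
    continuity
  have hint : IntegrableOn (fun x : Fin d → ℝ =>
      ∏ i, Complex.exp (((b * (x i * w i) : ℝ) : ℂ) * Complex.I)) S := by
    exact hcont.continuousOn.integrableOn_compact hScompact
  simp_rw [← RCLike.re_eq_complex_re]
  rw [integral_re hint, RCLike.re_eq_complex_re]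
  refine le_trans (Complex.abs_re_le_norm _) ?_
  rw [hS, integral_cube_prod _ (fun _ => measurableSet_Icc)
    (fun i t => Complex.exp (((b * (t * w i) : ℝ) : ℂ) * Complex.I))]
  rw [norm_prod]
  -- split off factor i₀
  rw [← Finset.mul_prod_erase Finset.univ _ (Finset.mem_univ i₀)]
  have hfac : ‖∫ t in Set.Icc (-R) R, Complex.exp (((b * (t * w i₀) : ℝ) : ℂ) * Complex.I)‖
      ≤ 2 / |b * w i₀| := by
    have h1 : ∀ t : ℝ, ((b * (t * w i₀) : ℝ) : ℂ) = ((b * w i₀ : ℝ) : ℂ) * (t : ℂ) := fun t => by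
      push_cast; ring
    simp_rw [h1]
    exact expIntegral_bound (b * w i₀) R hc hR.le
  have hothers : ∀ i : Fin d,
      ‖∫ t in Set.Icc (-R) R, Complex.exp (((b * (t * w i) : ℝ) : ℂ) * Complex.I)‖ ≤ 2 * R := by
    intro i
    have := norm_setIntegral_le_of_norm_le_const (μ := volume) (s := Set.Icc (-R) R)
      (f := fun t : ℝ => Complex.exp (((b * (t * w i) : ℝ) : ℂ) * Complex.I)) (C := 1)
      (by rw [Real.volume_Icc]; exact ENNReal.ofReal_lt_top)
      (fun x _ => by rw [Complex.norm_exp_ofReal_mul_I])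
    refine this.trans ?_
    rw [Real.volume_real_Icc, max_eq_left (by linarith)]
    linarith
  refine mul_le_mul hfac ?_ (Finset.prod_nonneg fun i _ => norm_nonneg _)
    (by positivity)
  calc (Finset.univ.erase i₀).prod
        (fun i => ‖∫ t in Set.Icc (-R) R, Complex.exp (((b * (t * w i) : ℝ) : ℂ) * Complex.I)‖)
      ≤ (Finset.univ.erase i₀).prod (fun _ => 2 * R) :=
        Finset.prod_le_prod (fun i _ => norm_nonneg _) (fun i _ => hothers i)
    _ = (2 * R) ^ (d - 1) := by
        rw [Finset.prod_const, Finset.card_erase_of_mem (Finset.mem_univ i₀),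
          Finset.card_univ, Fintype.card_fin]

end Helpers

/-- Lower bound on the cube-average of `cos²(2πj⟨x,ŵ⟩)`. -/
theorem stmt13 (d D : ℕ) (hd : 1 ≤ d) (hD : 1 ≤ D) (R_w : ℝ) (hRw : 0 < R_w)
    (R : ℕ) (hR : 1 ≤ R) (ε₁ : ℝ) (hε₁ : 0 < ε₁)
    (hεR : Real.sqrt d * ε₁ < R_w)
    (wst wh : Fin d → ℝ)
    (hw : Real.sqrt (∑ i, wst i ^ 2) = R_w)
    (hclose : ∀ i, |wh i - wst i| ≤ ε₁)
    (j : ℕ) (hj1 : 1 ≤ j) (hjD : j ≤ D) :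
    1 / 2 - Real.sqrt d / (8 * π * R * (R_w - Real.sqrt d * ε₁))
      ≤ (1 / (2 * (R : ℝ)) ^ d) *
          ∫ x in Set.univ.pi fun _ : Fin d => Set.Icc (-(R : ℝ)) (R : ℝ),
            Real.cos (2 * π * j * ∑ i, x i * wh i) ^ 2 := by
  have hdpos : (0 : ℝ) < d := by exact_mod_cast hd
  have hspos : (0 : ℝ) < Real.sqrt d := Real.sqrt_pos.mpr hdpos
  have hRpos : (0 : ℝ) < (R : ℝ) := by exact_mod_cast hR
  have hApos : (0 : ℝ) < R_w - Real.sqrt d * ε₁ := by linarith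
  set Rr : ℝ := (R : ℝ) with hRr
  set S := Set.univ.pi fun _ : Fin d => Set.Icc (-Rr) Rr with hSdef
  have hScompact : IsCompact S := isCompact_univ_pi fun _ => isCompact_Icc
  set b : ℝ := 4 * π * j with hb
  have hπ := Real.pi_pos
  have hjR : (1 : ℝ) ≤ j := by exact_mod_cast hj1
  have hbpos : 0 < b := by rw [hb]; positivity
  have hb4 : 4 * π ≤ b := by rw [hb]; nlinarith
  -- find a coordinate with large |wst i|
  have hsum : ∑ i, wst i ^ 2 = R_w ^ 2 := by
    have h0 : (0:ℝ) ≤ ∑ i, wst i ^ 2 := Finset.sum_nonneg fun i _ => sq_nonneg _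
    rw [← Real.sq_sqrt h0, hw]
  haveI hne : Nonempty (Fin d) := Fin.pos_iff_nonempty.mp hd
  obtain ⟨i₀, -, hi₀⟩ := Finset.exists_le_of_sum_le (s := (Finset.univ : Finset (Fin d)))
    (f := fun _ : Fin d => R_w ^ 2 / d) (g := fun i => wst i ^ 2)
    Finset.univ_nonempty
    (by rw [hsum, Finset.sum_const, Finset.card_univ, Fintype.card_fin, nsmul_eq_mul]
        rw [mul_div_cancel₀ _ (ne_of_gt hdpos)])
  have hwst : R_w / Real.sqrt d ≤ |wst i₀| := by
    have h1 : Real.sqrt (R_w ^ 2 / d) ≤ Real.sqrt (wst i₀ ^ 2) := Real.sqrt_le_sqrt hi₀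
    rwa [Real.sqrt_sq_eq_abs, Real.sqrt_div (sq_nonneg _), Real.sqrt_sq hRw.le] at h1
  have hwh : (R_w - Real.sqrt d * ε₁) / Real.sqrt d ≤ |wh i₀| := by
    have h2 : |wst i₀| - |wh i₀ - wst i₀| ≤ |wh i₀| := by
      have h := abs_sub_abs_le_abs_sub (wst i₀) (wh i₀)
      rw [abs_sub_comm] at h
      linarith
    have h4 : (R_w - Real.sqrt d * ε₁) / Real.sqrt d = R_w / Real.sqrt d - ε₁ := by
      rw [sub_div, mul_comm, mul_div_assoc, div_self (ne_of_gt hspos), mul_one]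
    rw [h4]
    linarith [hclose i₀]
  have hWpos : 0 < |wh i₀| := lt_of_lt_of_le (by positivity) hwh
  have hcne : b * wh i₀ ≠ 0 := mul_ne_zero (ne_of_gt hbpos) (abs_pos.mp hWpos)
  -- the oscillatory integral and its bound
  set J := ∫ x in S, Real.cos (b * ∑ i, x i * wh i) with hJdef
  have hJbound : |J| ≤ (2 / |b * wh i₀|) * (2 * Rr) ^ (d - 1) :=
    cos_integral_bound Rr hRpos b wh i₀ hcne
  -- compute the integral of cos²
  have hcossq : ∀ x : Fin d → ℝ,
      Real.cos (2 * π * j * ∑ i, x i * wh i) ^ 2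
        = 1 / 2 + Real.cos (b * ∑ i, x i * wh i) / 2 := by
    intro x
    rw [Real.cos_sq, show 2 * (2 * π * (j:ℝ) * ∑ i, x i * wh i) = b * ∑ i, x i * wh i from by
      rw [hb]; ring]
  have hvol : (volume S).toReal = (2 * Rr) ^ d := by
    rw [hSdef, volume_pi_pi]
    simp only [Real.volume_Icc]
    rw [show Rr - -Rr = 2 * Rr from by ring, Finset.prod_const, Finset.card_univ,
      Fintype.card_fin, ← ENNReal.ofReal_pow (by positivity), ENNReal.toReal_ofReal (by positivity)]
  have hintcos : IntegrableOn (fun x : Fin d → ℝ => Real.cos (b * ∑ i, x i * wh i)) S := by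
    refine Continuous.continuousOn ?_ |>.integrableOn_compact hScompact
    exact Real.continuous_cos.comp (continuous_const.mul
      (continuous_finset_sum _ fun i _ => (continuous_apply i).mul continuous_const))
  have hsplit : (∫ x in S, Real.cos (2 * π * j * ∑ i, x i * wh i) ^ 2)
      = (2 * Rr) ^ d / 2 + J / 2 := by
    simp_rw [hcossq]
    rw [integral_add (integrableOn_const (C := (1 / 2 : ℝ)) hScompact.measure_lt_top.ne)
      (hintcos.div_const 2)]
    rw [setIntegral_const, integral_div, smul_eq_mul, measureReal_def, hvol, hJdef]
    ring
  rw [hsplit]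
  have hpow : (0:ℝ) < (2 * Rr) ^ d := by positivity
  have hgoal2 : |J| / (2 * (2 * Rr) ^ d)
      ≤ Real.sqrt d / (8 * π * Rr * (R_w - Real.sqrt d * ε₁)) := by
    have hd1 : (2 * Rr) ^ d = (2 * Rr) ^ (d - 1) * (2 * Rr) := by
      rw [← pow_succ, Nat.sub_add_cancel hd]
    have hpow1 : (0:ℝ) < (2 * Rr) ^ (d - 1) := by positivity
    have step1 : |J| / (2 * (2 * Rr) ^ d) ≤ 1 / (2 * Rr * (b * |wh i₀|)) := by
      rw [hd1, div_le_div_iff₀ (by positivity) (by positivity)]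
      calc |J| * (2 * Rr * (b * |wh i₀|))
          ≤ (2 / |b * wh i₀| * (2 * Rr) ^ (d - 1)) * (2 * Rr * (b * |wh i₀|)) := by
            apply mul_le_mul_of_nonneg_right hJbound (by positivity)
        _ = 1 * (2 * ((2 * Rr) ^ (d - 1) * (2 * Rr))) := by
            rw [abs_mul, abs_of_pos hbpos]
            field_simp
    have step2 : 1 / (2 * Rr * (b * |wh i₀|))
        ≤ Real.sqrt d / (8 * π * Rr * (R_w - Real.sqrt d * ε₁)) := by
      rw [div_le_div_iff₀ (by positivity) (by positivity)]
      have hsw : R_w - Real.sqrt d * ε₁ ≤ Real.sqrt d * |wh i₀| := by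
        have := (div_le_iff₀ hspos).mp hwh
        linarith [this]
      have e1 : 8 * π * Rr * (R_w - Real.sqrt d * ε₁) ≤ 2 * Rr * b * (R_w - Real.sqrt d * ε₁) := by
        nlinarith [mul_le_mul_of_nonneg_left hb4 (show (0:ℝ) ≤ 2 * Rr * (R_w - Real.sqrt d * ε₁) by positivity)]
      have e2 : 2 * Rr * b * (R_w - Real.sqrt d * ε₁) ≤ 2 * Rr * b * (Real.sqrt d * |wh i₀|) :=
        mul_le_mul_of_nonneg_left hsw (by positivity)
      have e3 : Real.sqrt d * (2 * Rr * (b * |wh i₀|)) = 2 * Rr * b * (Real.sqrt d * |wh i₀|) := by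
        ring
      rw [one_mul, e3]
      linarith
    exact step1.trans step2
  have hJle : -(Real.sqrt d / (8 * π * Rr * (R_w - Real.sqrt d * ε₁)))
      ≤ J / (2 * (2 * Rr) ^ d) := by
    have h5 : -(|J| / (2 * (2 * Rr) ^ d)) ≤ J / (2 * (2 * Rr) ^ d) := by
      rw [← neg_div]
      gcongr
      exact neg_abs_le J
    linarith [hgoal2]
  have hfinal : (1 / (2 * Rr) ^ d) * ((2 * Rr) ^ d / 2 + J / 2)
      = 1 / 2 + J / (2 * (2 * Rr) ^ d) := by
    have hPne : ((2 * Rr) ^ d : ℝ) ≠ 0 := ne_of_gt hpow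
    field_simp
  rw [hfinal]
  linarith [hJle]
end

section
/- Let d, D ≥ 1 be integers, R_w > 0, R ≥ 1 an integer, and ε₁ > 0 with √d·ε₁ < R_w. Let w* ∈ ℝ^d with ‖w*‖₂ = R_w and let ŵ ∈ ℝ^d with ‖ŵ − w*‖_∞ ≤ ε₁. Let j, j' be integers with 1 ≤ j, j' ≤ D and j ≠ j'. Then | (2R)^{−d} ∫_{[−R,R]^d} cos(2πj⟨x, ŵ⟩) cos(2πj'⟨x, ŵ⟩) dx | ≤ (1/(2πR)) · √d / (R_w − √d·ε₁). -/
open MeasureTheory Real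
open scoped BigOperators

lemma aux_factor_triv (a R : ℝ) (hR : 0 ≤ R) :
    ‖∫ t in Set.Icc (-R) R, Complex.exp ((a * t : ℝ) * Complex.I)‖ ≤ 2 * R := by
  have h := norm_setIntegral_le_of_norm_le_const (μ := volume)
      (s := Set.Icc (-R) R) (C := 1) (f := fun t : ℝ => Complex.exp ((a * t : ℝ) * Complex.I))
      (by rw [Real.volume_Icc]; exact ENNReal.ofReal_lt_top)
      (fun x _ => by simp only [Complex.norm_exp_ofReal_mul_I]; norm_num)
  rw [measureReal_def, Real.volume_Icc, ENNReal.toReal_ofReal (by linarith)] at h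
  calc _ ≤ 1 * (R - -R) := h
  _ = 2 * R := by ring

lemma aux_factor_sharp (a R : ℝ) (ha : a ≠ 0) (hR : 0 ≤ R) :
    ‖∫ t in Set.Icc (-R) R, Complex.exp ((a * t : ℝ) * Complex.I)‖ ≤ 2 / |a| := by
  have hc : ((a : ℂ) * Complex.I) ≠ 0 := by
    simp [Complex.ext_iff, ha]
  have h1 : ∀ t : ℝ, ((a * t : ℝ) : ℂ) * Complex.I = ((a:ℂ) * Complex.I) * (t:ℂ) := by
    intro t; push_cast; ring
  have h2 : (∫ t in Set.Icc (-R) R, Complex.exp ((a * t : ℝ) * Complex.I))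
      = (Complex.exp (((a:ℂ)*Complex.I) * (R:ℝ)) - Complex.exp (((a:ℂ)*Complex.I) * ((-R:ℝ)))) / ((a:ℂ)*Complex.I) := by
    rw [← integral_exp_mul_complex hc (a := -R) (b := R)]
    rw [intervalIntegral.integral_of_le (by linarith), MeasureTheory.integral_Icc_eq_integral_Ioc]
    exact setIntegral_congr_fun measurableSet_Ioc fun t _ => by rw [h1 t]
  rw [h2]
  rw [norm_div]
  have hnum : ‖Complex.exp (((a:ℂ)*Complex.I) * (R:ℝ)) - Complex.exp (((a:ℂ)*Complex.I) * ((-R:ℝ)))‖ ≤ 2 := by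
    have e1 : ((a:ℂ)*Complex.I) * (R:ℝ) = ((a*R : ℝ):ℂ) * Complex.I := by push_cast; ring
    have e2 : ((a:ℂ)*Complex.I) * ((-R:ℝ)) = ((a*(-R) : ℝ):ℂ) * Complex.I := by push_cast; ring
    calc _ ≤ ‖Complex.exp (((a:ℂ)*Complex.I) * (R:ℝ))‖ + ‖Complex.exp (((a:ℂ)*Complex.I) * ((-R:ℝ)))‖ :=
        norm_sub_le _ _
    _ ≤ 2 := by
        rw [e1, e2]
        simp only [Complex.norm_exp_ofReal_mul_I]
        norm_num
  have hden : ‖(a:ℂ)*Complex.I‖ = |a| := by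
    simp
  rw [hden]
  gcongr

lemma aux_cos_bound (d : ℕ) (R : ℝ) (hR : 0 < R) (w : Fin d → ℝ) (c : ℝ) (hc : c ≠ 0)
    (i₀ : Fin d) (hw0 : w i₀ ≠ 0) :
    |∫ x in Set.univ.pi fun _ : Fin d => Set.Icc (-R) R, Real.cos (c * ∑ i, x i * w i)|
      ≤ (2 / (|c| * |w i₀|)) * (2*R)^(d-1) := by
  set f : Fin d → ℝ → ℂ := fun i t => Complex.exp ((c * w i * t : ℝ) * Complex.I) with hf
  have hsum : ∀ x : Fin d → ℝ,
      ((c * ∑ i, x i * w i : ℝ) : ℂ) * Complex.I = ∑ i, ((c * w i * (x i) : ℝ):ℂ) * Complex.I := by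
    intro x
    rw [← Finset.sum_mul]
    congr 1
    push_cast
    rw [Finset.mul_sum]
    exact Finset.sum_congr rfl fun i _ => by ring
  have hprod : ∀ x : Fin d → ℝ,
      (∏ i, f i (x i)) = Complex.exp (((c * ∑ i, x i * w i : ℝ)) * Complex.I) := by
    intro x
    rw [hsum x, Complex.exp_sum]
  have hre : ∀ x : Fin d → ℝ, Real.cos (c * ∑ i, x i * w i) = (∏ i, f i (x i)).re := by
    intro x
    rw [hprod x, Complex.exp_ofReal_mul_I_re]
  have hcont : Continuous fun x : Fin d → ℝ => ∏ i, f i (x i) := by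
    apply continuous_finset_prod
    intro i _
    simp only [hf]
    fun_prop
  have hcube : MeasurableSet (Set.univ.pi fun _ : Fin d => Set.Icc (-R) R) :=
    MeasurableSet.univ_pi fun _ => measurableSet_Icc
  have hcompact : IsCompact (Set.univ.pi fun _ : Fin d => Set.Icc (-R) R) :=
    isCompact_univ_pi fun _ => isCompact_Icc
  have hint : IntegrableOn (fun x : Fin d → ℝ => ∏ i, f i (x i))
      (Set.univ.pi fun _ : Fin d => Set.Icc (-R) R) volume :=
    hcont.continuousOn.integrableOn_compact hcompact
  have step1 : (∫ x in Set.univ.pi fun _ : Fin d => Set.Icc (-R) R,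
        Real.cos (c * ∑ i, x i * w i))
      = (∫ x in Set.univ.pi fun _ : Fin d => Set.Icc (-R) R, ∏ i, f i (x i)).re := by
    rw [setIntegral_congr_fun hcube fun x _ => hre x]
    exact (integral_re (𝕜 := ℂ) hint)
  rw [step1]
  have step2 : (∫ x in Set.univ.pi fun _ : Fin d => Set.Icc (-R) R, ∏ i, f i (x i))
      = ∏ i, ∫ t in Set.Icc (-R) R, f i t := by
    rw [← integral_indicator hcube]
    have hind : (Set.univ.pi fun _ : Fin d => Set.Icc (-R) R).indicator
        (fun x : Fin d → ℝ => ∏ i, f i (x i))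
        = fun x : Fin d → ℝ => ∏ i, (Set.Icc (-R) R).indicator (f i) (x i) := by
      funext x
      by_cases hx : x ∈ Set.univ.pi fun _ : Fin d => Set.Icc (-R) R
      · rw [Set.indicator_of_mem hx]
        exact Finset.prod_congr rfl fun i _ =>
          (Set.indicator_of_mem (hx i (Set.mem_univ i)) (f i)).symm
      · rw [Set.indicator_of_notMem hx]
        simp only [Set.mem_pi, Set.mem_univ, forall_true_left, not_forall] at hx
        obtain ⟨i, hi⟩ := hx
        exact (Finset.prod_eq_zero (Finset.mem_univ i)
          (Set.indicator_of_notMem hi (f i))).symm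
    rw [hind, MeasureTheory.volume_pi, MeasureTheory.integral_fintype_prod_eq_prod
      (f := fun i => (Set.Icc (-R) R).indicator (f i))]
    exact Finset.prod_congr rfl fun i _ => integral_indicator measurableSet_Icc
  rw [step2]
  calc |(∏ i, ∫ t in Set.Icc (-R) R, f i t).re|
      ≤ ‖∏ i, ∫ t in Set.Icc (-R) R, f i t‖ := Complex.abs_re_le_norm _
    _ = ∏ i, ‖∫ t in Set.Icc (-R) R, f i t‖ := norm_prod _ _
    _ ≤ ∏ i, (if i = i₀ then 2 / (|c| * |w i₀|) else 2 * R) := by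
        apply Finset.prod_le_prod (fun i _ => norm_nonneg _)
        intro i _
        by_cases h : i = i₀
        · subst h
          simp only [if_pos rfl]
          have := aux_factor_sharp (c * w i) R (mul_ne_zero hc hw0) hR.le
          rwa [abs_mul] at this
        · simp only [if_neg h]
          exact aux_factor_triv (c * w i) R hR.le
    _ = (2 / (|c| * |w i₀|)) * (2*R)^(d-1) := by
        rw [← Finset.mul_prod_erase Finset.univ _ (Finset.mem_univ i₀), if_pos rfl]
        congr 1
        rw [Finset.prod_congr rfl (fun i hi => if_neg (Finset.ne_of_mem_erase hi)),
          Finset.prod_const, Finset.card_erase_of_mem (Finset.mem_univ i₀),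
          Finset.card_univ, Fintype.card_fin]


/-- Cross-term bound: for `j ≠ j'`, the cube-average of
`cos(2πj⟨x,ŵ⟩) cos(2πj'⟨x,ŵ⟩)` has absolute value at most
`(1/(2πR)) √d / (R_w − √d ε₁)`. -/
theorem stmt14 (d D : ℕ) (hd : 1 ≤ d) (hD : 1 ≤ D) (R_w : ℝ) (hRw : 0 < R_w)
    (R : ℕ) (hR : 1 ≤ R) (ε₁ : ℝ) (hε₁ : 0 < ε₁)
    (hεR : Real.sqrt d * ε₁ < R_w)
    (wst wh : Fin d → ℝ)
    (hw : Real.sqrt (∑ i, wst i ^ 2) = R_w)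
    (hclose : ∀ i, |wh i - wst i| ≤ ε₁)
    (j j' : ℕ) (hj1 : 1 ≤ j) (hjD : j ≤ D) (hj'1 : 1 ≤ j') (hj'D : j' ≤ D)
    (hne : j ≠ j') :
    |(1 / (2 * (R : ℝ)) ^ d) *
        ∫ x in Set.univ.pi fun _ : Fin d => Set.Icc (-(R : ℝ)) (R : ℝ),
          Real.cos (2 * π * j * ∑ i, x i * wh i) *
            Real.cos (2 * π * j' * ∑ i, x i * wh i)|
      ≤ (1 / (2 * π * R)) * Real.sqrt d / (R_w - Real.sqrt d * ε₁) := by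
  have hRpos : (0:ℝ) < R := by exact_mod_cast hR
  set s : ℝ := Real.sqrt d with hs
  have hs1 : (1:ℝ) ≤ s := by
    rw [hs, show (1:ℝ) = Real.sqrt 1 by simp]
    exact Real.sqrt_le_sqrt (by exact_mod_cast hd)
  have hspos : 0 < s := lt_of_lt_of_le one_pos hs1
  set K : ℝ := R_w - s * ε₁ with hK
  have hKpos : 0 < K := by rw [hK]; linarith
  -- max coordinate
  obtain ⟨i₀, -, hmax⟩ := Finset.exists_max_image Finset.univ (fun i => |wh i|)
    ⟨⟨0, hd⟩, Finset.mem_univ _⟩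
  set M : ℝ := |wh i₀| with hM
  have hKsM : K ≤ s * M := by
    have hsum : R_w ≤ s * (M + ε₁) := by
      rw [← hw]
      have h1 : ∑ i, wst i ^ 2 ≤ ∑ _i : Fin d, (M + ε₁)^2 := by
        apply Finset.sum_le_sum
        intro i _
        have habs : |wst i| ≤ M + ε₁ := by
          have := hclose i
          have h2 := hmax i (Finset.mem_univ i)
          have := abs_sub_abs_le_abs_sub (wst i) (wh i)
          rw [abs_sub_comm] at this
          linarith [hclose i]
        calc wst i ^ 2 = |wst i| ^ 2 := (sq_abs _).symm
        _ ≤ (M + ε₁)^2 := by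
            apply pow_le_pow_left₀ (abs_nonneg _) habs
      have hMε : (0:ℝ) ≤ M + ε₁ := by positivity
      calc Real.sqrt (∑ i, wst i ^ 2) ≤ Real.sqrt (∑ _i : Fin d, (M + ε₁)^2) :=
          Real.sqrt_le_sqrt h1
      _ = Real.sqrt ((d:ℝ) * (M + ε₁)^2) := by rw [Finset.sum_const, Finset.card_univ,
          Fintype.card_fin, nsmul_eq_mul]
      _ = s * (M + ε₁) := by
          rw [Real.sqrt_mul (by positivity), Real.sqrt_sq hMε]
    rw [hK]; nlinarith
  have hMpos : 0 < M := by nlinarith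
  have hw0 : wh i₀ ≠ 0 := by
    intro h; rw [hM, h] at hMpos; simp at hMpos
  -- the two frequencies
  set c₁ : ℝ := 2 * π * ((j:ℝ) - (j':ℝ)) with hc₁
  set c₂ : ℝ := 2 * π * ((j:ℝ) + (j':ℝ)) with hc₂
  have hjj' : (1:ℝ) ≤ |(j:ℝ) - (j':ℝ)| := by
    have h0 : ((j:ℤ) - j') ≠ 0 := sub_ne_zero.mpr (by exact_mod_cast hne)
    have h1 := Int.one_le_abs h0
    calc (1:ℝ) = ((1:ℤ):ℝ) := by norm_num
    _ ≤ ((|(j:ℤ) - j'| : ℤ) : ℝ) := by exact_mod_cast h1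
    _ = |(j:ℝ) - (j':ℝ)| := by push_cast; ring_nf
  have hc₁ne : c₁ ≠ 0 := by
    rw [hc₁]
    apply mul_ne_zero (by positivity)
    intro h; rw [h] at hjj'; simp at hjj'; linarith
  have hc₂ne : c₂ ≠ 0 := by
    have : (1:ℝ) ≤ (j:ℝ) + j' := by
      have : (1:ℝ) ≤ (j:ℝ) := by exact_mod_cast hj1
      have : (0:ℝ) ≤ (j':ℝ) := by positivity
      linarith
    rw [hc₂]; positivity
  have habs₁ : 2 * π ≤ |c₁| := by
    rw [hc₁, abs_mul, abs_of_pos (by positivity : (0:ℝ) < 2 * π)]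
    nlinarith [Real.pi_pos]
  have habs₂ : 2 * π ≤ |c₂| := by
    have h1 : (1:ℝ) ≤ (j:ℝ) + j' := by
      have : (1:ℝ) ≤ (j:ℝ) := by exact_mod_cast hj1
      have : (0:ℝ) ≤ (j':ℝ) := by positivity
      linarith
    rw [hc₂, abs_mul, abs_of_pos (by positivity : (0:ℝ) < 2 * π), abs_of_pos (by linarith)]
    nlinarith [Real.pi_pos]
  -- split integral
  have hcube : MeasurableSet (Set.univ.pi fun _ : Fin d => Set.Icc (-(R:ℝ)) (R:ℝ)) :=
    MeasurableSet.univ_pi fun _ => measurableSet_Icc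
  have hcompact : IsCompact (Set.univ.pi fun _ : Fin d => Set.Icc (-(R:ℝ)) (R:ℝ)) :=
    isCompact_univ_pi fun _ => isCompact_Icc
  have hScont : Continuous fun x : Fin d → ℝ => ∑ i, x i * wh i :=
    continuous_finset_sum _ fun i _ => (continuous_apply i).mul continuous_const
  have hint : ∀ c : ℝ, IntegrableOn (fun x : Fin d → ℝ => Real.cos (c * ∑ i, x i * wh i))
      (Set.univ.pi fun _ : Fin d => Set.Icc (-(R:ℝ)) (R:ℝ)) volume := fun c =>
    (Real.continuous_cos.comp (continuous_const.mul hScont)).continuousOn.integrableOn_compact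
      hcompact
  set I₁ : ℝ := ∫ x in Set.univ.pi fun _ : Fin d => Set.Icc (-(R:ℝ)) (R:ℝ),
      Real.cos (c₁ * ∑ i, x i * wh i) with hI₁
  set I₂ : ℝ := ∫ x in Set.univ.pi fun _ : Fin d => Set.Icc (-(R:ℝ)) (R:ℝ),
      Real.cos (c₂ * ∑ i, x i * wh i) with hI₂
  have hsplit : (∫ x in Set.univ.pi fun _ : Fin d => Set.Icc (-(R:ℝ)) (R:ℝ),
        Real.cos (2 * π * j * ∑ i, x i * wh i) * Real.cos (2 * π * j' * ∑ i, x i * wh i))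
      = (I₁ + I₂) / 2 := by
    rw [hI₁, hI₂, ← integral_add (hint c₁) (hint c₂), ← integral_div]
    refine setIntegral_congr_fun hcube fun x _ => ?_
    have e1 : c₁ * ∑ i, x i * wh i
        = 2 * π * j * ∑ i, x i * wh i - 2 * π * j' * ∑ i, x i * wh i := by
      rw [hc₁]; ring
    have e2 : c₂ * ∑ i, x i * wh i
        = 2 * π * j * ∑ i, x i * wh i + 2 * π * j' * ∑ i, x i * wh i := by
      rw [hc₂]; ring
    rw [e1, e2, Real.cos_sub, Real.cos_add]
    ring
  -- bounds on I₁ I₂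
  have hbound : ∀ c : ℝ, c ≠ 0 → 2 * π ≤ |c| →
      |∫ x in Set.univ.pi fun _ : Fin d => Set.Icc (-(R:ℝ)) (R:ℝ),
        Real.cos (c * ∑ i, x i * wh i)|
      ≤ (2 / (2 * π * M)) * (2*(R:ℝ))^(d-1) := by
    intro c hc hcabs
    refine (aux_cos_bound d (R:ℝ) hRpos wh c hc i₀ hw0).trans ?_
    rw [← hM]
    gcongr
  have hB₁ := hbound c₁ hc₁ne habs₁
  have hB₂ := hbound c₂ hc₂ne habs₂
  rw [hsplit, abs_mul]
  have hTd : (2*(R:ℝ))^d = (2*(R:ℝ))^(d-1) * (2*(R:ℝ)) := by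
    rw [← pow_succ, Nat.sub_add_cancel hd]
  have habs_div : |(I₁ + I₂)/2| ≤ (2 / (2 * π * M)) * (2*(R:ℝ))^(d-1) := by
    calc |(I₁ + I₂)/2| ≤ (|I₁| + |I₂|)/2 := by
          rw [abs_div]
          simp only [abs_two]
          gcongr
          exact abs_add_le _ _
    _ ≤ (2 / (2 * π * M)) * (2*(R:ℝ))^(d-1) := by
          rw [← hI₁, ← hI₂] at *
          linarith
  calc |1 / (2 * (R:ℝ)) ^ d| * |(I₁ + I₂)/2|
      ≤ |1 / (2 * (R:ℝ)) ^ d| * ((2 / (2 * π * M)) * (2*(R:ℝ))^(d-1)) := by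
        gcongr
  _ = 1 / (2 * π * (R:ℝ) * M) := by
        rw [abs_of_pos (by positivity), hTd]
        field_simp
  _ ≤ (1 / (2 * π * (R:ℝ))) * s / K := by
        rw [div_le_div_iff₀ (by positivity) hKpos]
        have hπ := Real.pi_pos
        calc (1:ℝ) * K = K := one_mul K
        _ ≤ s * M := hKsM
        _ = 1 / (2 * π * (R:ℝ)) * s * (2 * π * (R:ℝ) * M) := by
            field_simp
end

section
/- Let d, D ≥ 1 be integers, R_w > 0, R ≥ 1 an integer, and ε₁ > 0 with D·√d·ε₁ < R_w. Let w* ∈ ℝ^d with ‖w*‖₂ = R_w and let ŵ ∈ ℝ^d with ‖ŵ − w*‖_∞ ≤ ε₁. Let j, j' be integers with 1 ≤ j, j' ≤ D and j ≠ j'. Then | (2R)^{−d} ∫_{[−R,R]^d} cos(2πj⟨x, w*⟩) cos(2πj'⟨x, ŵ⟩) dx | ≤ (1/(2πR)) · √d / (R_w − D·√d·ε₁). -/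
open MeasureTheory Real
open scoped BigOperators

private lemma factor_eval16 (R : ℝ) (hR : 0 ≤ R) (a : ℝ) (ha : a ≠ 0) :
    ∫ t in Set.Icc (-R) R, Complex.exp (↑(t * a) * Complex.I)
      = ((2 * Real.sin (a * R) / a : ℝ) : ℂ) := by
  rw [MeasureTheory.integral_Icc_eq_integral_Ioc,
    ← intervalIntegral.integral_of_le (by linarith : -R ≤ R)]
  have hc : (↑a * Complex.I : ℂ) ≠ 0 := by
    simp [Complex.ext_iff, ha]
  have : ∀ t : ℝ, Complex.exp (↑(t * a) * Complex.I) = Complex.exp ((↑a * Complex.I) * ↑t) := by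
    intro t; push_cast; ring_nf
  rw [intervalIntegral.integral_congr (fun t _ => this t),
    integral_exp_mul_complex hc]
  have e1 : (↑a * Complex.I * ↑R : ℂ) = (↑(a*R) : ℂ) * Complex.I := by push_cast; ring
  have e2 : (↑a * Complex.I * ↑(-R) : ℂ) = (-(↑(a*R):ℂ)) * Complex.I := by push_cast; ring
  rw [e1, e2]
  have hsin : Complex.exp ((↑(a*R):ℂ) * Complex.I) - Complex.exp ((-(↑(a*R):ℂ)) * Complex.I)
      = 2 * Complex.sin (↑(a*R)) * Complex.I := by
    rw [Complex.sin]
    linear_combination (Complex.exp ((↑(a*R):ℂ) * Complex.I) - Complex.exp ((-(↑(a*R):ℂ)) * Complex.I)) * Complex.I_sq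
  rw [hsin]
  rw [← Complex.ofReal_sin]
  have haC : (a : ℂ) ≠ 0 := Complex.ofReal_ne_zero.2 ha
  field_simp [Complex.I_ne_zero]
  push_cast
  field_simp

private lemma factor_norm_le_R16 (R : ℝ) (hR : 0 ≤ R) (a : ℝ) :
    ‖∫ t in Set.Icc (-R) R, Complex.exp (↑(t * a) * Complex.I)‖ ≤ 2 * R := by
  by_cases ha : a = 0
  · subst ha
    simp only [mul_zero, Complex.ofReal_zero, zero_mul, Complex.exp_zero]
    rw [MeasureTheory.setIntegral_const]
    rw [Real.volume_real_Icc_of_le (by linarith), norm_smul]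
    simp only [Real.norm_eq_abs, norm_one, mul_one]
    rw [abs_of_nonneg (by linarith : (0:ℝ) ≤ R - -R)]
    linarith
  · rw [factor_eval16 R hR a ha, Complex.norm_real, Real.norm_eq_abs, abs_div, abs_mul]
    rw [div_le_iff₀ (abs_pos.2 ha)]
    calc |(2:ℝ)| * |Real.sin (a*R)| ≤ 2 * |a*R| := by
          rw [abs_two]
          exact mul_le_mul_of_nonneg_left (Real.abs_sin_le_abs) (by norm_num)
      _ = 2 * R * |a| := by rw [abs_mul, abs_of_nonneg hR]; ring

private lemma factor_norm_le_inv16 (R : ℝ) (hR : 0 ≤ R) (a : ℝ) (ha : a ≠ 0) :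
    ‖∫ t in Set.Icc (-R) R, Complex.exp (↑(t * a) * Complex.I)‖ ≤ 2 / |a| := by
  rw [factor_eval16 R hR a ha, Complex.norm_real, Real.norm_eq_abs, abs_div, abs_mul, abs_two]
  rw [div_le_div_iff₀ (abs_pos.2 ha) (abs_pos.2 ha)]
  have : |Real.sin (a*R)| ≤ 1 := Real.abs_sin_le_one _
  nlinarith [abs_nonneg a, abs_nonneg (Real.sin (a*R))]

private lemma cube_prod16 (d : ℕ) (R : ℝ) (g : Fin d → ℝ → ℂ) :
    ∫ x in Set.univ.pi fun _ : Fin d => Set.Icc (-R) R, ∏ i, g i (x i)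
      = ∏ i, ∫ t in Set.Icc (-R) R, g i t := by
  have hms : MeasurableSet (Set.univ.pi fun _ : Fin d => Set.Icc (-R) R) :=
    MeasurableSet.univ_pi fun _ => measurableSet_Icc
  rw [← MeasureTheory.integral_indicator hms]
  have key : ∀ x : Fin d → ℝ,
      (Set.univ.pi fun _ : Fin d => Set.Icc (-R) R).indicator (fun y => ∏ i, g i (y i)) x
        = ∏ i, (Set.Icc (-R) R).indicator (g i) (x i) := by
    intro x
    by_cases hx : x ∈ Set.univ.pi fun _ : Fin d => Set.Icc (-R) R
    · rw [Set.indicator_of_mem hx]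
      exact Finset.prod_congr rfl fun i _ =>
        (Set.indicator_of_mem (hx i (Set.mem_univ i)) _).symm
    · rw [Set.indicator_of_notMem hx]
      rw [Set.mem_univ_pi] at hx
      push_neg at hx
      obtain ⟨i, hi⟩ := hx
      exact (Finset.prod_eq_zero (Finset.mem_univ i)
        (Set.indicator_of_notMem hi _)).symm
  simp_rw [key]
  rw [MeasureTheory.integral_fintype_prod_volume_eq_prod (ι := Fin d)
    (f := fun i t => (Set.Icc (-R) R).indicator (g i) t)]
  exact Finset.prod_congr rfl fun i _ =>
    MeasureTheory.integral_indicator measurableSet_Icc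

private lemma core_bound16 (d : ℕ) (R : ℝ) (hR : 0 ≤ R) (c : Fin d → ℝ) (k : Fin d)
    (hck : c k ≠ 0) :
    |∫ x in Set.univ.pi fun _ : Fin d => Set.Icc (-R) R,
        Real.cos (∑ i, x i * c i)| ≤ (2 * R) ^ (d - 1) * (2 / |c k|) := by
  set S := Set.univ.pi fun _ : Fin d => Set.Icc (-R) R with hS
  have hms : MeasurableSet S := MeasurableSet.univ_pi fun _ => measurableSet_Icc
  have hcpt : IsCompact S := isCompact_univ_pi fun _ => isCompact_Icc
  have hre : ∀ x : Fin d → ℝ,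
      Real.cos (∑ i, x i * c i) = (∏ i, Complex.exp (↑(x i * c i) * Complex.I)).re := by
    intro x
    rw [← Complex.exp_sum]
    have : ∑ i, (↑(x i * c i) : ℂ) * Complex.I = ↑(∑ i, x i * c i) * Complex.I := by
      rw [← Finset.sum_mul]; push_cast; ring
    rw [this, Complex.exp_ofReal_mul_I_re]
  have hint : IntegrableOn (fun x : Fin d → ℝ =>
      ∏ i, Complex.exp (↑(x i * c i) * Complex.I)) S := by
    have hcont : Continuous (fun x : Fin d → ℝ =>
        ∏ i, Complex.exp (↑(x i * c i) * Complex.I)) :=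
      continuous_finset_prod _ fun i _ => Complex.continuous_exp.comp <|
        (Complex.continuous_ofReal.comp ((continuous_apply i).mul continuous_const)).mul
          continuous_const
    exact hcont.continuousOn.integrableOn_compact hcpt
  calc |∫ x in S, Real.cos (∑ i, x i * c i)|
      = |(∫ x in S, ∏ i, Complex.exp (↑(x i * c i) * Complex.I)).re| := by
        have hcc := Complex.reCLM.integral_comp_comm hint
        simp only [Complex.reCLM_apply] at hcc
        rw [← hcc]
        simp_rw [hre]
    _ ≤ ‖∫ x in S, ∏ i, Complex.exp (↑(x i * c i) * Complex.I)‖ :=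
        Complex.abs_re_le_norm _
    _ = ‖∏ i, ∫ t in Set.Icc (-R) R, Complex.exp (↑(t * c i) * Complex.I)‖ := by
        rw [hS, cube_prod16 d R (fun i t => Complex.exp (↑(t * c i) * Complex.I))]
    _ ≤ (2 * R) ^ (d - 1) * (2 / |c k|) := by
        rw [norm_prod, ← Finset.mul_prod_erase Finset.univ _ (Finset.mem_univ k)]
        have h2 : ∏ i ∈ Finset.univ.erase k,
            ‖∫ t in Set.Icc (-R) R, Complex.exp (↑(t * c i) * Complex.I)‖ ≤ (2*R)^(d-1) := by
          calc ∏ i ∈ Finset.univ.erase k, ‖∫ t in Set.Icc (-R) R,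
                Complex.exp (↑(t * c i) * Complex.I)‖
              ≤ ∏ _i ∈ Finset.univ.erase k, (2*R) :=
                Finset.prod_le_prod (fun i _ => norm_nonneg _)
                  (fun i _ => factor_norm_le_R16 R hR (c i))
            _ = (2*R)^(d-1) := by
                rw [Finset.prod_const, Finset.card_erase_of_mem (Finset.mem_univ k),
                  Finset.card_univ, Fintype.card_fin]
        rw [mul_comm]
        exact mul_le_mul h2 (factor_norm_le_inv16 R hR (c k) hck) (norm_nonneg _)
          (pow_nonneg (by linarith) _)

private lemma exists_coord16 (d : ℕ) (hd : 1 ≤ d) (u : Fin d → ℝ) :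
    ∃ k : Fin d, Real.sqrt (∑ i, u i ^ 2) ≤ Real.sqrt d * |u k| := by
  have : Nonempty (Fin d) := ⟨⟨0, hd⟩⟩
  obtain ⟨k, -, hk⟩ := Finset.exists_max_image Finset.univ (fun i => |u i|)
    ⟨Classical.arbitrary (Fin d), Finset.mem_univ _⟩
  refine ⟨k, ?_⟩
  have h1 : ∑ i, u i ^ 2 ≤ (d : ℝ) * (u k)^2 := by
    calc ∑ i, u i ^ 2 ≤ ∑ _i : Fin d, (u k)^2 := by
          apply Finset.sum_le_sum
          intro i _
          rw [← sq_abs (u i), ← sq_abs (u k)]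
          exact pow_le_pow_left₀ (abs_nonneg _) (hk i (Finset.mem_univ i)) 2
      _ = (d : ℝ) * (u k)^2 := by rw [Finset.sum_const, Finset.card_univ,
          Fintype.card_fin, nsmul_eq_mul]
  calc Real.sqrt (∑ i, u i ^ 2) ≤ Real.sqrt ((d:ℝ) * (u k)^2) := Real.sqrt_le_sqrt h1
    _ = Real.sqrt d * |u k| := by
        rw [Real.sqrt_mul (Nat.cast_nonneg d), Real.sqrt_sq_eq_abs]

private lemma norm_lower16 (d D : ℕ) (R_w ε₁ : ℝ) (hε₁ : 0 < ε₁)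
    (wst wh : Fin d → ℝ)
    (hw : Real.sqrt (∑ i, wst i ^ 2) = R_w)
    (hclose : ∀ i, |wh i - wst i| ≤ ε₁)
    (s t : ℝ) (hs : 1 ≤ |s|) (ht : |t| ≤ D) :
    R_w - (D : ℝ) * Real.sqrt d * ε₁
      ≤ Real.sqrt (∑ i, (s * wst i + t * (wh i - wst i)) ^ 2) := by
  classical
  set v : EuclideanSpace ℝ (Fin d) := (WithLp.equiv 2 _).symm wst with hv
  set e : EuclideanSpace ℝ (Fin d) := (WithLp.equiv 2 _).symm (fun i => wh i - wst i) with he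
  have hnv : ‖v‖ = R_w := by
    rw [EuclideanSpace.norm_eq]
    simp only [hv, WithLp.equiv_symm_apply, PiLp.toLp_apply]
    rw [← hw]
    congr 1
    exact Finset.sum_congr rfl fun i _ => by rw [Real.norm_eq_abs, sq_abs]
  have hne : ‖e‖ ≤ Real.sqrt d * ε₁ := by
    rw [EuclideanSpace.norm_eq]
    calc Real.sqrt (∑ i, ‖e i‖^2) ≤ Real.sqrt (∑ _i : Fin d, ε₁^2) := by
          apply Real.sqrt_le_sqrt
          apply Finset.sum_le_sum
          intro i _
          simp only [he, WithLp.equiv_symm_apply, PiLp.toLp_apply, Real.norm_eq_abs]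
          exact pow_le_pow_left₀ (abs_nonneg _) (hclose i) 2
      _ = Real.sqrt d * ε₁ := by
          rw [Finset.sum_const, Finset.card_univ, Fintype.card_fin, nsmul_eq_mul,
            Real.sqrt_mul (Nat.cast_nonneg d), Real.sqrt_sq hε₁.le]
  have key : Real.sqrt (∑ i, (s * wst i + t * (wh i - wst i)) ^ 2) = ‖s • v + t • e‖ := by
    rw [EuclideanSpace.norm_eq]
    congr 1
    refine Finset.sum_congr rfl fun i _ => ?_
    have : (s • v + t • e) i = s * wst i + t * (wh i - wst i) := by
      simp [hv, he, WithLp.equiv_symm_apply, PiLp.toLp_apply]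
    rw [this, Real.norm_eq_abs, sq_abs]
  rw [key]
  have h1 : ‖s • v‖ ≤ ‖s • v + t • e‖ + ‖t • e‖ := by
    simpa using norm_sub_le (s • v + t • e) (t • e)
  have h2 : R_w ≤ ‖s • v‖ := by
    rw [norm_smul, Real.norm_eq_abs, hnv]
    nlinarith [Real.sqrt_nonneg (∑ i, wst i ^ 2), hw, Real.sqrt_nonneg d]
  have h3 : ‖t • e‖ ≤ (D : ℝ) * Real.sqrt d * ε₁ := by
    rw [norm_smul, Real.norm_eq_abs]
    calc |t| * ‖e‖ ≤ (D : ℝ) * (Real.sqrt d * ε₁) :=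
          mul_le_mul ht hne (norm_nonneg _) (Nat.cast_nonneg D)
      _ = (D : ℝ) * Real.sqrt d * ε₁ := by ring
  linarith

/-- Mixed cross-term bound: for `j ≠ j'`, the cube-average of
`cos(2πj⟨x,w*⟩) cos(2πj'⟨x,ŵ⟩)` has absolute value at most
`(1/(2πR)) √d / (R_w − D √d ε₁)`. -/
theorem stmt16 (d D : ℕ) (hd : 1 ≤ d) (hD : 1 ≤ D) (R_w : ℝ) (hRw : 0 < R_w)
    (R : ℕ) (hR : 1 ≤ R) (ε₁ : ℝ) (hε₁ : 0 < ε₁)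
    (hεR : (D : ℝ) * Real.sqrt d * ε₁ < R_w)
    (wst wh : Fin d → ℝ)
    (hw : Real.sqrt (∑ i, wst i ^ 2) = R_w)
    (hclose : ∀ i, |wh i - wst i| ≤ ε₁)
    (j j' : ℕ) (hj1 : 1 ≤ j) (hjD : j ≤ D) (hj'1 : 1 ≤ j') (hj'D : j' ≤ D)
    (hne : j ≠ j') :
    |(1 / (2 * (R : ℝ)) ^ d) *
        ∫ x in Set.univ.pi fun _ : Fin d => Set.Icc (-(R : ℝ)) (R : ℝ),
          Real.cos (2 * π * j * ∑ i, x i * wst i) *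
            Real.cos (2 * π * j' * ∑ i, x i * wh i)|
      ≤ (1 / (2 * π * R)) * Real.sqrt d / (R_w - (D : ℝ) * Real.sqrt d * ε₁) := by
  classical
  set Rr : ℝ := (R : ℝ) with hRr
  have hRr1 : (1 : ℝ) ≤ Rr := by rw [hRr]; exact_mod_cast hR
  have hRr0 : (0 : ℝ) < Rr := by linarith
  set β : ℝ := R_w - (D : ℝ) * Real.sqrt d * ε₁ with hβ
  have hβ0 : 0 < β := by simp only [hβ]; linarith
  have hsd : (0:ℝ) < Real.sqrt d := Real.sqrt_pos.2 (by exact_mod_cast hd)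
  set S := Set.univ.pi fun _ : Fin d => Set.Icc (-Rr) Rr with hS
  have hcpt : IsCompact S := isCompact_univ_pi fun _ => isCompact_Icc
  -- the two frequency vectors
  set u : Fin d → ℝ := fun i => (j : ℝ) * wst i - (j' : ℝ) * wh i with hu
  set ub : Fin d → ℝ := fun i => (j : ℝ) * wst i + (j' : ℝ) * wh i with hub
  set a : Fin d → ℝ := fun i => 2 * π * u i with ha
  set b : Fin d → ℝ := fun i => 2 * π * ub i with hb
  -- lower bounds on their norms
  have hj'D' : |(-(j' : ℝ))| ≤ (D : ℝ) := by
    rw [abs_neg, abs_of_nonneg (Nat.cast_nonneg j')]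
    exact_mod_cast hj'D
  have hj'D'' : |((j' : ℝ))| ≤ (D : ℝ) := by
    rw [abs_of_nonneg (Nat.cast_nonneg j')]
    exact_mod_cast hj'D
  have hu_norm : β ≤ Real.sqrt (∑ i, u i ^ 2) := by
    have hs : (1:ℝ) ≤ |(j:ℝ) - (j':ℝ)| := by
      have hz : ((j:ℤ) - j') ≠ 0 := sub_ne_zero.2 (by exact_mod_cast hne)
      have h1 := Int.one_le_abs hz
      have h2 : (1:ℝ) ≤ ((|(j:ℤ) - j'| : ℤ) : ℝ) := by exact_mod_cast h1
      rwa [Int.cast_abs, Int.cast_sub, Int.cast_natCast, Int.cast_natCast] at h2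
    have := norm_lower16 d D R_w ε₁ hε₁ wst wh hw hclose ((j:ℝ) - j') (-(j':ℝ)) hs hj'D'
    have heq : ∀ i, ((j:ℝ) - j') * wst i + (-(j':ℝ)) * (wh i - wst i) = u i := by
      intro i; simp only [hu]; ring
    simp_rw [heq] at this
    exact this
  have hub_norm : β ≤ Real.sqrt (∑ i, ub i ^ 2) := by
    have hs : (1:ℝ) ≤ |(j:ℝ) + j'| := by
      rw [abs_of_nonneg (by positivity)]
      have : (1:ℝ) ≤ (j:ℝ) := by exact_mod_cast hj1
      have : (0:ℝ) ≤ (j':ℝ) := Nat.cast_nonneg j'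
      linarith
    have := norm_lower16 d D R_w ε₁ hε₁ wst wh hw hclose ((j:ℝ) + j') ((j':ℝ)) hs hj'D''
    have heq : ∀ i, ((j:ℝ) + j') * wst i + ((j':ℝ)) * (wh i - wst i) = ub i := by
      intro i; simp only [hub]; ring
    simp_rw [heq] at this
    exact this
  -- per-term bound
  have hterm : ∀ c : Fin d → ℝ, β ≤ Real.sqrt (∑ i, c i ^ 2) →
      (1 / (2 * Rr) ^ d) *
        |∫ x in S, Real.cos (∑ i, x i * (fun i => 2 * π * c i) i)|
        ≤ (1 / (2 * π * Rr)) * Real.sqrt d / β := by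
    intro c hc
    obtain ⟨k, hk⟩ := exists_coord16 d hd c
    have hck : β ≤ Real.sqrt d * |c k| := le_trans hc hk
    have hck0 : (0:ℝ) < |c k| := by
      by_contra h
      push_neg at h
      have : |c k| = 0 := le_antisymm h (abs_nonneg _)
      rw [this, mul_zero] at hck
      linarith
    have hckne : c k ≠ 0 := abs_pos.1 hck0
    have hakne : (fun i => 2 * π * c i) k ≠ 0 := by
      simp only
      exact mul_ne_zero (by positivity) hckne
    have hcore := core_bound16 d Rr hRr0.le (fun i => 2 * π * c i) k hakne
    rw [← hS] at hcore
    have habs : |(fun i => 2 * π * c i) k| = 2 * π * |c k| := by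
      simp only
      rw [abs_mul, abs_of_nonneg (by positivity : (0:ℝ) ≤ 2 * π)]
    rw [habs] at hcore
    have hpow : (2 * Rr) ^ d = (2 * Rr) ^ (d - 1) * (2 * Rr) := by
      rw [← pow_succ]
      congr 1
      omega
    have hp0 : (0:ℝ) < (2 * Rr) ^ (d - 1) := by positivity
    calc (1 / (2 * Rr) ^ d) * |∫ x in S, Real.cos (∑ i, x i * (fun i => 2 * π * c i) i)|
        ≤ (1 / (2 * Rr) ^ d) * ((2 * Rr) ^ (d - 1) * (2 / (2 * π * |c k|))) := by
          apply mul_le_mul_of_nonneg_left hcore (by positivity)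
      _ = 1 / (2 * π * Rr * |c k|) := by
          rw [hpow]
          field_simp
      _ ≤ (1 / (2 * π * Rr)) * Real.sqrt d / β := by
          rw [div_le_div_iff₀ (by positivity) hβ0, one_mul]
          calc β ≤ Real.sqrt d * |c k| := hck
            _ ≤ 1 / (2 * π * Rr) * Real.sqrt d * (2 * π * Rr * |c k|) := by
                have h2πR : (0:ℝ) < 2 * π * Rr := by positivity
                rw [div_mul_eq_mul_div, one_mul, div_mul_eq_mul_div]
                rw [le_div_iff₀ h2πR]
                ring_nf
                exact le_of_eq (by ring)
  -- split the integrand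
  have hpt : ∀ x : Fin d → ℝ,
      Real.cos (2*π*j*∑ i, x i * wst i) * Real.cos (2*π*j'*∑ i, x i * wh i)
        = (Real.cos (∑ i, x i * a i) + Real.cos (∑ i, x i * b i)) / 2 := by
    intro x
    have h1 : ∑ i, x i * a i
        = 2*π*j*(∑ i, x i * wst i) - 2*π*j'*(∑ i, x i * wh i) := by
      rw [Finset.mul_sum, Finset.mul_sum, ← Finset.sum_sub_distrib]
      exact Finset.sum_congr rfl fun i _ => by simp only [ha, hu]; ring
    have h2 : ∑ i, x i * b i
        = 2*π*j*(∑ i, x i * wst i) + 2*π*j'*(∑ i, x i * wh i) := by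
      rw [Finset.mul_sum, Finset.mul_sum, ← Finset.sum_add_distrib]
      exact Finset.sum_congr rfl fun i _ => by simp only [hb, hub]; ring
    rw [h1, h2, Real.cos_sub, Real.cos_add]
    ring
  have hintc : ∀ c : Fin d → ℝ,
      IntegrableOn (fun x : Fin d → ℝ => Real.cos (∑ i, x i * c i)) S := by
    intro c
    have : Continuous (fun x : Fin d → ℝ => Real.cos (∑ i, x i * c i)) :=
      Real.continuous_cos.comp (continuous_finset_sum _ fun i _ =>
        (continuous_apply i).mul continuous_const)
    exact this.continuousOn.integrableOn_compact hcpt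
  have hsplit : ∫ x in S, Real.cos (2*π*j*∑ i, x i * wst i) *
      Real.cos (2*π*j'*∑ i, x i * wh i)
      = ((∫ x in S, Real.cos (∑ i, x i * a i)) + ∫ x in S, Real.cos (∑ i, x i * b i)) / 2 := by
    rw [show (fun x : Fin d → ℝ => Real.cos (2*π*j*∑ i, x i * wst i) *
        Real.cos (2*π*j'*∑ i, x i * wh i))
        = fun x => (Real.cos (∑ i, x i * a i) + Real.cos (∑ i, x i * b i)) / 2
      from funext hpt]
    rw [integral_div, integral_add (hintc a) (hintc b)]
  rw [hsplit]
  have hta := hterm u hu_norm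
  have htb := hterm ub hub_norm
  simp only at hta htb
  have haa : ∀ i, 2 * π * u i = a i := fun i => rfl
  have hbb : ∀ i, 2 * π * ub i = b i := fun i => rfl
  simp_rw [haa] at hta
  simp_rw [hbb] at htb
  set Ia := ∫ x in S, Real.cos (∑ i, x i * a i) with hIa
  set Ib := ∫ x in S, Real.cos (∑ i, x i * b i) with hIb
  have hp : (0:ℝ) < 1 / (2 * Rr) ^ d := by positivity
  have habs2 : |(1 / (2 * Rr) ^ d) * ((Ia + Ib) / 2)|
      ≤ ((1 / (2 * Rr) ^ d) * |Ia| + (1 / (2 * Rr) ^ d) * |Ib|) / 2 := by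
    rw [abs_mul, abs_of_pos hp, abs_div, abs_two]
    have := abs_add_le Ia Ib
    have h2 : |Ia + Ib| / 2 ≤ (|Ia| + |Ib|) / 2 := by linarith
    calc (1 / (2 * Rr) ^ d) * (|Ia + Ib| / 2)
        ≤ (1 / (2 * Rr) ^ d) * ((|Ia| + |Ib|) / 2) :=
          mul_le_mul_of_nonneg_left h2 hp.le
      _ = ((1 / (2 * Rr) ^ d) * |Ia| + (1 / (2 * Rr) ^ d) * |Ib|) / 2 := by ring
  calc |(1 / (2 * Rr) ^ d) * ((Ia + Ib) / 2)|
      ≤ ((1 / (2 * Rr) ^ d) * |Ia| + (1 / (2 * Rr) ^ d) * |Ib|) / 2 := habs2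
    _ ≤ ((1 / (2 * π * Rr)) * Real.sqrt d / β + (1 / (2 * π * Rr)) * Real.sqrt d / β) / 2 := by
        linarith
    _ = (1 / (2 * π * Rr)) * Real.sqrt d / β := by ring
end
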